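/- arXiv:1604.00051 — 5 statements merged into one kernel-verified Lean document; each statement's English description precedes it below -/
import Mathlib

section
/- In the cyclic bee colony model with period D, if τ_1 ≡ 1, E[ζ_i] < ∞ for all 1 ≤ i ≤ D, and P(η_{ij} ≤ K) = 1 for all i, j, then the process reaches stationarity for times lD + n > K: the distribution of M_{n+lD} is the same for all l with n + lD > K, i.e., M_{n+lD} and M_{n+(l+1)D} have the same distribution whenever n + lD > K. -/
open MeasureTheory ProbabilityTheory Finset

noncomputable section

variable {Ω : Type*}

/-- `ξ i = Σ_{j=1}^{ζ i} I i j`, the number of eggs of batch `i` that hatch. -/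
def batchXi (ζ : ℕ → Ω → ℕ) (I : ℕ → ℕ → Ω → ℕ) (i : ℕ) (ω : Ω) : ℕ :=
  ∑ j ∈ Finset.Icc 1 (ζ i ω), I i j ω

/-- The colony size in the cyclic model where batch `i` is laid at time `i`:
`M t = Σ_{i=1}^{t} Σ_{j=1}^{ξ_i} 1{i + η i j ≥ t}`. -/
def cyclicM (ζ : ℕ → Ω → ℕ) (I η : ℕ → ℕ → Ω → ℕ) (t : ℕ) (ω : Ω) : ℕ :=
  ∑ i ∈ Finset.Icc 1 t, ∑ j ∈ Finset.Icc 1 (batchXi ζ I i ω),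
    if t ≤ i + η i j ω then 1 else 0

/-- `F_{η,i} x = P(η i 1 ≤ x)`, the lifetime distribution function for batch `i`
(as a function on `ℤ`). -/
def lifeCDF [MeasurableSpace Ω] (μ : Measure Ω) (η : ℕ → ℕ → Ω → ℕ) (i : ℕ) (x : ℤ) : ℝ :=
  (μ {ω | (η i 1 ω : ℤ) ≤ x}).toReal

/-- The three sources of randomness (`ζ i`, `I i j`, `η i j`) packaged as one family,
used to state that they are mutually independent. -/
def eggVars (ζ : ℕ → Ω → ℕ) (I η : ℕ → ℕ → Ω → ℕ) :
    (ℕ ⊕ (ℕ × ℕ) ⊕ (ℕ × ℕ)) → Ω → ℕ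
  | Sum.inl i => ζ i
  | Sum.inr (Sum.inl p) => I p.1 p.2
  | Sum.inr (Sum.inr p) => η p.1 p.2

/-!  ### Auxiliary lemmas -/

section Aux

variable [MeasurableSpace Ω] {μ : Measure Ω}

/-- A function defined by case analysis on a measurable `ℕ`-valued function is measurable. -/
lemma measurable_nat_elim' {α : Type*} [MeasurableSpace α] {c : α → ℕ} {F : ℕ → α → ℕ}
    (hc : Measurable c) (hF : ∀ n, Measurable (F n)) :
    Measurable fun a => F (c a) a := by
  have h : Measurable fun p : α × ℕ => F p.2 p.1 :=
    measurable_from_prod_countable_left fun n => hF n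
  exact h.comp (measurable_id.prodMk hc)

/-- Precomposing an independent family with an injective map preserves independence. -/
lemma iIndepFun_precomp' {A B : Type*} {f : B → Ω → ℕ} {g : A → B} (hg : Function.Injective g)
    (h : iIndepFun f μ) :
    iIndepFun (fun a => f (g a)) μ := by
  classical
  rw [iIndepFun_iff_measure_inter_preimage_eq_mul] at h ⊢
  intro S sets _
  have key := h (S.image g) (sets := Function.extend g sets fun _ => Set.univ)
    (fun b _ => MeasurableSet.of_discrete)
  rw [set_biInter_finset_image, Finset.prod_image (fun a _ b _ hab => hg hab)] at key
  simpa only [hg.extend_apply] using key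

/-- Two `{0,1}`-valued random variables with the same probability of being `1` are
identically distributed. -/
lemma identDistrib_of_bernoulli' [IsProbabilityMeasure μ] {X Y : Ω → ℕ}
    (hX : Measurable X) (hY : Measurable Y) (hX1 : ∀ ω, X ω ≤ 1) (hY1 : ∀ ω, Y ω ≤ 1)
    (h : μ {ω | X ω = 1} = μ {ω | Y ω = 1}) : IdentDistrib X Y μ μ := by
  classical
  refine ⟨hX.aemeasurable, hY.aemeasurable, ?_⟩
  ext1 s hs
  rw [Measure.map_apply hX hs, Measure.map_apply hY hs]
  have key : ∀ (Z : Ω → ℕ), Measurable Z → (∀ ω, Z ω ≤ 1) →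
      μ (Z ⁻¹' s) = if (1 : ℕ) ∈ s then (if (0:ℕ) ∈ s then 1 else μ {ω | Z ω = 1})
        else (if (0:ℕ) ∈ s then 1 - μ {ω | Z ω = 1} else 0) := by
    intro Z hZ hZ1
    have h01 : ∀ ω, Z ω = 0 ∨ Z ω = 1 := fun ω => by have := hZ1 ω; omega
    by_cases h1 : (1 : ℕ) ∈ s <;> by_cases h0 : (0 : ℕ) ∈ s <;> simp only [h1, h0, if_true, if_false]
    · have : Z ⁻¹' s = Set.univ := by
        ext ω; simp only [Set.mem_preimage, Set.mem_univ, iff_true]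
        rcases h01 ω with h | h <;> rw [h] <;> assumption
      rw [this, measure_univ]
    · have : Z ⁻¹' s = {ω | Z ω = 1} := by
        ext ω; simp only [Set.mem_preimage, Set.mem_setOf_eq]
        constructor
        · intro hmem; rcases h01 ω with h | h
          · rw [h] at hmem; exact absurd hmem h0
          · exact h
        · intro h; rw [h]; exact h1
      rw [this]
    · have : Z ⁻¹' s = {ω | Z ω = 1}ᶜ := by
        ext ω; simp only [Set.mem_preimage, Set.mem_compl_iff, Set.mem_setOf_eq]
        constructor
        · intro hmem h; rw [h] at hmem; exact h1 hmem
        · intro hne; rcases h01 ω with h | h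
          · rw [h]; exact h0
          · exact absurd h hne
      rw [this, measure_compl ?_ (measure_ne_top _ _), measure_univ]
      exact hZ (MeasurableSet.of_discrete : MeasurableSet {1})
    · have : Z ⁻¹' s = ∅ := by
        ext ω; simp only [Set.mem_preimage, Set.mem_empty_iff_false, iff_false]
        intro hmem; rcases h01 ω with h | h
        · rw [h] at hmem; exact h0 hmem
        · rw [h] at hmem; exact h1 hmem
      rw [this, measure_empty]
  rw [key X hX hX1, key Y hY hY1, h]

/-- For an independent family of `ℕ`-valued random variables, the measure of a preimage of a
set under the finite tuple map factorizes into a sum over points of products of marginals. -/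
lemma measure_tuple_preimage {A : Type*} {X : A → Ω → ℕ}
    (hXm : ∀ a, Measurable (X a))
    (hX : iIndepFun X μ)
    (s : Finset A) (S : Set ((a : s) → ℕ)) :
    μ ((fun ω (a : s) => X a ω) ⁻¹' S)
      = ∑' f : S, ∏ a : s, μ (X a ⁻¹' {(f : (a : s) → ℕ) a}) := by
  classical
  have hT : Measurable fun ω (a : s) => X a ω := measurable_pi_lambda _ fun a => hXm a
  have hsingle : ∀ f0 : (a : s) → ℕ,
      μ ((fun ω (a : s) => X a ω) ⁻¹' {f0}) = ∏ a : s, μ (X a ⁻¹' {f0 a}) := by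
    intro f0
    set sets : A → Set ℕ := fun a => if h : a ∈ s then {f0 ⟨a, h⟩} else Set.univ with hsets
    have h1 : ((fun ω (a : s) => X a ω) ⁻¹' {f0}) = ⋂ a ∈ s, X a ⁻¹' sets a := by
      ext ω
      simp only [Set.mem_preimage, Set.mem_singleton_iff, Set.mem_iInter, funext_iff]
      constructor
      · intro hf a ha
        simp only [hsets, dif_pos ha, Set.mem_preimage, Set.mem_singleton_iff]
        exact hf ⟨a, ha⟩
      · intro hf a
        have := hf a a.2
        simpa only [hsets, dif_pos a.2, Set.mem_preimage, Set.mem_singleton_iff] using this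
    rw [h1, hX.measure_inter_preimage_eq_mul s (fun a _ => MeasurableSet.of_discrete),
      ← Finset.prod_coe_sort]
    refine Finset.prod_congr rfl fun a _ => ?_
    congr 1
    simp [hsets, a.2]
  have hdecomp : (fun ω (a : s) => X a ω) ⁻¹' S
      = ⋃ f0 ∈ S, (fun ω (a : s) => X a ω) ⁻¹' {f0} := by
    conv_lhs => rw [← Set.biUnion_of_singleton S]
    rw [Set.preimage_iUnion₂]
  have hdisj : S.PairwiseDisjoint fun f0 => (fun ω (a : s) => X a ω) ⁻¹' {f0} := by
    intro f0 _ g0 _ hne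
    refine Set.disjoint_iff_inter_eq_empty.mpr ?_
    ext ω
    simp only [Set.mem_inter_iff, Set.mem_preimage, Set.mem_singleton_iff,
      Set.mem_empty_iff_false, iff_false, not_and]
    intro h1 h2
    exact hne (h1 ▸ h2 ▸ rfl)
  have hmeas : ∀ f0 ∈ S, MeasurableSet ((fun ω (a : s) => X a ω) ⁻¹' {f0}) :=
    fun f0 _ => hT (measurableSet_singleton f0)
  rw [hdecomp, measure_biUnion S.to_countable hdisj hmeas]
  exact tsum_congr fun f0 => hsingle f0

/-- Two independent families of `ℕ`-valued random variables with identically distributed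
marginals have identically distributed joint laws. -/
lemma identDistrib_pi_of_iIndep {A : Type*} [Countable A] [IsProbabilityMeasure μ]
    {X Y : A → Ω → ℕ}
    (hXm : ∀ a, Measurable (X a)) (hYm : ∀ a, Measurable (Y a))
    (hX : iIndepFun X μ)
    (hY : iIndepFun Y μ)
    (hXY : ∀ a, IdentDistrib (X a) (Y a) μ μ) :
    IdentDistrib (fun ω (a : A) => X a ω) (fun ω (a : A) => Y a ω) μ μ := by
  have hJX : Measurable fun ω (a : A) => X a ω := measurable_pi_lambda _ fun a => hXm a
  have hJY : Measurable fun ω (a : A) => Y a ω := measurable_pi_lambda _ fun a => hYm a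
  refine ⟨hJX.aemeasurable, hJY.aemeasurable, ?_⟩
  haveI : IsProbabilityMeasure (μ.map fun ω (a : A) => X a ω) :=
    Measure.isProbabilityMeasure_map hJX.aemeasurable
  haveI : IsProbabilityMeasure (μ.map fun ω (a : A) => Y a ω) :=
    Measure.isProbabilityMeasure_map hJY.aemeasurable
  refine ext_of_generate_finite _ generateFrom_measurableCylinders.symm
    isPiSystem_measurableCylinders ?_ (by simp)
  intro t ht
  obtain ⟨s, S, hSm, rfl⟩ := (mem_measurableCylinders _).mp ht
  rw [Measure.map_apply hJX hSm.cylinder, Measure.map_apply hJY hSm.cylinder]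
  have hcylX : (fun ω (a : A) => X a ω) ⁻¹' cylinder s S = (fun ω (a : s) => X a ω) ⁻¹' S := rfl
  have hcylY : (fun ω (a : A) => Y a ω) ⁻¹' cylinder s S = (fun ω (a : s) => Y a ω) ⁻¹' S := rfl
  rw [hcylX, hcylY, measure_tuple_preimage hXm hX s S, measure_tuple_preimage hYm hY s S]
  refine tsum_congr fun f0 => Finset.prod_congr rfl fun a _ => ?_
  rw [← Measure.map_apply (hXm a) (measurableSet_singleton _),
    ← Measure.map_apply (hYm a) (measurableSet_singleton _), (hXY a).map_eq]

end Aux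

/-! ### The window reindexing -/

/-- Index type for the variables relevant to the colony size at time `c + K`. -/
abbrev WIdx (K : ℕ) := Fin (K + 1) ⊕ ((Fin (K + 1)) × ℕ) ⊕ ((Fin (K + 1)) × ℕ)

/-- Embedding of the window indices into the index set of all the egg variables,
with batches offset by `c`. -/
def windowIdx (K c : ℕ) : WIdx K → (ℕ ⊕ (ℕ × ℕ) ⊕ (ℕ × ℕ))
  | Sum.inl k => Sum.inl (c + k)
  | Sum.inr (Sum.inl p) => Sum.inr (Sum.inl (c + p.1, p.2))
  | Sum.inr (Sum.inr p) => Sum.inr (Sum.inr (c + p.1, p.2))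

lemma windowIdx_injective (K c : ℕ) : Function.Injective (windowIdx K c) := by
  rintro (k | ⟨k, j⟩ | ⟨k, j⟩) (k' | ⟨k', j'⟩ | ⟨k', j'⟩) h <;>
    simp only [windowIdx] at h <;> simp_all [Fin.ext_iff]

/-- The deterministic function computing the colony size at time `c + K` from the window
variables. -/
def windowG (K : ℕ) (f : WIdx K → ℕ) : ℕ :=
  ∑ k : Fin (K + 1),
    ∑ j ∈ Finset.Icc 1 (∑ j' ∈ Finset.Icc 1 (f (Sum.inl k)), f (Sum.inr (Sum.inl (k, j')))),
      if K ≤ (k : ℕ) + f (Sum.inr (Sum.inr (k, j))) then 1 else 0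

lemma windowG_measurable (K : ℕ) : Measurable (windowG K) := by
  unfold windowG
  refine Finset.measurable_sum _ fun k _ => ?_
  have hc : Measurable fun f : WIdx K → ℕ =>
      ∑ j' ∈ Finset.Icc 1 (f (Sum.inl k)), f (Sum.inr (Sum.inl (k, j'))) :=
    measurable_nat_elim' (c := fun (f : WIdx K → ℕ) => f (Sum.inl k))
      (F := fun n (f : WIdx K → ℕ) => ∑ j' ∈ Finset.Icc 1 n, f (Sum.inr (Sum.inl (k, j'))))
      (measurable_pi_apply _)
      (fun n => Finset.measurable_sum _ fun j' _ => measurable_pi_apply _)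
  have h2 : ∀ m, Measurable (fun f : WIdx K → ℕ => ∑ j ∈ Finset.Icc 1 m,
      if K ≤ (k : ℕ) + f (Sum.inr (Sum.inr (k, j))) then 1 else 0) := by
    intro m
    refine Finset.measurable_sum _ fun j _ => ?_
    have hset : MeasurableSet
        ((fun f : WIdx K → ℕ => f (Sum.inr (Sum.inr (k, j)))) ⁻¹' {x | K ≤ (k : ℕ) + x}) :=
      measurable_pi_apply _ MeasurableSet.of_discrete
    exact Measurable.ite hset measurable_const measurable_const
  have hfin := measurable_nat_elim' (c := fun (f : WIdx K → ℕ) =>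
      ∑ j' ∈ Finset.Icc 1 (f (Sum.inl k)), f (Sum.inr (Sum.inl (k, j'))))
    (F := fun m (f : WIdx K → ℕ) => ∑ j ∈ Finset.Icc 1 m,
      if K ≤ (k : ℕ) + f (Sum.inr (Sum.inr (k, j))) then 1 else 0) hc h2
  exact hfin

/-- On the event where all lifetimes are at most `K`, the colony size at time `c + K` is
computed by `windowG` from the window variables. -/
lemma cyclicM_eq_windowG (ζ : ℕ → Ω → ℕ) (I η : ℕ → ℕ → Ω → ℕ) (K c : ℕ) (hc : 1 ≤ c)
    (ω : Ω) (hω : ∀ i j, η i j ω ≤ K) :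
    cyclicM ζ I η (c + K) ω = windowG K (fun a => eggVars ζ I η (windowIdx K c a) ω) := by
  have hsub : Finset.Icc c (c + K) ⊆ Finset.Icc 1 (c + K) := by
    intro i hi
    simp only [Finset.mem_Icc] at hi ⊢
    omega
  have hzero : ∀ i ∈ Finset.Icc 1 (c + K), i ∉ Finset.Icc c (c + K) →
      (∑ j ∈ Finset.Icc 1 (batchXi ζ I i ω), if c + K ≤ i + η i j ω then 1 else 0) = 0 := by
    intro i hi hni
    refine Finset.sum_eq_zero fun j _ => ?_
    have h1 := hω i j
    simp only [Finset.mem_Icc] at hi hni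
    exact if_neg (by omega)
  rw [cyclicM, ← Finset.sum_subset hsub hzero]
  have hIcc : Finset.Icc c (c + K) = Finset.Ico c (c + K + 1) := by
    rw [Finset.Ico_add_one_right_eq_Icc]
  rw [hIcc, Finset.sum_Ico_eq_sum_range]
  simp only [show c + K + 1 - c = K + 1 from by omega]
  rw [← Fin.sum_univ_eq_sum_range
    (fun i => ∑ j ∈ Finset.Icc 1 (batchXi ζ I (c + i) ω),
      if c + K ≤ c + i + η (c + i) j ω then 1 else 0) (K + 1)]
  refine Finset.sum_congr rfl fun k _ => ?_
  show (∑ j ∈ Finset.Icc 1 (batchXi ζ I (c + (k : ℕ)) ω),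
      if c + K ≤ c + (k : ℕ) + η (c + (k : ℕ)) j ω then 1 else 0)
    = ∑ j ∈ Finset.Icc 1 (batchXi ζ I (c + (k : ℕ)) ω),
      if K ≤ (k : ℕ) + η (c + (k : ℕ)) j ω then 1 else 0
  exact Finset.sum_congr rfl fun j _ => if_congr (by omega) rfl rfl


/-- In the cyclic model with period `D`, bounded lifetimes
(`P(η i j ≤ K) = 1`) and finite mean batch sizes, the colony size is stationary from
time `K + 1` on: `M (n + lD)` and `M (n + (l+1)D)` have the same distribution whenever
`n + lD > K`. -/
theorem cyclic_stationarity
    {Ω : Type*} [MeasurableSpace Ω] (μ : Measure Ω) [IsProbabilityMeasure μ]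
    (D K : ℕ) (hD : 1 ≤ D)
    (ζ : ℕ → Ω → ℕ) (I η : ℕ → ℕ → Ω → ℕ) (r : ℕ → ℝ)
    -- measurability
    (hζm : ∀ i, Measurable (ζ i)) (hIm : ∀ i j, Measurable (I i j))
    (hηm : ∀ i j, Measurable (η i j))
    -- the I's are indicators with hatching probability r i for batch i
    (hI01 : ∀ i j ω, I i j ω ≤ 1) (hr0 : ∀ i, 0 ≤ r i) (hr1 : ∀ i, r i ≤ 1)
    (hIr : ∀ i j, μ {ω | I i j ω = 1} = ENNReal.ofReal (r i))
    -- mutual independence of all the variables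
    (hindep : iIndepFun (eggVars ζ I η) μ)
    -- within a batch, the lifetimes are identically distributed
    (hηid : ∀ i j, IdentDistrib (η i j) (η i 1) μ μ)
    -- periodicity with period D
    (hζper : ∀ i l, i % D = l % D → IdentDistrib (ζ i) (ζ l) μ μ)
    (hrper : ∀ i l, i % D = l % D → r i = r l)
    (hηper : ∀ i l, i % D = l % D → IdentDistrib (η i 1) (η l 1) μ μ)
    -- the lifetimes are bounded by K
    (hK : ∀ i j, ∀ᵐ ω ∂μ, η i j ω ≤ K)
    -- finite mean batch sizes
    (hζint : ∀ i, 1 ≤ i → i ≤ D → Integrable (fun ω => (ζ i ω : ℝ)) μ) :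
    ∀ n l : ℕ, 1 ≤ n → K < n + l * D →
      IdentDistrib (cyclicM ζ I η (n + l * D)) (cyclicM ζ I η (n + (l + 1) * D)) μ μ := by
  intro n l hn hKt
  set t := n + l * D with ht
  have hb1 : 1 ≤ t - K := by omega
  set b := t - K with hb
  have hbK : b + K = t := by omega
  have ht' : n + (l + 1) * D = (b + D) + K := by
    have h0 : n + (l + 1) * D = t + D := by ring
    omega
  -- the window variables
  set W : ℕ → WIdx K → Ω → ℕ := fun c a => eggVars ζ I η (windowIdx K c a) with hW
  have hWm : ∀ c a, Measurable (W c a) := by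
    rintro c (k | ⟨k, j⟩ | ⟨k, j⟩)
    · exact hζm _
    · exact hIm _ _
    · exact hηm _ _
  have hWindep : ∀ c, iIndepFun (W c) μ :=
    fun c => iIndepFun_precomp' (windowIdx_injective K c) hindep
  -- identical marginals for the two windows
  have hmod : ∀ m : ℕ, (b + m) % D = (b + D + m) % D := by
    intro m
    rw [show b + D + m = (b + m) + D from by omega, Nat.add_mod_right]
  have hmarg : ∀ a, IdentDistrib (W b a) (W (b + D) a) μ μ := by
    rintro (k | ⟨k, j⟩ | ⟨k, j⟩)
    · exact hζper _ _ (hmod k)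
    · refine identDistrib_of_bernoulli' (hIm _ _) (hIm _ _) (hI01 _ _) (hI01 _ _) ?_
      show μ {ω | I (b + (k : ℕ)) j ω = 1} = μ {ω | I (b + D + (k : ℕ)) j ω = 1}
      rw [hIr, hIr, hrper _ _ (hmod k)]
    · exact ((hηid _ j).trans (hηper _ _ (hmod k))).trans (hηid _ j).symm
  -- identical joint distributions
  have hjoint : IdentDistrib (fun ω (a : WIdx K) => W b a ω)
      (fun ω (a : WIdx K) => W (b + D) a ω) μ μ :=
    identDistrib_pi_of_iIndep (hWm b) (hWm (b + D)) (hWindep b) (hWindep (b + D)) hmarg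
  have hcomp := hjoint.comp (windowG_measurable K)
  -- almost-everywhere identification of the colony size with the window function
  have hgood : ∀ᵐ ω ∂μ, ∀ i j, η i j ω ≤ K := by
    rw [ae_all_iff]
    intro i
    rw [ae_all_iff]
    exact hK i
  have hae1 : cyclicM ζ I η (n + l * D)
      =ᵐ[μ] (windowG K ∘ fun ω (a : WIdx K) => W b a ω) := by
    filter_upwards [hgood] with ω hω
    have := cyclicM_eq_windowG ζ I η K b hb1 ω hω
    rw [show b + K = n + l * D from by omega] at this
    exact this
  have hae2 : cyclicM ζ I η (n + (l + 1) * D)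
      =ᵐ[μ] (windowG K ∘ fun ω (a : WIdx K) => W (b + D) a ω) := by
    filter_upwards [hgood] with ω hω
    have := cyclicM_eq_windowG ζ I η K (b + D) (by omega) ω hω
    rw [show b + D + K = n + (l + 1) * D from by omega] at this
    exact this
  exact ⟨hcomp.aemeasurable_fst.congr hae1.symm, hcomp.aemeasurable_snd.congr hae2.symm,
    by rw [Measure.map_congr hae1, Measure.map_congr hae2]; exact hcomp.map_eq⟩

end
end

section
/- For the stationary renewal counting process 𝒩, for all integers 1 ≤ m_1 < m_2 the increments Δ𝒩_m = 𝒩_m − 𝒩_{m−1} satisfy E[Δ𝒩_{m_1}·Δ𝒩_{m_2}] = (H(m_2 − m_1) − H(m_2 − m_1 − 1))/E[τ_2], where H(n) is the renewal function of the corresponding ordinary renewal process. -/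
open MeasureTheory ProbabilityTheory Finset

noncomputable section

variable {Ω : Type*}

/-- `𝒮 i = τ̃₁ + τ 2 + ⋯ + τ i`, the stationary (delayed) renewal times, where the delay
`τ̃₁` is written `τ 1` (with the convention `𝒮 0 = 0`). -/
def statS (τ : ℕ → Ω → ℕ) (i : ℕ) (ω : Ω) : ℕ := ∑ k ∈ Finset.Icc 1 i, τ k ω

/-- `𝒩 n = Σ_{i ≥ 1} 1{𝒮 i ≤ n}`, the stationary renewal counting process (valid since
`τ k ≥ 1`, so that `𝒮 i ≥ i` and at most the first `n` renewals can occur by time `n`). -/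
def statN (τ : ℕ → Ω → ℕ) (n : ℕ) (ω : Ω) : ℕ :=
  ((Finset.Icc 1 n).filter (fun i => statS τ i ω ≤ n)).card

/-- `S'_i = τ 2 + ⋯ + τ (i+1)`: the renewal times of the corresponding ordinary
(non-delayed) renewal process, built from `i` inter-renewal times distributed as `τ 2`. -/
def ordS (τ : ℕ → Ω → ℕ) (i : ℕ) (ω : Ω) : ℕ := ∑ k ∈ Finset.Icc 2 (i + 1), τ k ω

/-- `N n = Σ_{i ≥ 1} 1{S'_i ≤ n}`, the ordinary renewal counting process. -/
def ordN (τ : ℕ → Ω → ℕ) (n : ℕ) (ω : Ω) : ℕ :=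
  ((Finset.Icc 1 n).filter (fun i => ordS τ i ω ≤ n)).card

/-- The renewal function `H n = E N_n` of the ordinary renewal process (so `H 0 = 0`). -/
def ordH [MeasurableSpace Ω] (μ : Measure Ω) (τ : ℕ → Ω → ℕ) (n : ℕ) : ℝ :=
  ∫ ω, (ordN τ n ω : ℝ) ∂μ

open scoped Classical

namespace RenewalAux

variable {Ω : Type*}

/-- Shifted partial sums: `pS τ i l = τ (i+1) + ⋯ + τ (i+l)`. -/
def pS (τ : ℕ → Ω → ℕ) (i l : ℕ) (ω : Ω) : ℕ := ∑ k ∈ Finset.Ioc i (i + l), τ k ω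

/-- "Renewal at time `n` for the process shifted by `i`" (with `REv τ i 0 = univ`). -/
def REv (τ : ℕ → Ω → ℕ) (i n : ℕ) : Set Ω := {ω | ∃ l ≤ n, pS τ i l ω = n}

/-- The counting process for the process shifted by `i`. -/
def cnt (τ : ℕ → Ω → ℕ) (i n : ℕ) (ω : Ω) : ℕ :=
  ((Finset.Icc 1 n).filter (fun l => pS τ i l ω ≤ n)).card

variable {τ : ℕ → Ω → ℕ}

lemma pS_zero (i : ℕ) (ω : Ω) : pS τ i 0 ω = 0 := by simp [pS]

lemma pS_one (i : ℕ) (ω : Ω) : pS τ i 1 ω = τ (i + 1) ω := by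
  simp [pS, ← Finset.Icc_add_one_left_eq_Ioc]

lemma pS_add (i a b : ℕ) (ω : Ω) : pS τ i (a + b) ω = pS τ i a ω + pS τ (i + a) b ω := by
  rw [pS, pS, pS, Finset.sum_Ioc_consecutive _ (Nat.le_add_right i a) (by omega), ← add_assoc]

lemma le_pS (hτpos : ∀ i ω, 1 ≤ τ i ω) (i l : ℕ) (ω : Ω) : l ≤ pS τ i l ω := by
  calc l = ∑ _k ∈ Finset.Ioc i (i + l), 1 := by simp
  _ ≤ _ := Finset.sum_le_sum fun k _ => hτpos k ω

lemma pS_lt (hτpos : ∀ i ω, 1 ≤ τ i ω) {i l l' : ℕ} (h : l < l') (ω : Ω) :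
    pS τ i l ω < pS τ i l' ω := by
  have := le_pS hτpos (i + l) (l' - l) ω
  have h2 : pS τ i l' ω = pS τ i l ω + pS τ (i + l) (l' - l) ω := by
    rw [← pS_add]; congr 1; omega
  omega

lemma statS_eq (l : ℕ) (ω : Ω) : statS τ l ω = pS τ 0 l ω := by
  simp [statS, pS, ← Finset.Icc_add_one_left_eq_Ioc]

lemma ordS_eq (l : ℕ) (ω : Ω) : ordS τ l ω = pS τ 1 l ω := by
  simp [ordS, pS, ← Finset.Icc_add_one_left_eq_Ioc, Nat.add_comm 1 l]

lemma statN_eq (n : ℕ) (ω : Ω) : statN τ n ω = cnt τ 0 n ω := by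
  simp [statN, cnt, statS_eq]

lemma ordN_eq (n : ℕ) (ω : Ω) : ordN τ n ω = cnt τ 1 n ω := by
  simp [ordN, cnt, ordS_eq]

lemma REv_zero (i : ℕ) : REv τ i 0 = Set.univ :=
  Set.eq_univ_of_forall fun ω => ⟨0, le_refl 0, pS_zero i ω⟩

lemma mem_REv_iff (hτpos : ∀ i ω, 1 ≤ τ i ω) {i n : ℕ} (hn : 1 ≤ n) (ω : Ω) :
    ω ∈ REv τ i n ↔ ∃ l, 1 ≤ l ∧ l ≤ n ∧ pS τ i l ω = n := by
  constructor
  · rintro ⟨l, hl, he⟩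
    refine ⟨l, ?_, hl, he⟩
    rcases Nat.eq_zero_or_pos l with rfl | h
    · rw [pS_zero] at he; omega
    · exact h
  · rintro ⟨l, _, hl, he⟩; exact ⟨l, hl, he⟩

section Meas
variable [MeasurableSpace Ω]

lemma measurable_pS (hτm : ∀ i, Measurable (τ i)) (i l : ℕ) :
    Measurable (fun ω => pS τ i l ω) := by
  exact Finset.measurable_sum _ fun k _ => hτm k

lemma measurableSet_pS_eq (hτm : ∀ i, Measurable (τ i)) (i l n : ℕ) :
    MeasurableSet {ω | pS τ i l ω = n} :=
  measurable_pS hτm i l (measurableSet_singleton n)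

lemma measurableSet_REv (hτm : ∀ i, Measurable (τ i)) (i n : ℕ) :
    MeasurableSet (REv τ i n) := by
  have : REv τ i n = ⋃ l ∈ Set.Iic n, {ω | pS τ i l ω = n} := by
    ext ω; simp [REv]
  rw [this]
  exact MeasurableSet.biUnion (Set.to_countable _) fun l _ => measurableSet_pS_eq hτm i l n

end Meas

/-- One-step increment of the counting process. -/
lemma cnt_succ (hτpos : ∀ i ω, 1 ≤ τ i ω) (i n : ℕ) (ω : Ω) :
    cnt τ i (n + 1) ω = cnt τ i n ω + (if ω ∈ REv τ i (n + 1) then 1 else 0) := by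
  classical
  set A := (Finset.Icc 1 (n + 1)).filter (fun l => pS τ i l ω ≤ n + 1) with hA
  set B := (Finset.Icc 1 n).filter (fun l => pS τ i l ω ≤ n) with hB
  set C := (Finset.Icc 1 (n + 1)).filter (fun l => pS τ i l ω = n + 1) with hC
  have hBC : Disjoint B C := by
    rw [Finset.disjoint_left]
    intro l hl hl'
    simp only [hB, hC, Finset.mem_filter, Finset.mem_Icc] at hl hl'
    omega
  have hAeq : A = B ∪ C := by
    ext l
    simp only [hA, hB, hC, Finset.mem_union, Finset.mem_filter, Finset.mem_Icc]
    constructor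
    · rintro ⟨⟨h1, h2⟩, h3⟩
      rcases eq_or_lt_of_le h3 with he | hlt
      · exact Or.inr ⟨⟨h1, h2⟩, he⟩
      · have := le_pS hτpos i l ω
        exact Or.inl ⟨⟨h1, by omega⟩, by omega⟩
    · rintro (⟨⟨h1, h2⟩, h3⟩ | ⟨⟨h1, h2⟩, h3⟩) <;> exact ⟨⟨h1, by omega⟩, by omega⟩
  have hcard : C.card = if ω ∈ REv τ i (n + 1) then 1 else 0 := by
    by_cases h : ω ∈ REv τ i (n + 1)
    · obtain ⟨l₀, hl1, hl2, he⟩ := (mem_REv_iff hτpos (by omega) ω).mp h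
      rw [if_pos h]
      have : C = {l₀} := by
        ext l
        simp only [hC, Finset.mem_filter, Finset.mem_Icc, Finset.mem_singleton]
        constructor
        · rintro ⟨⟨h1, h2⟩, h3⟩
          by_contra hne
          rcases lt_or_gt_of_ne hne with hlt | hlt
          · have := pS_lt (i := i) hτpos hlt ω; omega
          · have := pS_lt (i := i) hτpos hlt ω; omega
        · rintro rfl; exact ⟨⟨hl1, hl2⟩, he⟩
      rw [this, Finset.card_singleton]
    · rw [if_neg h]
      rw [Finset.card_eq_zero]
      rw [Finset.eq_empty_iff_forall_notMem]
      intro l hl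
      simp only [hC, Finset.mem_filter, Finset.mem_Icc] at hl
      exact h ⟨l, hl.1.2, hl.2⟩
  rw [cnt, cnt, ← hA, ← hB, hAeq, Finset.card_union_of_disjoint hBC, hcard]

lemma cnt_le (i n : ℕ) (ω : Ω) : cnt τ i n ω ≤ n := by
  calc cnt τ i n ω ≤ (Finset.Icc 1 n).card := Finset.card_filter_le _ _
  _ = n := by rw [Nat.card_Icc]; omega

section Meas2
variable [MeasurableSpace Ω]

lemma measurable_cnt (hτm : ∀ i, Measurable (τ i)) (i n : ℕ) :
    Measurable (fun ω => (cnt τ i n ω : ℝ)) := by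
  have : (fun ω => (cnt τ i n ω : ℝ))
      = fun ω => ∑ l ∈ Finset.Icc 1 n, (if pS τ i l ω ≤ n then (1 : ℝ) else 0) := by
    funext ω
    rw [cnt, Finset.card_filter]
    push_cast
    rfl
  rw [this]
  exact Finset.measurable_sum _ fun l _ =>
    Measurable.ite (measurable_pS hτm i l measurableSet_Iic) measurable_const measurable_const

lemma integrable_cnt {μ : Measure Ω} [IsProbabilityMeasure μ] (hτm : ∀ i, Measurable (τ i))
    (i n : ℕ) : Integrable (fun ω => (cnt τ i n ω : ℝ)) μ := by
  refine (integrable_const (n : ℝ)).mono' (measurable_cnt hτm i n).aestronglyMeasurable ?_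
  refine Filter.Eventually.of_forall fun ω => ?_
  rw [Real.norm_eq_abs, abs_of_nonneg (by positivity)]
  exact_mod_cast cnt_le i n ω

end Meas2

section Prob
variable [MeasurableSpace Ω] {μ : Measure Ω}

lemma measurableSet_pi_nat {S : Finset ℕ} (B : Set ({x // x ∈ S} → ℕ)) : MeasurableSet B :=
  (Set.to_countable B).measurableSet

lemma measure_inter_eq_mul (hindep : iIndepFun τ μ)
    (hτm : ∀ i, Measurable (τ i)) {S T : Finset ℕ} (hST : Disjoint S T)
    {A B : Set Ω} (hA : ∃ A' : Set ({x // x ∈ S} → ℕ), A = (fun ω (k : S) => τ k ω) ⁻¹' A')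
    (hB : ∃ B' : Set ({x // x ∈ T} → ℕ), B = (fun ω (k : T) => τ k ω) ⁻¹' B') :
    μ (A ∩ B) = μ A * μ B := by
  obtain ⟨A', rfl⟩ := hA; obtain ⟨B', rfl⟩ := hB
  exact (hindep.indepFun_finset S T hST hτm).measure_inter_preimage_eq_mul A' B'
    (measurableSet_pi_nat A') (measurableSet_pi_nat B')

lemma pSeq_preimage (a i m : ℕ) :
    {ω : Ω | pS τ a i ω = m} =
      (fun ω (k : {x // x ∈ Finset.Ioc a (a + i)}) => τ k ω) ⁻¹' {g | ∑ k, g k = m} := by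
  ext ω
  simp only [Set.mem_preimage, Set.mem_setOf_eq, pS]
  rw [Finset.sum_coe_sort (Finset.Ioc a (a + i)) (fun k => τ k ω)]

lemma REv_preimage (i d : ℕ) :
    REv τ i d = (fun ω (k : {x // x ∈ Finset.Ioc i (i + d)}) => τ k ω) ⁻¹'
      {g : {x // x ∈ Finset.Ioc i (i + d)} → ℕ | ∃ l ≤ d, ∑ k : {x // x ∈ Finset.Ioc i (i + d)}, (if (k : ℕ) ≤ i + l then g k else 0) = d} := by
  have key : ∀ (ω : Ω) (l : ℕ), l ≤ d →
      (∑ k : {x // x ∈ Finset.Ioc i (i + d)}, (if (k : ℕ) ≤ i + l then τ k ω else 0))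
        = pS τ i l ω := by
    intro ω l hl
    rw [Finset.sum_coe_sort (Finset.Ioc i (i + d)) (fun k => if k ≤ i + l then τ k ω else 0),
      ← Finset.sum_filter]
    have : (Finset.Ioc i (i + d)).filter (fun k => k ≤ i + l) = Finset.Ioc i (i + l) := by
      ext k; simp only [Finset.mem_filter, Finset.mem_Ioc]; omega
    rw [this]; rfl
  ext ω
  simp only [Set.mem_preimage, Set.mem_setOf_eq, REv]
  constructor
  · rintro ⟨l, hl, he⟩; exact ⟨l, hl, by rw [key ω l hl]; exact he⟩
  · rintro ⟨l, hl, he⟩; exact ⟨l, hl, by rw [← key ω l hl]; exact he⟩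

lemma tau_preimage (i j : ℕ) :
    {ω : Ω | τ i ω = j} = (fun ω (k : {x // x ∈ ({i} : Finset ℕ)}) => τ k ω) ⁻¹'
      {g | g ⟨i, Finset.mem_singleton_self i⟩ = j} := by
  ext ω; simp

lemma meas_inter_pS_REv (hindep : iIndepFun τ μ)
    (hτm : ∀ i, Measurable (τ i)) (i m d : ℕ) :
    μ ({ω | pS τ 0 i ω = m} ∩ REv τ i d) = μ {ω | pS τ 0 i ω = m} * μ (REv τ i d) := by
  refine measure_inter_eq_mul hindep hτm (S := Finset.Ioc 0 (0 + i)) (T := Finset.Ioc i (i + d))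
    ?_ ⟨_, pSeq_preimage 0 i m⟩ ⟨_, REv_preimage i d⟩
  rw [Finset.disjoint_left]
  intro k hk hk'
  simp only [Finset.mem_Ioc] at hk hk'
  omega

lemma meas_inter_tau_REv (hindep : iIndepFun τ μ)
    (hτm : ∀ i, Measurable (τ i)) (i j c : ℕ) :
    μ ({ω | τ (i + 1) ω = j} ∩ REv τ (i + 1) c)
      = μ {ω | τ (i + 1) ω = j} * μ (REv τ (i + 1) c) := by
  refine measure_inter_eq_mul hindep hτm (S := {i + 1}) (T := Finset.Ioc (i + 1) (i + 1 + c))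
    ?_ ⟨_, tau_preimage (i + 1) j⟩ ⟨_, REv_preimage (i + 1) c⟩
  rw [Finset.disjoint_left]
  intro k hk hk'
  simp only [Finset.mem_singleton] at hk
  simp only [Finset.mem_Ioc] at hk'
  omega

lemma REv_decomp (hτpos : ∀ i ω, 1 ≤ τ i ω) (i n : ℕ) :
    REv τ i (n + 1)
      = ⋃ j ∈ Finset.Icc 1 (n + 1), ({ω | τ (i + 1) ω = j} ∩ REv τ (i + 1) (n + 1 - j)) := by
  ext ω
  simp only [Set.mem_iUnion, Finset.mem_Icc, Set.mem_inter_iff, Set.mem_setOf_eq, exists_prop]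
  constructor
  · intro h
    obtain ⟨l, hl1, hl2, he⟩ := (mem_REv_iff hτpos (by omega) ω).mp h
    have hsplit : pS τ i l ω = τ (i + 1) ω + pS τ (i + 1) (l - 1) ω := by
      conv_lhs => rw [show l = 1 + (l - 1) by omega]
      rw [pS_add, pS_one]
    have hple := le_pS hτpos (i + 1) (l - 1) ω
    have hjpos := hτpos (i + 1) ω
    refine ⟨τ (i + 1) ω, ⟨hjpos, by omega⟩, rfl, ⟨l - 1, by omega, by omega⟩⟩
  · rintro ⟨j, ⟨hj1, hj2⟩, hjτ, l, hl, he⟩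
    refine (mem_REv_iff hτpos (by omega) ω).mpr ⟨l + 1, by omega, ?_, ?_⟩
    · have := le_pS hτpos (i + 1) l ω; omega
    · rw [show l + 1 = 1 + l by omega, pS_add, pS_one]; omega

lemma measure_REv_succ (hindep : iIndepFun τ μ)
    (hτm : ∀ i, Measurable (τ i)) (hτpos : ∀ i ω, 1 ≤ τ i ω) (i n : ℕ) :
    μ (REv τ i (n + 1))
      = ∑ j ∈ Finset.Icc 1 (n + 1), μ {ω | τ (i + 1) ω = j} * μ (REv τ (i + 1) (n + 1 - j)) := by
  rw [REv_decomp hτpos i n, measure_biUnion_finset ?hd ?hm]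
  · exact Finset.sum_congr rfl fun j _ => meas_inter_tau_REv hindep hτm i j _
  case hd =>
    intro j _ j' _ hne
    refine Set.disjoint_left.mpr ?_
    rintro ω ⟨h1, _⟩ ⟨h2, _⟩
    exact hne (h1 ▸ h2 ▸ rfl)
  case hm =>
    intro j _
    exact ((hτm (i + 1)) (measurableSet_singleton j)).inter (measurableSet_REv hτm _ _)

lemma measure_tau_eq (hτid : ∀ i, 2 ≤ i → IdentDistrib (τ i) (τ 2) μ μ) {i : ℕ} (hi : 2 ≤ i)
    (j : ℕ) : μ {ω | τ i ω = j} = μ {ω | τ 2 ω = j} := by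
  have := (hτid i hi).measure_mem_eq (measurableSet_singleton j)
  simpa [Set.preimage, Set.mem_singleton_iff] using this

lemma measure_REv_shift (hindep : iIndepFun τ μ)
    (hτm : ∀ i, Measurable (τ i)) (hτpos : ∀ i ω, 1 ≤ τ i ω)
    (hτid : ∀ i, 2 ≤ i → IdentDistrib (τ i) (τ 2) μ μ) :
    ∀ n i, 1 ≤ i → μ (REv τ i n) = μ (REv τ 1 n) := by
  intro n
  induction n using Nat.strong_induction_on with
  | _ n IH =>
    intro i hi
    match n with
    | 0 => simp [REv_zero]
    | (m + 1) =>
      rw [measure_REv_succ hindep hτm hτpos i m, measure_REv_succ hindep hτm hτpos 1 m]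
      refine Finset.sum_congr rfl fun j hj => ?_
      simp only [Finset.mem_Icc] at hj
      rw [measure_tau_eq hτid (by omega) j, measure_tau_eq (i := 1 + 1) hτid (by omega) j,
        IH (m + 1 - j) (by omega) (i + 1) (by omega), IH (m + 1 - j) (by omega) (1 + 1) (by omega)]

end Prob

section Main
variable [MeasurableSpace Ω] {μ : Measure Ω} [IsProbabilityMeasure μ]

lemma measure_REv_one_rec (hindep : iIndepFun τ μ)
    (hτm : ∀ i, Measurable (τ i)) (hτpos : ∀ i ω, 1 ≤ τ i ω)
    (hτid : ∀ i, 2 ≤ i → IdentDistrib (τ i) (τ 2) μ μ) {n : ℕ} (hn : 1 ≤ n) :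
    μ (REv τ 1 n) = ∑ j ∈ Finset.Icc 1 n, μ {ω | τ 2 ω = j} * μ (REv τ 1 (n - j)) := by
  obtain ⟨m, rfl⟩ : ∃ m, n = m + 1 := ⟨n - 1, by omega⟩
  rw [measure_REv_succ hindep hτm hτpos 1 m]
  refine Finset.sum_congr rfl fun j hj => ?_
  rw [measure_REv_shift hindep hτm hτpos hτid (m + 1 - j) (1 + 1) (by omega)]

lemma sum_tail_eq_one (hindep : iIndepFun τ μ)
    (hτm : ∀ i, Measurable (τ i)) (hτpos : ∀ i ω, 1 ≤ τ i ω)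
    (hτid : ∀ i, 2 ≤ i → IdentDistrib (τ i) (τ 2) μ μ) :
    ∀ m, 1 ≤ m →
      ∑ k ∈ Finset.Icc 1 m, μ {ω | k ≤ τ 2 ω} * μ (REv τ 1 (m - k)) = 1 := by
  have ha : ∀ k : ℕ, μ {ω | k ≤ τ 2 ω} = μ {ω | τ 2 ω = k} + μ {ω | k + 1 ≤ τ 2 ω} := by
    intro k
    rw [← measure_union ?_ ?_]
    · congr 1; ext ω; simp only [Set.mem_union, Set.mem_setOf_eq]; omega
    · refine Set.disjoint_left.mpr fun ω h1 h2 => ?_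
      simp only [Set.mem_setOf_eq] at h1 h2; omega
    · exact (hτm 2) measurableSet_Ici
  have ha1 : μ {ω | 1 ≤ τ 2 ω} = 1 := by
    have : {ω : Ω | 1 ≤ τ 2 ω} = Set.univ := Set.eq_univ_of_forall fun ω => hτpos 2 ω
    rw [this, measure_univ]
  intro m hm
  induction m, hm using Nat.le_induction with
  | base =>
    rw [Finset.Icc_self, Finset.sum_singleton, ha1, one_mul, Nat.sub_self, REv_zero, measure_univ]
  | succ m hm IH =>
    have hmap : ∀ (g : ℕ → ENNReal),
        ∑ k ∈ Finset.Icc 2 (m + 1), g k = ∑ k ∈ Finset.Icc 1 m, g (k + 1) := by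
      intro g
      rw [show Finset.Icc 2 (m + 1) = (Finset.Icc 1 m).map (addRightEmbedding 1) from ?_,
        Finset.sum_map]
      · rfl
      · rw [Finset.map_add_right_Icc]
    have key : (1 : ENNReal)
        = μ (REv τ 1 m) + ∑ k ∈ Finset.Icc 1 m, μ {ω | k + 1 ≤ τ 2 ω} * μ (REv τ 1 (m - k)) := by
      conv_lhs => rw [← IH]
      calc ∑ k ∈ Finset.Icc 1 m, μ {ω | k ≤ τ 2 ω} * μ (REv τ 1 (m - k))
          = ∑ k ∈ Finset.Icc 1 m, (μ {ω | τ 2 ω = k} * μ (REv τ 1 (m - k))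
              + μ {ω | k + 1 ≤ τ 2 ω} * μ (REv τ 1 (m - k))) := by
            refine Finset.sum_congr rfl fun k _ => ?_
            rw [ha k, add_mul]
        _ = (∑ k ∈ Finset.Icc 1 m, μ {ω | τ 2 ω = k} * μ (REv τ 1 (m - k)))
              + ∑ k ∈ Finset.Icc 1 m, μ {ω | k + 1 ≤ τ 2 ω} * μ (REv τ 1 (m - k)) :=
            Finset.sum_add_distrib
        _ = _ := by rw [← measure_REv_one_rec hindep hτm hτpos hτid hm]
    have hsplit : Finset.Icc 1 (m + 1) = insert 1 (Finset.Icc 2 (m + 1)) := by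
      ext k; simp only [Finset.mem_Icc, Finset.mem_insert]; omega
    rw [hsplit, Finset.sum_insert (by simp), hmap
      (fun k => μ {ω | k ≤ τ 2 ω} * μ (REv τ 1 (m + 1 - k)))]
    simp only [Nat.add_sub_cancel, Nat.succ_sub_succ]
    rw [ha1, one_mul]
    exact key.symm

lemma measure_REv_zero_eq (hindep : iIndepFun τ μ)
    (hτm : ∀ i, Measurable (τ i)) (hτpos : ∀ i ω, 1 ≤ τ i ω)
    (hτid : ∀ i, 2 ≤ i → IdentDistrib (τ i) (τ 2) μ μ)
    (hπ : ∀ k : ℕ, 1 ≤ k →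
      μ {ω | τ 1 ω = k} = μ {ω | k ≤ τ 2 ω} / ENNReal.ofReal (∫ ω, (τ 2 ω : ℝ) ∂μ))
    {m : ℕ} (hm : 1 ≤ m) :
    μ (REv τ 0 m) = (ENNReal.ofReal (∫ ω, (τ 2 ω : ℝ) ∂μ))⁻¹ := by
  obtain ⟨n, rfl⟩ : ∃ n, m = n + 1 := ⟨m - 1, by omega⟩
  rw [measure_REv_succ hindep hτm hτpos 0 n]
  have hterm : ∀ j ∈ Finset.Icc 1 (n + 1),
      μ {ω | τ (0 + 1) ω = j} * μ (REv τ (0 + 1) (n + 1 - j))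
        = μ {ω | j ≤ τ 2 ω} * μ (REv τ 1 (n + 1 - j))
            * (ENNReal.ofReal (∫ ω, (τ 2 ω : ℝ) ∂μ))⁻¹ := by
    intro j hj
    simp only [Finset.mem_Icc] at hj
    rw [show (0 + 1 : ℕ) = 1 by norm_num, hπ j hj.1, div_eq_mul_inv, mul_right_comm]
  rw [Finset.sum_congr rfl hterm, ← Finset.sum_mul,
    sum_tail_eq_one hindep hτm hτpos hτid (n + 1) (by omega), one_mul]

lemma measure_REv_inter (hindep : iIndepFun τ μ)
    (hτm : ∀ i, Measurable (τ i)) (hτpos : ∀ i ω, 1 ≤ τ i ω)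
    (hτid : ∀ i, 2 ≤ i → IdentDistrib (τ i) (τ 2) μ μ)
    {m₁ m₂ : ℕ} (h1 : 1 ≤ m₁) (h2 : m₁ < m₂) :
    μ (REv τ 0 m₁ ∩ REv τ 0 m₂) = μ (REv τ 0 m₁) * μ (REv τ 1 (m₂ - m₁)) := by
  have hsp : ∀ (i j : ℕ), i ≤ j → ∀ ω, pS τ 0 j ω = pS τ 0 i ω + pS τ i (j - i) ω := by
    intro i j hij ω
    have := pS_add (τ := τ) 0 i (j - i) ω
    rw [zero_add, show i + (j - i) = j by omega] at this
    exact this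
  have hdisj : (↑(Finset.Icc 1 m₁) : Set ℕ).PairwiseDisjoint
      (fun i => {ω : Ω | pS τ 0 i ω = m₁}) := by
    intro i _ i' _ hne
    refine Set.disjoint_left.mpr fun ω he he' => hne ?_
    simp only [Set.mem_setOf_eq] at he he'
    rcases lt_trichotomy i i' with h | h | h
    · exact absurd (pS_lt (i := 0) hτpos h ω) (by omega)
    · exact h
    · exact absurd (pS_lt (i := 0) hτpos h ω) (by omega)
  have hdec1 : REv τ 0 m₁ = ⋃ i ∈ Finset.Icc 1 m₁, {ω : Ω | pS τ 0 i ω = m₁} := by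
    ext ω
    simp only [Set.mem_iUnion, Finset.mem_Icc, Set.mem_setOf_eq, exists_prop]
    rw [mem_REv_iff hτpos h1]
    constructor
    · rintro ⟨l, hl1, hl2, he⟩; exact ⟨l, ⟨hl1, hl2⟩, he⟩
    · rintro ⟨l, ⟨hl1, hl2⟩, he⟩; exact ⟨l, hl1, hl2, he⟩
  have hdec2 : REv τ 0 m₁ ∩ REv τ 0 m₂
      = ⋃ i ∈ Finset.Icc 1 m₁, ({ω : Ω | pS τ 0 i ω = m₁} ∩ REv τ i (m₂ - m₁)) := by
    ext ω
    simp only [Set.mem_iUnion, Finset.mem_Icc, Set.mem_inter_iff, Set.mem_setOf_eq, exists_prop]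
    constructor
    · rintro ⟨hA, hB⟩
      obtain ⟨i, hi1, hi2, hei⟩ := (mem_REv_iff hτpos h1 ω).mp hA
      obtain ⟨j, hj1, hj2, hej⟩ := (mem_REv_iff hτpos (by omega) ω).mp hB
      have hij : i < j := by
        rcases lt_trichotomy i j with h | h | h
        · exact h
        · subst h; omega
        · have := pS_lt (i := 0) hτpos h ω; omega
      have hval := hsp i j (by omega) ω
      have hle := le_pS hτpos i (j - i) ω
      exact ⟨i, ⟨hi1, hi2⟩, hei, j - i, by omega, by omega⟩
    · rintro ⟨i, ⟨hi1, hi2⟩, hei, l, hl, hel⟩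
      refine ⟨(mem_REv_iff hτpos h1 ω).mpr ⟨i, hi1, hi2, hei⟩, ?_⟩
      refine (mem_REv_iff hτpos (by omega) ω).mpr ⟨i + l, by omega, by omega, ?_⟩
      rw [hsp i (i + l) (by omega) ω, show i + l - i = l by omega, hei, hel]
      omega
  have hdisj2 : (↑(Finset.Icc 1 m₁) : Set ℕ).PairwiseDisjoint
      (fun i => {ω : Ω | pS τ 0 i ω = m₁} ∩ REv τ i (m₂ - m₁)) := by
    intro i hi i' hi' hne
    exact (hdisj hi hi' hne).mono Set.inter_subset_left Set.inter_subset_left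
  rw [hdec2, measure_biUnion_finset hdisj2 (fun i _ =>
    (measurableSet_pS_eq hτm 0 i m₁).inter (measurableSet_REv hτm i (m₂ - m₁)))]
  rw [hdec1, measure_biUnion_finset hdisj (fun i _ => measurableSet_pS_eq hτm 0 i m₁),
    Finset.sum_mul]
  refine Finset.sum_congr rfl fun i hi => ?_
  simp only [Finset.mem_Icc] at hi
  rw [meas_inter_pS_REv hindep hτm i m₁ (m₂ - m₁),
    measure_REv_shift hindep hτm hτpos hτid (m₂ - m₁) i hi.1]

lemma integral_cnt_succ (hτm : ∀ i, Measurable (τ i)) (hτpos : ∀ i ω, 1 ≤ τ i ω) (i n : ℕ) :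
    ∫ ω, (cnt τ i (n + 1) ω : ℝ) ∂μ
      = (∫ ω, (cnt τ i n ω : ℝ) ∂μ) + (μ (REv τ i (n + 1))).toReal := by
  have hpt : ∀ ω, (cnt τ i (n + 1) ω : ℝ)
      = (cnt τ i n ω : ℝ) + (REv τ i (n + 1)).indicator (fun _ => (1 : ℝ)) ω := by
    intro ω
    rw [cnt_succ hτpos i n ω, Set.indicator_apply]
    push_cast
    by_cases h : ω ∈ REv τ i (n + 1) <;> simp [h]
  rw [integral_congr_ae (Filter.Eventually.of_forall hpt),
    integral_add (integrable_cnt hτm i n)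
      ((integrable_const (1 : ℝ)).indicator (measurableSet_REv hτm i (n + 1))),
    integral_indicator_const (1 : ℝ) (measurableSet_REv hτm i (n + 1))]
  simp
  rfl

end Main

end RenewalAux

open RenewalAux

/-- For the stationary renewal counting process `𝒩`, the increments
`Δ𝒩 m = 𝒩 m − 𝒩 (m−1)` satisfy, for all `1 ≤ m₁ < m₂`,
`E[Δ𝒩 m₁ ⬝ Δ𝒩 m₂] = (H (m₂ − m₁) − H (m₂ − m₁ − 1)) / E τ₂`,
where `H` is the renewal function of the corresponding ordinary renewal process. -/
theorem statN_increment_correlation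
    {Ω : Type*} [MeasurableSpace Ω] (μ : Measure Ω) [IsProbabilityMeasure μ]
    (τ : ℕ → Ω → ℕ)
    -- measurability and positivity
    (hτm : ∀ i, Measurable (τ i)) (hτpos : ∀ i ω, 1 ≤ τ i ω)
    -- the delay τ 1 = τ̃₁ and the inter-renewal times τ 2, τ 3, … are mutually independent
    (hindep : iIndepFun τ μ)
    -- τ 2, τ 3, … are identically distributed
    (hτid : ∀ i, 2 ≤ i → IdentDistrib (τ i) (τ 2) μ μ)
    -- finite mean
    (hτint : Integrable (fun ω => (τ 2 ω : ℝ)) μ)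
    -- the delay has the stationary distribution π_k = P(τ₂ ≥ k) / E τ₂
    (hπ : ∀ k : ℕ, 1 ≤ k →
      μ {ω | τ 1 ω = k} = μ {ω | k ≤ τ 2 ω} / ENNReal.ofReal (∫ ω, (τ 2 ω : ℝ) ∂μ))
    : ∀ m₁ m₂ : ℕ, 1 ≤ m₁ → m₁ < m₂ →
      ∫ ω, (((statN τ m₁ ω : ℝ) - (statN τ (m₁ - 1) ω : ℝ))
          * ((statN τ m₂ ω : ℝ) - (statN τ (m₂ - 1) ω : ℝ))) ∂μ =
        (ordH μ τ (m₂ - m₁) - ordH μ τ (m₂ - m₁ - 1)) / ∫ ω, (τ 2 ω : ℝ) ∂μ := by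
  classical
  intro m₁ m₂ hm1 hm12
  obtain ⟨n₁, rfl⟩ : ∃ n, m₁ = n + 1 := ⟨m₁ - 1, by omega⟩
  obtain ⟨n₂, rfl⟩ : ∃ n, m₂ = n + 1 := ⟨m₂ - 1, by omega⟩
  have hE1 : (1 : ℝ) ≤ ∫ ω, (τ 2 ω : ℝ) ∂μ := by
    calc (1 : ℝ) = ∫ _ω, (1 : ℝ) ∂μ := by simp
    _ ≤ _ := integral_mono (integrable_const 1) hτint (fun ω => by show (1:ℝ) ≤ (τ 2 ω : ℝ); exact_mod_cast hτpos 2 ω)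
  have hE0 : (0 : ℝ) < ∫ ω, (τ 2 ω : ℝ) ∂μ := lt_of_lt_of_le one_pos hE1
  obtain ⟨e, he⟩ : ∃ e, n₂ - n₁ = e + 1 := ⟨n₂ - n₁ - 1, by omega⟩
  have hL : ∀ ω, (((statN τ (n₁ + 1) ω : ℝ) - (statN τ (n₁ + 1 - 1) ω : ℝ))
      * ((statN τ (n₂ + 1) ω : ℝ) - (statN τ (n₂ + 1 - 1) ω : ℝ)))
      = (REv τ 0 (n₁ + 1) ∩ REv τ 0 (n₂ + 1)).indicator (fun _ => (1 : ℝ)) ω := by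
    intro ω
    rw [Nat.add_sub_cancel, Nat.add_sub_cancel,
      statN_eq, statN_eq, statN_eq, statN_eq,
      cnt_succ hτpos 0 n₁ ω, cnt_succ hτpos 0 n₂ ω, Set.indicator_apply]
    push_cast
    by_cases h1 : ω ∈ REv τ 0 (n₁ + 1) <;>
      by_cases h2 : ω ∈ REv τ 0 (n₂ + 1) <;>
      simp [h1, h2, Set.mem_inter_iff]
  rw [integral_congr_ae (Filter.Eventually.of_forall hL),
    integral_indicator_const (1 : ℝ) ((measurableSet_REv hτm 0 (n₁ + 1)).inter
      (measurableSet_REv hτm 0 (n₂ + 1))), measureReal_def,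
    measure_REv_inter hindep hτm hτpos hτid (by omega) hm12,
    measure_REv_zero_eq hindep hτm hτpos hτid hπ (by omega : 1 ≤ n₁ + 1),
    show n₂ + 1 - (n₁ + 1) = e + 1 by omega]
  have hordH : ∀ c : ℕ, ordH μ τ c = ∫ ω, (cnt τ 1 c ω : ℝ) ∂μ := by
    intro c
    unfold ordH
    refine integral_congr_ae (Filter.Eventually.of_forall fun ω => ?_)
    simp only [ordN_eq]
  have hdiff : ordH μ τ (e + 1) - ordH μ τ e = (μ (REv τ 1 (e + 1))).toReal := by
    rw [hordH, hordH, integral_cnt_succ hτm hτpos 1 e]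
    ring
  rw [show e + 1 - 1 = e by omega, hdiff, ENNReal.toReal_mul, ENNReal.toReal_inv,
    ENNReal.toReal_ofReal hE0.le, smul_eq_mul, mul_one, div_eq_mul_inv, mul_comm]
end
end

section
/- For the stationary renewal counting process 𝒩, for every integer u ≥ 1, E[𝒩_u²] = (E[τ_2])^{−1}·(2·Σ_{i=1}^{u−1} H(i) + u), where H is the renewal function of the corresponding ordinary renewal process. -/
open MeasureTheory ProbabilityTheory Finset

noncomputable section

variable {Ω : Type*}

namespace RenewalAux

variable {Ω : Type*} [MeasurableSpace Ω]

lemma sq_sum_odd (N : ℕ) : ∑ i ∈ Icc 1 N, (2 * (i : ℝ) - 1) = (N : ℝ) ^ 2 := by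
  induction N with
  | zero => simp
  | succ n ih =>
    rw [Finset.sum_Icc_succ_top (by omega), ih]
    push_cast; ring

/-- the decomposition engine -/
lemma decomp (μ : Measure Ω) [IsProbabilityMeasure μ]
    (τ : ℕ → Ω → ℕ) (hτm : ∀ i, Measurable (τ i)) (hτpos : ∀ i ω, 1 ≤ τ i ω)
    (hindep : iIndepFun τ μ)
    (a : ℕ) (s : Finset ℕ) (ha : a ∉ s) (m : ℕ) :
    (μ {ω | τ a ω + ∑ k ∈ s, τ k ω ≤ m}).toReal
      = ∑ l ∈ Icc 1 m,
          (μ {ω | τ a ω = l}).toReal * (μ {ω | ∑ k ∈ s, τ k ω ≤ m - l}).toReal := by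
  classical
  have hI : IndepFun (τ a) (fun ω => ∑ k ∈ s, τ k ω) μ := by
    have h := (hindep.indepFun_finset_sum_of_notMem hτm ha).symm
    have he : (∑ j ∈ s, τ j) = fun ω => ∑ k ∈ s, τ k ω := by
      funext ω; simp
    rwa [he] at h
  have hset : {ω | τ a ω + ∑ k ∈ s, τ k ω ≤ m}
      = ⋃ l ∈ (Icc 1 m : Finset ℕ),
          ({ω | τ a ω = l} ∩ {ω | ∑ k ∈ s, τ k ω ≤ m - l}) := by
    ext ω
    simp only [Set.mem_setOf_eq, Set.mem_iUnion, Set.mem_inter_iff, Finset.mem_Icc]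
    constructor
    · intro h
      have := hτpos a ω
      exact ⟨τ a ω, ⟨this, by omega⟩, rfl, by omega⟩
    · rintro ⟨l, ⟨h1, h2⟩, rfl, h3⟩; omega
  have hdisj : Set.PairwiseDisjoint (↑(Icc 1 m : Finset ℕ))
      (fun l => ({ω | τ a ω = l} ∩ {ω | ∑ k ∈ s, τ k ω ≤ m - l})) := by
    intro x _ y _ hxy
    refine Set.disjoint_left.2 ?_
    rintro ω ⟨hx, -⟩ ⟨hy, -⟩
    exact hxy (hx.symm.trans hy)
  have hmeas : ∀ l ∈ (Icc 1 m : Finset ℕ),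
      MeasurableSet ({ω | τ a ω = l} ∩ {ω | ∑ k ∈ s, τ k ω ≤ m - l}) := by
    intro l _
    have h1 : MeasurableSet {ω | τ a ω = l} :=
      (hτm a) (measurableSet_singleton l)
    have hms : Measurable (fun ω => ∑ k ∈ s, τ k ω) :=
      Finset.measurable_sum _ fun k _ => hτm k
    exact h1.inter (hms measurableSet_Iic)
  rw [hset, measure_biUnion_finset hdisj hmeas,
    ENNReal.toReal_sum (fun l _ => measure_ne_top μ _)]
  refine Finset.sum_congr rfl fun l _ => ?_
  have := hI.measure_inter_preimage_eq_mul (μ := μ)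
    {l} (Set.Iic (m - l)) (measurableSet_singleton l) measurableSet_Iic
  have heq : (τ a ⁻¹' {l} : Set Ω) = {ω | τ a ω = l} := rfl
  have heq2 : ((fun ω => ∑ k ∈ s, τ k ω) ⁻¹' Set.Iic (m - l) : Set Ω)
      = {ω | ∑ k ∈ s, τ k ω ≤ m - l} := rfl
  rw [heq, heq2] at this
  rw [← ENNReal.toReal_mul, ← this]

end RenewalAux

namespace RenewalAux2

variable {Ω : Type*} [MeasurableSpace Ω]

/-- sums of τ over `Ico s (s+j)` for `s ≥ 2` all have the same distribution function -/
lemma shift_step (μ : Measure Ω) [IsProbabilityMeasure μ]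
    (τ : ℕ → Ω → ℕ) (hτm : ∀ i, Measurable (τ i)) (hτpos : ∀ i ω, 1 ≤ τ i ω)
    (hindep : iIndepFun τ μ)
    (hτid : ∀ i, 2 ≤ i → IdentDistrib (τ i) (τ 2) μ μ) :
    ∀ j s, 2 ≤ s → ∀ m,
      (μ {ω | ∑ k ∈ Ico s (s + j), τ k ω ≤ m}).toReal
        = (μ {ω | ∑ k ∈ Ico (s + 1) (s + 1 + j), τ k ω ≤ m}).toReal := by
  intro j
  induction j with
  | zero =>
    intro s hs m
    simp
  | succ j ih =>
    intro s hs m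
    have hins : ∀ t : ℕ, Ico t (t + (j + 1)) = insert t (Ico (t + 1) (t + 1 + j)) := by
      intro t; ext x; simp [Finset.mem_Ico]; omega
    have hnot : ∀ t : ℕ, t ∉ Ico (t + 1) (t + 1 + j) := by
      intro t; simp
    have hL : (μ {ω | ∑ k ∈ Ico s (s + (j + 1)), τ k ω ≤ m}).toReal
        = ∑ l ∈ Icc 1 m, (μ {ω | τ s ω = l}).toReal
            * (μ {ω | ∑ k ∈ Ico (s + 1) (s + 1 + j), τ k ω ≤ m - l}).toReal := by
      have := RenewalAux.decomp μ τ hτm hτpos hindep s (Ico (s + 1) (s + 1 + j)) (hnot s) m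
      have hseteq : {ω | ∑ k ∈ Ico s (s + (j + 1)), τ k ω ≤ m}
          = {ω | τ s ω + ∑ k ∈ Ico (s + 1) (s + 1 + j), τ k ω ≤ m} := by
        ext ω
        simp only [Set.mem_setOf_eq]
        rw [hins s, Finset.sum_insert (hnot s)]
      rw [hseteq, this]
    have hR : (μ {ω | ∑ k ∈ Ico (s + 1) (s + 1 + (j + 1)), τ k ω ≤ m}).toReal
        = ∑ l ∈ Icc 1 m, (μ {ω | τ (s + 1) ω = l}).toReal
            * (μ {ω | ∑ k ∈ Ico (s + 2) (s + 2 + j), τ k ω ≤ m - l}).toReal := by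
      have := RenewalAux.decomp μ τ hτm hτpos hindep (s + 1) (Ico (s + 2) (s + 2 + j))
        (hnot (s + 1)) m
      have h2 : Ico (s + 1) (s + 1 + (j + 1)) = insert (s + 1) (Ico (s + 2) (s + 2 + j)) := by
        have := hins (s + 1); simpa using this
      have hseteq : {ω | ∑ k ∈ Ico (s + 1) (s + 1 + (j + 1)), τ k ω ≤ m}
          = {ω | τ (s + 1) ω + ∑ k ∈ Ico (s + 2) (s + 2 + j), τ k ω ≤ m} := by
        ext ω
        simp only [Set.mem_setOf_eq]
        rw [h2, Finset.sum_insert (by simpa using hnot (s + 1))]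
      rw [hseteq, this]
    rw [hL, hR]
    refine Finset.sum_congr rfl fun l _ => ?_
    have hid : (μ {ω | τ s ω = l}).toReal = (μ {ω | τ (s + 1) ω = l}).toReal := by
      have h1 := (hτid s hs).measure_mem_eq (measurableSet_singleton l)
      have h2 := (hτid (s + 1) (by omega)).measure_mem_eq (measurableSet_singleton l)
      have : μ {ω | τ s ω = l} = μ {ω | τ (s + 1) ω = l} := by
        simpa [Set.preimage] using h1.trans h2.symm
      rw [this]
    rw [hid, ih (s + 1) (by omega) (m - l)]

lemma shift_eq (μ : Measure Ω) [IsProbabilityMeasure μ]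
    (τ : ℕ → Ω → ℕ) (hτm : ∀ i, Measurable (τ i)) (hτpos : ∀ i ω, 1 ≤ τ i ω)
    (hindep : iIndepFun τ μ)
    (hτid : ∀ i, 2 ≤ i → IdentDistrib (τ i) (τ 2) μ μ) :
    ∀ s, 2 ≤ s → ∀ j m,
      (μ {ω | ∑ k ∈ Ico s (s + j), τ k ω ≤ m}).toReal
        = (μ {ω | ∑ k ∈ Ico 2 (2 + j), τ k ω ≤ m}).toReal := by
  intro s hs
  induction s, hs using Nat.le_induction with
  | base => intro j m; rfl
  | succ s hs ih =>
    intro j m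
    rw [← ih j m]
    exact (shift_step μ τ hτm hτpos hindep hτid j s hs m).symm

end RenewalAux2

namespace RenewalAux3

variable {Ω : Type*}

lemma statS_mono (τ : ℕ → Ω → ℕ) (ω : Ω) {i j : ℕ} (h : i ≤ j) :
    statS τ i ω ≤ statS τ j ω := by
  unfold statS
  exact Finset.sum_le_sum_of_subset (f := fun k => τ k ω) (Finset.Icc_subset_Icc_right h)

lemma le_statS (τ : ℕ → Ω → ℕ) (hτpos : ∀ i ω, 1 ≤ τ i ω) (i : ℕ) (ω : Ω) :
    i ≤ statS τ i ω := by
  unfold statS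
  calc i = ∑ _k ∈ Finset.Icc 1 i, 1 := by simp
  _ ≤ ∑ k ∈ Finset.Icc 1 i, τ k ω := Finset.sum_le_sum fun k _ => hτpos k ω

lemma filter_eq_Icc (τ : ℕ → Ω → ℕ) (hτpos : ∀ i ω, 1 ≤ τ i ω) (u : ℕ) (ω : Ω) :
    (Finset.Icc 1 u).filter (fun i => statS τ i ω ≤ u) = Finset.Icc 1 (statN τ u ω) := by
  classical
  set A := (Finset.Icc 1 u).filter (fun i => statS τ i ω ≤ u) with hA
  have hN : statN τ u ω = A.card := rfl
  rcases A.eq_empty_or_nonempty with he | hne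
  · rw [hN, he]; simp
  · have hm := A.max'_mem hne
    set m := A.max' hne with hmdef
    have hmem : ∀ i ∈ A, 1 ≤ i ∧ i ≤ u ∧ statS τ i ω ≤ u := by
      intro i hi
      rw [hA, Finset.mem_filter, Finset.mem_Icc] at hi
      exact ⟨hi.1.1, hi.1.2, hi.2⟩
    have hAeq : A = Finset.Icc 1 m := by
      ext i
      rw [Finset.mem_Icc]
      constructor
      · intro hi
        exact ⟨(hmem i hi).1, A.le_max' i hi⟩
      · rintro ⟨h1, h2⟩
        obtain ⟨-, hmu, hms⟩ := hmem m hm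
        rw [hA, Finset.mem_filter, Finset.mem_Icc]
        exact ⟨⟨h1, le_trans h2 hmu⟩, le_trans (statS_mono τ ω h2) hms⟩
    have hcard : A.card = m := by rw [hAeq, Nat.card_Icc]; omega
    rw [hN, hcard, hAeq]

lemma statN_sq (τ : ℕ → Ω → ℕ) (hτpos : ∀ i ω, 1 ≤ τ i ω) (u : ℕ) (ω : Ω) :
    ((statN τ u ω : ℝ)) ^ 2
      = ∑ i ∈ Finset.Icc 1 u,
          Set.indicator {ω' | statS τ i ω' ≤ u} (fun _ => (2 * (i : ℝ) - 1)) ω := by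
  classical
  have h1 : ∀ i, Set.indicator {ω' | statS τ i ω' ≤ u} (fun _ => (2 * (i : ℝ) - 1)) ω
      = if statS τ i ω ≤ u then (2 * (i : ℝ) - 1) else 0 := by
    intro i
    by_cases h : statS τ i ω ≤ u <;> simp [Set.indicator_apply, h]
  simp only [h1]
  rw [← Finset.sum_filter, filter_eq_Icc τ hτpos u ω, RenewalAux.sq_sum_odd]

lemma ordS_eq (τ : ℕ → Ω → ℕ) (j : ℕ) (ω : Ω) :
    ordS τ j ω = ∑ k ∈ Finset.Ico 2 (2 + j), τ k ω := by
  unfold ordS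
  congr 1
  ext x; simp [Finset.mem_Icc, Finset.mem_Ico]; omega

lemma ordN_cast (τ : ℕ → Ω → ℕ) (n : ℕ) (ω : Ω) :
    (ordN τ n ω : ℝ)
      = ∑ j ∈ Finset.Icc 1 n,
          Set.indicator {ω' | ordS τ j ω' ≤ n} (fun _ => (1 : ℝ)) ω := by
  classical
  have h1 : ∀ j, Set.indicator {ω' | ordS τ j ω' ≤ n} (fun _ => (1 : ℝ)) ω
      = if ordS τ j ω ≤ n then (1 : ℝ) else 0 := by
    intro j
    by_cases h : ordS τ j ω ≤ n <;> simp [Set.indicator_apply, h]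
  simp only [h1]
  rw [← Finset.sum_filter]
  unfold ordN
  rw [Finset.sum_const]
  simp

end RenewalAux3

namespace RenewalAux4


/-- Reindexing: `∑_{k=1}^{u} φ(u-k) = ∑_{m=0}^{u-1} φ(m)`. -/
lemma sum_rev (φ : ℕ → ℝ) (u : ℕ) :
    ∑ k ∈ Icc 1 u, φ (u - k) = ∑ m ∈ range u, φ m := by
  refine Finset.sum_bij' (fun k _ => u - k) (fun m _ => u - m) ?_ ?_ ?_ ?_ ?_
  · intro k hk; simp only [mem_Icc] at hk; simp only [mem_range]; omega
  · intro m hm; simp only [mem_range] at hm; simp only [mem_Icc]; omega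
  · intro k hk; simp only [mem_Icc] at hk; omega
  · intro m hm; simp only [mem_range] at hm; omega
  · intro k _; rfl

/-- Reindexing: `∑_{i=2}^{m+1} ψ(i) = ∑_{j=1}^{m} ψ(j+1)`. -/
lemma sum_shift (ψ : ℕ → ℝ) (m : ℕ) :
    ∑ i ∈ Icc 2 (m + 1), ψ i = ∑ j ∈ Icc 1 m, ψ (j + 1) := by
  refine Finset.sum_bij' (fun i _ => i - 1) (fun j _ => j + 1) ?_ ?_ ?_ ?_ ?_
  · intro i hi; simp only [mem_Icc] at hi ⊢; omega
  · intro j hj; simp only [mem_Icc] at hj ⊢; omega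
  · intro i hi; simp only [mem_Icc] at hi; omega
  · intro j hj; simp only [mem_Icc] at hj; omega
  · intro i hi; simp only [mem_Icc] at hi
    congr 1; omega

/-- Truncation: for `v ≥ m+1`,
`∑_{i=1}^{v} (2i-1) q_{i-1}(m) = 1 + ∑_{j=1}^{m} (2j+1) q_j(m)`. -/
lemma trunc (q : ℕ → ℕ → ℝ) (h0 : ∀ m, q 0 m = 1) (hz : ∀ j m, m < j → q j m = 0)
    (m v : ℕ) (hv : m + 1 ≤ v) :
    ∑ i ∈ Icc 1 v, (2 * (i : ℝ) - 1) * q (i - 1) m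
      = 1 + ∑ j ∈ Icc 1 m, (2 * (j : ℝ) + 1) * q j m := by
  have hsub : Icc 1 (m + 1) ⊆ Icc 1 v := Finset.Icc_subset_Icc_right hv
  have hvan : ∀ i ∈ Icc 1 v, i ∉ Icc 1 (m + 1) → (2 * (i : ℝ) - 1) * q (i - 1) m = 0 := by
    intro i hi hni
    simp only [mem_Icc] at hi hni
    rw [hz (i - 1) m (by omega)]; ring
  rw [← Finset.sum_subset hsub hvan]
  have hins : Icc 1 (m + 1) = insert 1 (Icc 2 (m + 1)) := by
    ext x; simp only [mem_Icc, mem_insert]; omega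
  rw [hins, Finset.sum_insert (by simp)]
  have h1 : (2 * ((1 : ℕ) : ℝ) - 1) * q (1 - 1) m = 1 := by
    norm_num [h0]
  rw [h1, sum_shift (fun i => (2 * (i : ℝ) - 1) * q (i - 1) m) m]
  congr 1
  refine Finset.sum_congr rfl fun j hj => ?_
  simp only [mem_Icc] at hj
  have : (j + 1) - 1 = j := by omega
  rw [this]
  push_cast; ring

/-- Swap of the double convolution sums via a sigma-type bijection. -/
lemma conv_swap (c d : ℕ → ℝ) (u : ℕ) :
    ∑ n ∈ range u, ∑ l ∈ Icc 1 n, c l * d (n - l)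
      = ∑ m ∈ range u, (∑ l ∈ Icc 1 (u - 1 - m), c l) * d m := by
  have hR : ∀ m, (∑ l ∈ Icc 1 (u - 1 - m), c l) * d m
      = ∑ l ∈ Icc 1 (u - 1 - m), c l * d m := by
    intro m; rw [Finset.sum_mul]
  simp only [hR]
  rw [Finset.sum_sigma' (range u) (fun n => Icc 1 n) (fun n l => c l * d (n - l)),
    Finset.sum_sigma' (range u) (fun m => Icc 1 (u - 1 - m)) (fun m l => c l * d m)]
  refine Finset.sum_bij' (fun x _ => (⟨x.1 - x.2, x.2⟩ : Σ _ : ℕ, ℕ))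
    (fun y _ => (⟨y.1 + y.2, y.2⟩ : Σ _ : ℕ, ℕ)) ?_ ?_ ?_ ?_ ?_
  · rintro ⟨n, l⟩ hx
    simp only [Finset.mem_sigma, mem_range, mem_Icc] at hx ⊢
    omega
  · rintro ⟨m, l⟩ hy
    simp only [Finset.mem_sigma, mem_range, mem_Icc] at hy ⊢
    omega
  · rintro ⟨n, l⟩ hx
    simp only [Finset.mem_sigma, mem_range, mem_Icc] at hx
    simp only [Sigma.mk.inj_iff, heq_eq_eq]
    exact ⟨by omega, trivial⟩
  · rintro ⟨m, l⟩ hy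
    simp only [Finset.mem_sigma, mem_range, mem_Icc] at hy
    simp only [Sigma.mk.inj_iff, heq_eq_eq]
    exact ⟨by omega, trivial⟩
  · rintro ⟨n, l⟩ hx
    rfl

end RenewalAux4

namespace RenewalAux4

def gfun (q : ℕ → ℕ → ℝ) (m : ℕ) : ℝ := 1 + ∑ j ∈ Icc 1 m, (2 * (j : ℝ) + 1) * q j m
def afun (q : ℕ → ℕ → ℝ) (n : ℕ) : ℝ := ∑ j ∈ Icc 1 n, (2 * (j : ℝ) - 1) * q j n
def Hfun (q : ℕ → ℕ → ℝ) (n : ℕ) : ℝ := ∑ j ∈ Icc 1 n, q j n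

lemma gfun_expand (q : ℕ → ℕ → ℝ) (m : ℕ) :
    gfun q m = 1 + afun q m + 2 * Hfun q m := by
  unfold gfun afun Hfun
  have h : ∑ j ∈ Icc 1 m, (2 * (j : ℝ) + 1) * q j m
      = ∑ j ∈ Icc 1 m, ((2 * (j : ℝ) - 1) * q j m + 2 * q j m) :=
    Finset.sum_congr rfl fun j _ => by ring
  rw [h, Finset.sum_add_distrib, Finset.mul_sum]
  ring

lemma afun_eq (q : ℕ → ℕ → ℝ) (f : ℕ → ℝ)
    (h0 : ∀ m, q 0 m = 1)
    (hrec : ∀ j m, q (j + 1) m = ∑ l ∈ Icc 1 m, f l * q j (m - l))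
    (hz : ∀ j m, m < j → q j m = 0) (n : ℕ) :
    afun q n = ∑ l ∈ Icc 1 n, f l * gfun q (n - l) := by
  rcases Nat.eq_zero_or_pos n with rfl | hn
  · simp [afun]
  unfold afun
  calc ∑ j ∈ Icc 1 n, (2 * (j : ℝ) - 1) * q j n
      = ∑ j ∈ Icc 1 n, ∑ l ∈ Icc 1 n, (2 * (j : ℝ) - 1) * (f l * q (j - 1) (n - l)) := by
        refine Finset.sum_congr rfl fun j hj => ?_
        simp only [mem_Icc] at hj
        rw [← Finset.mul_sum]
        congr 1
        obtain ⟨j', rfl⟩ : ∃ j', j = j' + 1 := ⟨j - 1, by omega⟩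
        simpa using hrec j' n
    _ = ∑ l ∈ Icc 1 n, ∑ j ∈ Icc 1 n, (2 * (j : ℝ) - 1) * (f l * q (j - 1) (n - l)) :=
        Finset.sum_comm
    _ = ∑ l ∈ Icc 1 n, f l * ∑ j ∈ Icc 1 n, (2 * (j : ℝ) - 1) * q (j - 1) (n - l) := by
        refine Finset.sum_congr rfl fun l _ => ?_
        rw [Finset.mul_sum]
        exact Finset.sum_congr rfl fun j _ => by ring
    _ = ∑ l ∈ Icc 1 n, f l * gfun q (n - l) := by
        refine Finset.sum_congr rfl fun l hl => ?_
        simp only [mem_Icc] at hl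
        rw [trunc q h0 hz (n - l) n (by omega)]
        rfl

lemma algebra_key (q : ℕ → ℕ → ℝ) (f r : ℕ → ℝ)
    (h0 : ∀ m, q 0 m = 1)
    (hrec : ∀ j m, q (j + 1) m = ∑ l ∈ Icc 1 m, f l * q j (m - l))
    (hz : ∀ j m, m < j → q j m = 0)
    (hr : ∀ k, 1 ≤ k → r k = 1 - ∑ l ∈ Icc 1 (k - 1), f l)
    (u : ℕ) (hu : 1 ≤ u) :
    ∑ i ∈ Icc 1 u, (2 * (i : ℝ) - 1) * ∑ k ∈ Icc 1 u, r k * q (i - 1) (u - k)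
      = 2 * (∑ n ∈ Icc 1 (u - 1), ∑ j ∈ Icc 1 n, q j n) + u := by
  have stepB : ∑ i ∈ Icc 1 u, (2 * (i : ℝ) - 1) * ∑ k ∈ Icc 1 u, r k * q (i - 1) (u - k)
      = ∑ k ∈ Icc 1 u, r k * gfun q (u - k) := by
    calc ∑ i ∈ Icc 1 u, (2 * (i : ℝ) - 1) * ∑ k ∈ Icc 1 u, r k * q (i - 1) (u - k)
        = ∑ i ∈ Icc 1 u, ∑ k ∈ Icc 1 u, (2 * (i : ℝ) - 1) * (r k * q (i - 1) (u - k)) := by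
          exact Finset.sum_congr rfl fun i _ => Finset.mul_sum _ _ _
      _ = ∑ k ∈ Icc 1 u, ∑ i ∈ Icc 1 u, (2 * (i : ℝ) - 1) * (r k * q (i - 1) (u - k)) :=
          Finset.sum_comm
      _ = ∑ k ∈ Icc 1 u, r k * ∑ i ∈ Icc 1 u, (2 * (i : ℝ) - 1) * q (i - 1) (u - k) := by
          refine Finset.sum_congr rfl fun k _ => ?_
          rw [Finset.mul_sum]
          exact Finset.sum_congr rfl fun i _ => by ring
      _ = ∑ k ∈ Icc 1 u, r k * gfun q (u - k) := by
          refine Finset.sum_congr rfl fun k hk => ?_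
          simp only [mem_Icc] at hk
          rw [trunc q h0 hz (u - k) u (by omega)]
          rfl
  have stepRev : ∑ k ∈ Icc 1 u, r k * gfun q (u - k)
      = ∑ m ∈ range u, r (u - m) * gfun q m := by
    rw [← sum_rev (fun m => r (u - m) * gfun q m) u]
    refine Finset.sum_congr rfl fun k hk => ?_
    simp only [mem_Icc] at hk
    have : u - (u - k) = k := by omega
    rw [this]
  have stepSplit : ∑ m ∈ range u, r (u - m) * gfun q m
      = ∑ m ∈ range u, gfun q m
        - ∑ m ∈ range u, (∑ l ∈ Icc 1 (u - 1 - m), f l) * gfun q m := by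
    rw [← Finset.sum_sub_distrib]
    refine Finset.sum_congr rfl fun m hm => ?_
    simp only [mem_range] at hm
    rw [hr (u - m) (by omega)]
    have : u - m - 1 = u - 1 - m := by omega
    rw [this]
    ring
  have stepG : ∑ m ∈ range u, (∑ l ∈ Icc 1 (u - 1 - m), f l) * gfun q m
      = ∑ n ∈ range u, afun q n := by
    rw [← conv_swap f (gfun q) u]
    exact Finset.sum_congr rfl fun n _ => (afun_eq q f h0 hrec hz n).symm
  have stepH : ∑ m ∈ range u, Hfun q m = ∑ n ∈ Icc 1 (u - 1), Hfun q n := by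
    refine (Finset.sum_subset ?_ ?_).symm
    · intro x hx; simp only [mem_Icc] at hx; simp only [mem_range]; omega
    · intro m hm hnm
      simp only [mem_range] at hm
      simp only [mem_Icc] at hnm
      have : m = 0 := by omega
      subst this
      simp [Hfun]
  have stepSum : ∑ m ∈ range u, gfun q m
      = (u : ℝ) + ∑ m ∈ range u, afun q m + 2 * ∑ m ∈ range u, Hfun q m := by
    calc ∑ m ∈ range u, gfun q m
        = ∑ m ∈ range u, (1 + afun q m + 2 * Hfun q m) :=
          Finset.sum_congr rfl fun m _ => gfun_expand q m
      _ = (∑ _m ∈ range u, (1 : ℝ)) + ∑ m ∈ range u, afun q m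
            + ∑ m ∈ range u, 2 * Hfun q m := by
          rw [← Finset.sum_add_distrib, ← Finset.sum_add_distrib]
      _ = (u : ℝ) + ∑ m ∈ range u, afun q m + 2 * ∑ m ∈ range u, Hfun q m := by
          rw [Finset.sum_const, card_range, ← Finset.mul_sum]
          simp
  rw [stepB, stepRev, stepSplit, stepG, stepSum, stepH]
  have : ∑ n ∈ Icc 1 (u - 1), ∑ j ∈ Icc 1 n, q j n = ∑ n ∈ Icc 1 (u - 1), Hfun q n := rfl
  rw [this]
  ring

end RenewalAux4

namespace RenewalAux5

variable {Ω : Type*} [MeasurableSpace Ω]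

lemma cdf_sum (μ : Measure Ω) [IsProbabilityMeasure μ] (ξ : Ω → ℕ)
    (hm : Measurable ξ) (hpos : ∀ ω, 1 ≤ ξ ω) (k : ℕ) :
    (μ {ω | ξ ω ≤ k}).toReal = ∑ l ∈ Finset.Icc 1 k, (μ {ω | ξ ω = l}).toReal := by
  classical
  have hset : {ω | ξ ω ≤ k} = ⋃ l ∈ (Finset.Icc 1 k : Finset ℕ), {ω | ξ ω = l} := by
    ext ω
    simp only [Set.mem_setOf_eq, Set.mem_iUnion, Finset.mem_Icc]
    constructor
    · intro h; exact ⟨ξ ω, ⟨hpos ω, h⟩, rfl⟩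
    · rintro ⟨l, ⟨h1, h2⟩, rfl⟩; omega
  rw [hset, measure_biUnion_finset ?hd ?hme, ENNReal.toReal_sum (fun l _ => measure_ne_top μ _)]
  case hd =>
    intro x _ y _ hxy
    refine Set.disjoint_left.2 ?_
    rintro ω hx hy
    exact hxy (hx.symm.trans hy)
  case hme =>
    intro l _
    exact hm (measurableSet_singleton l)

lemma tail_eq (μ : Measure Ω) [IsProbabilityMeasure μ] (ξ : Ω → ℕ)
    (hm : Measurable ξ) (hpos : ∀ ω, 1 ≤ ξ ω) (k : ℕ) (hk : 1 ≤ k) :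
    (μ {ω | k ≤ ξ ω}).toReal = 1 - ∑ l ∈ Finset.Icc 1 (k - 1), (μ {ω | ξ ω = l}).toReal := by
  have hset : {ω | k ≤ ξ ω} = {ω | ξ ω ≤ k - 1}ᶜ := by
    ext ω
    simp only [Set.mem_setOf_eq, Set.mem_compl_iff]
    omega
  have hmeas : MeasurableSet {ω | ξ ω ≤ k - 1} := hm measurableSet_Iic
  rw [hset, prob_compl_eq_one_sub hmeas,
    ENNReal.toReal_sub_of_le prob_le_one ENNReal.one_ne_top]
  rw [ENNReal.toReal_one, cdf_sum μ ξ hm hpos (k - 1)]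

lemma integral_statN_sq (μ : Measure Ω) [IsProbabilityMeasure μ]
    (τ : ℕ → Ω → ℕ) (hτm : ∀ i, Measurable (τ i)) (hτpos : ∀ i ω, 1 ≤ τ i ω) (u : ℕ) :
    ∫ ω, (statN τ u ω : ℝ) ^ 2 ∂μ
      = ∑ i ∈ Finset.Icc 1 u, (2 * (i : ℝ) - 1) * (μ {ω | statS τ i ω ≤ u}).toReal := by
  have hmeas : ∀ i, MeasurableSet {ω | statS τ i ω ≤ u} := by
    intro i
    have hsum : Measurable (statS τ i) := Finset.measurable_sum _ fun k _ => hτm k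
    exact hsum measurableSet_Iic
  have hrw : (fun ω => (statN τ u ω : ℝ) ^ 2)
      = fun ω => ∑ i ∈ Finset.Icc 1 u,
          Set.indicator {ω' | statS τ i ω' ≤ u} (fun _ => (2 * (i : ℝ) - 1)) ω :=
    funext (RenewalAux3.statN_sq τ hτpos u)
  rw [hrw, integral_finset_sum _ (fun i _ => (integrable_const _).indicator (hmeas i))]
  refine Finset.sum_congr rfl fun i _ => ?_
  rw [integral_indicator_const _ (hmeas i), smul_eq_mul, mul_comm]
  rfl

lemma ordH_eq (μ : Measure Ω) [IsProbabilityMeasure μ]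
    (τ : ℕ → Ω → ℕ) (hτm : ∀ i, Measurable (τ i)) (n : ℕ) :
    ordH μ τ n = ∑ j ∈ Finset.Icc 1 n, (μ {ω | ordS τ j ω ≤ n}).toReal := by
  have hmeas : ∀ j, MeasurableSet {ω | ordS τ j ω ≤ n} := by
    intro j
    have hsum : Measurable (ordS τ j) := Finset.measurable_sum _ fun k _ => hτm k
    exact hsum measurableSet_Iic
  have hrw : (fun ω => (ordN τ n ω : ℝ))
      = fun ω => ∑ j ∈ Finset.Icc 1 n,
          Set.indicator {ω' | ordS τ j ω' ≤ n} (fun _ => (1 : ℝ)) ω :=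
    funext (RenewalAux3.ordN_cast τ n)
  unfold ordH
  rw [hrw, integral_finset_sum _ (fun j _ => (integrable_const _).indicator (hmeas j))]
  refine Finset.sum_congr rfl fun j _ => ?_
  rw [integral_indicator_const _ (hmeas j), smul_eq_mul, mul_comm, one_mul]
  rfl

end RenewalAux5

/-- For the stationary renewal counting process `𝒩`, for every `u ≥ 1`,
`E[𝒩 u ^ 2] = (2 Σ_{i=1}^{u−1} H i + u) / E τ₂`,
where `H` is the renewal function of the corresponding ordinary renewal process. -/
theorem statN_second_moment
    {Ω : Type*} [MeasurableSpace Ω] (μ : Measure Ω) [IsProbabilityMeasure μ]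
    (τ : ℕ → Ω → ℕ)
    -- measurability and positivity
    (hτm : ∀ i, Measurable (τ i)) (hτpos : ∀ i ω, 1 ≤ τ i ω)
    -- the delay τ 1 = τ̃₁ and the inter-renewal times τ 2, τ 3, … are mutually independent
    (hindep : iIndepFun τ μ)
    -- τ 2, τ 3, … are identically distributed
    (hτid : ∀ i, 2 ≤ i → IdentDistrib (τ i) (τ 2) μ μ)
    -- finite mean
    (hτint : Integrable (fun ω => (τ 2 ω : ℝ)) μ)
    -- the delay has the stationary distribution π_k = P(τ₂ ≥ k) / E τ₂
    (hπ : ∀ k : ℕ, 1 ≤ k →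
      μ {ω | τ 1 ω = k} = μ {ω | k ≤ τ 2 ω} / ENNReal.ofReal (∫ ω, (τ 2 ω : ℝ) ∂μ))
    : ∀ u : ℕ, 1 ≤ u →
      ∫ ω, (statN τ u ω : ℝ) ^ 2 ∂μ =
        (2 * (∑ i ∈ Finset.Icc 1 (u - 1), ordH μ τ i) + u) / ∫ ω, (τ 2 ω : ℝ) ∂μ := by
  intro u hu
  have hMnn : (0 : ℝ) ≤ ∫ ω, (τ 2 ω : ℝ) ∂μ := integral_nonneg fun ω => by positivity
  -- the four hypotheses of the combinatorial key lemma
  have h0 : ∀ m, (μ {ω | ∑ k ∈ Ico 2 (2 + 0), τ k ω ≤ m}).toReal = 1 := by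
    intro m
    have hset : {ω | ∑ k ∈ Ico 2 (2 + 0), τ k ω ≤ m} = Set.univ := by
      ext ω; simp
    rw [hset]; simp
  have hrec : ∀ j m, (μ {ω | ∑ k ∈ Ico 2 (2 + (j + 1)), τ k ω ≤ m}).toReal
      = ∑ l ∈ Icc 1 m, (μ {ω | τ 2 ω = l}).toReal
          * (μ {ω | ∑ k ∈ Ico 2 (2 + j), τ k ω ≤ m - l}).toReal := by
    intro j m
    have hnot : (2 : ℕ) ∉ Ico 3 (3 + j) := by simp
    have hseteq : {ω | ∑ k ∈ Ico 2 (2 + (j + 1)), τ k ω ≤ m}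
        = {ω | τ 2 ω + ∑ k ∈ Ico 3 (3 + j), τ k ω ≤ m} := by
      ext ω; simp only [Set.mem_setOf_eq]
      have hins : Ico 2 (2 + (j + 1)) = insert 2 (Ico 3 (3 + j)) := by
        ext x; simp only [Finset.mem_Ico, Finset.mem_insert]; omega
      rw [hins, Finset.sum_insert hnot]
    rw [hseteq, RenewalAux.decomp μ τ hτm hτpos hindep 2 (Ico 3 (3 + j)) hnot m]
    refine Finset.sum_congr rfl fun l _ => ?_
    congr 1
    exact RenewalAux2.shift_eq μ τ hτm hτpos hindep hτid 3 (by omega) j (m - l)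
  have hz : ∀ j m, m < j → (μ {ω | ∑ k ∈ Ico 2 (2 + j), τ k ω ≤ m}).toReal = 0 := by
    intro j m hmj
    have hempty : {ω | ∑ k ∈ Ico 2 (2 + j), τ k ω ≤ m} = ∅ := by
      ext ω
      simp only [Set.mem_setOf_eq, Set.mem_empty_iff_false, iff_false, not_le]
      have hge : j ≤ ∑ k ∈ Ico 2 (2 + j), τ k ω := by
        calc j = ∑ _k ∈ Ico 2 (2 + j), 1 := by simp
        _ ≤ _ := Finset.sum_le_sum fun k _ => hτpos k ω
      omega
    rw [hempty]; simp
  have hr : ∀ k, 1 ≤ k → (μ {ω | k ≤ τ 2 ω}).toReal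
      = 1 - ∑ l ∈ Icc 1 (k - 1), (μ {ω | τ 2 ω = l}).toReal :=
    fun k hk => RenewalAux5.tail_eq μ (τ 2) (hτm 2) (fun ω => hτpos 2 ω) k hk
  have key := RenewalAux4.algebra_key
    (fun j m => (μ {ω | ∑ k ∈ Ico 2 (2 + j), τ k ω ≤ m}).toReal)
    (fun l => (μ {ω | τ 2 ω = l}).toReal)
    (fun k => (μ {ω | k ≤ τ 2 ω}).toReal)
    h0 hrec hz hr u hu
  -- decompose each p_i over the value of the delay
  have hdec : ∀ i ∈ Icc 1 u, (μ {ω | statS τ i ω ≤ u}).toReal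
      = ∑ k ∈ Icc 1 u,
          ((μ {ω | k ≤ τ 2 ω}).toReal / ∫ ω, (τ 2 ω : ℝ) ∂μ)
            * (μ {ω | ∑ k' ∈ Ico 2 (2 + (i - 1)), τ k' ω ≤ u - k}).toReal := by
    intro i hi
    simp only [mem_Icc] at hi
    have hnot : (1 : ℕ) ∉ Ico 2 (i + 1) := by simp
    have hseteq : {ω | statS τ i ω ≤ u}
        = {ω | τ 1 ω + ∑ k ∈ Ico 2 (i + 1), τ k ω ≤ u} := by
      ext ω; simp only [Set.mem_setOf_eq]
      unfold statS
      have hins : Icc 1 i = insert 1 (Ico 2 (i + 1)) := by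
        ext x; simp only [Finset.mem_Icc, Finset.mem_insert, Finset.mem_Ico]; omega
      rw [hins, Finset.sum_insert hnot]
    rw [hseteq, RenewalAux.decomp μ τ hτm hτpos hindep 1 (Ico 2 (i + 1)) hnot u]
    refine Finset.sum_congr rfl fun k hk => ?_
    simp only [mem_Icc] at hk
    congr 1
    · rw [hπ k hk.1, ENNReal.toReal_div, ENNReal.toReal_ofReal hMnn]
    · have h21 : 2 + (i - 1) = i + 1 := by omega
      rw [h21]
  rw [RenewalAux5.integral_statN_sq μ τ hτm hτpos u]
  have hstep : ∑ i ∈ Icc 1 u, (2 * (i : ℝ) - 1) * (μ {ω | statS τ i ω ≤ u}).toReal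
      = (∑ i ∈ Icc 1 u, (2 * (i : ℝ) - 1) * ∑ k ∈ Icc 1 u,
          (μ {ω | k ≤ τ 2 ω}).toReal
            * (μ {ω | ∑ k' ∈ Ico 2 (2 + (i - 1)), τ k' ω ≤ u - k}).toReal)
        / ∫ ω, (τ 2 ω : ℝ) ∂μ := by
    rw [Finset.sum_div]
    refine Finset.sum_congr rfl fun i hi => ?_
    rw [hdec i hi]
    simp only [div_mul_eq_mul_div]
    rw [← Finset.sum_div, ← mul_div_assoc]
  rw [hstep, key]
  have hHeq : ∑ i ∈ Icc 1 (u - 1), ordH μ τ i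
      = ∑ n ∈ Icc 1 (u - 1), ∑ j ∈ Icc 1 n,
          (μ {ω | ∑ k ∈ Ico 2 (2 + j), τ k ω ≤ n}).toReal := by
    refine Finset.sum_congr rfl fun n _ => ?_
    rw [RenewalAux5.ordH_eq μ τ hτm n]
    refine Finset.sum_congr rfl fun j _ => ?_
    have hset : {ω | ordS τ j ω ≤ n} = {ω | ∑ k ∈ Ico 2 (2 + j), τ k ω ≤ n} := by
      ext ω; simp only [Set.mem_setOf_eq, RenewalAux3.ordS_eq]
    rw [hset]
  rw [hHeq]
end
end

section
/- For the stationary renewal counting process 𝒩, for all integers 1 ≤ u < v, E[𝒩_u·𝒩_v] = (E[τ_2])^{−1}·(Σ_{i=1}^{u−1} H(i) + u + Σ_{i=v−u}^{v−1} H(i)), where H is the renewal function of the corresponding ordinary renewal process. -/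
open MeasureTheory ProbabilityTheory Finset

noncomputable section

variable {Ω : Type*}

namespace RenewalAux
open scoped Classical
variable {Ω : Type*}

/-- tuple of `τ` over indices `b+1, …, b+m`. -/
def vec (τ : ℕ → Ω → ℕ) (b m : ℕ) (ω : Ω) : Fin m → ℕ := fun r => τ (b + 1 + (r : ℕ)) ω

/-- hit event: the partial sums of `τ (b+1), τ (b+2), …` reach exactly `m`. -/
def hits (τ : ℕ → Ω → ℕ) (b m : ℕ) : Set Ω :=
  {ω | ∃ l ∈ Finset.Icc 1 m, ∑ k ∈ Finset.Ioc b (b + l), τ k ω = m}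

def hitPat (m : ℕ) : Set (Fin m → ℕ) :=
  {x | ∃ l ∈ Finset.Icc 1 m, (∑ r ∈ Finset.range l, if h : r < m then x ⟨r, h⟩ else 0) = m}

/-- renewal event of the stationary process at time `j`. -/
def revSet (τ : ℕ → Ω → ℕ) (j : ℕ) : Set Ω := {ω | ∃ i ∈ Finset.Icc 1 j, statS τ i ω = j}

lemma sum_Ioc_shift {M : Type*} [AddCommMonoid M] (g : ℕ → M) (b m : ℕ) :
    ∑ k ∈ Finset.Ioc b (b + m), g k = ∑ r ∈ Finset.range m, g (b + 1 + r) := by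
  rw [← Finset.Icc_add_one_left_eq_Ioc, ← Finset.Ico_add_one_right_eq_Icc, Finset.sum_Ico_eq_sum_range]
  have h : b + m + 1 - (b + 1) = m := by omega
  rw [h]

lemma statS_Ioc (τ : ℕ → Ω → ℕ) (i : ℕ) (ω : Ω) :
    statS τ i ω = ∑ k ∈ Finset.Ioc 0 i, τ k ω := by
  rw [statS, ← Finset.Icc_add_one_left_eq_Ioc]
  rfl

lemma ordS_Ioc (τ : ℕ → Ω → ℕ) (l : ℕ) (ω : Ω) :
    ordS τ l ω = ∑ k ∈ Finset.Ioc 1 (1 + l), τ k ω := by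
  rw [ordS, ← Finset.Icc_add_one_left_eq_Ioc, Nat.add_comm 1 l]
  rfl

lemma statS_add (τ : ℕ → Ω → ℕ) (i l : ℕ) (ω : Ω) :
    statS τ (i + l) ω = statS τ i ω + ∑ k ∈ Finset.Ioc i (i + l), τ k ω := by
  rw [statS_Ioc, statS_Ioc, Finset.sum_Ioc_consecutive _ (Nat.zero_le i) (Nat.le_add_right i l)]

lemma card_le_sum_Ioc (τ : ℕ → Ω → ℕ) (hτpos : ∀ i ω, 1 ≤ τ i ω) (a b : ℕ) (ω : Ω) :
    b - a ≤ ∑ k ∈ Finset.Ioc a b, τ k ω := by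
  calc b - a = ∑ k ∈ Finset.Ioc a b, 1 := by simp [Nat.card_Ioc]
  _ ≤ _ := Finset.sum_le_sum fun k _ => hτpos k ω

lemma statS_strictMono (τ : ℕ → Ω → ℕ) (hτpos : ∀ i ω, 1 ≤ τ i ω) (ω : Ω) :
    StrictMono (fun i => statS τ i ω) := by
  apply strictMono_nat_of_lt_succ
  intro i
  have h := statS_add τ i 1 ω
  have h2 : 1 ≤ ∑ k ∈ Finset.Ioc i (i + 1), τ k ω := by
    simpa using card_le_sum_Ioc τ hτpos i (i + 1) ω
  omega

lemma le_statS (τ : ℕ → Ω → ℕ) (hτpos : ∀ i ω, 1 ≤ τ i ω) (i : ℕ) (ω : Ω) :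
    i ≤ statS τ i ω := by
  have := card_le_sum_Ioc τ hτpos 0 i ω
  simpa [statS_Ioc] using this

lemma ordS_strictMono (τ : ℕ → Ω → ℕ) (hτpos : ∀ i ω, 1 ≤ τ i ω) (ω : Ω) :
    StrictMono (fun l => ordS τ l ω) := by
  apply strictMono_nat_of_lt_succ
  intro l
  simp only [ordS_Ioc]
  have h : 1 + (l + 1) = (1 + l) + 1 := by omega
  rw [h, Finset.sum_Ioc_succ_top (by omega)]
  have h2 : 1 ≤ τ (1 + l + 1) ω := hτpos _ ω
  omega

lemma le_ordS (τ : ℕ → Ω → ℕ) (hτpos : ∀ i ω, 1 ≤ τ i ω) (l : ℕ) (ω : Ω) :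
    l ≤ ordS τ l ω := by
  have := card_le_sum_Ioc τ hτpos 1 (1 + l) ω
  rw [← ordS_Ioc] at this
  omega


variable {Ω : Type*}

lemma count_renewals {s : ℕ → ℕ} (hmono : StrictMono s) (hle : ∀ i, i ≤ s i) (n : ℕ) :
    ((Finset.Icc 1 n).filter fun i => s i ≤ n).card
      = ((Finset.Icc 1 n).filter fun m => ∃ l ∈ Finset.Icc 1 m, s l = m).card := by
  apply Finset.card_bij (fun i _ => s i)
  · intro i hi
    simp only [Finset.mem_filter, Finset.mem_Icc] at hi ⊢
    exact ⟨⟨le_trans hi.1.1 (hle i), hi.2⟩, i, ⟨hi.1.1, hle i⟩, rfl⟩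
  · intro a _ b _ h
    exact hmono.injective h
  · intro m hm
    simp only [Finset.mem_filter, Finset.mem_Icc] at hm
    obtain ⟨⟨_, h2⟩, l, hl, hs⟩ := hm
    refine ⟨l, ?_, hs⟩
    simp only [Finset.mem_filter, Finset.mem_Icc]
    exact ⟨⟨hl.1, le_trans hl.2 h2⟩, by omega⟩

lemma statN_eq_s15 (τ : ℕ → Ω → ℕ) (hτpos : ∀ i ω, 1 ≤ τ i ω) (n : ℕ) (ω : Ω) :
    statN τ n ω = ∑ m ∈ Finset.Icc 1 n, if ω ∈ revSet τ m then 1 else 0 := by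
  rw [Finset.sum_boole, Nat.cast_id, statN,
    count_renewals (statS_strictMono τ hτpos ω) (fun i => le_statS τ hτpos i ω) n]
  congr 1

lemma ordN_eq_s15 (τ : ℕ → Ω → ℕ) (hτpos : ∀ i ω, 1 ≤ τ i ω) (n : ℕ) (ω : Ω) :
    ordN τ n ω = ∑ m ∈ Finset.Icc 1 n, if ω ∈ hits τ 1 m then 1 else 0 := by
  rw [Finset.sum_boole, Nat.cast_id, ordN,
    count_renewals (ordS_strictMono τ hτpos ω) (fun i => le_ordS τ hτpos i ω) n]
  congr 1
  ext m
  simp [hits, ordS_Ioc]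

lemma measurable_sum_Ioc [MeasurableSpace Ω] (τ : ℕ → Ω → ℕ) (hτm : ∀ i, Measurable (τ i))
    (a b : ℕ) : Measurable (fun ω => ∑ k ∈ Finset.Ioc a b, τ k ω) :=
  Finset.measurable_sum _ (fun k _ => hτm k)

lemma measurable_statS [MeasurableSpace Ω] (τ : ℕ → Ω → ℕ) (hτm : ∀ i, Measurable (τ i))
    (i : ℕ) : Measurable (fun ω => statS τ i ω) :=
  Finset.measurable_sum _ (fun k _ => hτm k)

lemma measurableSet_revSet [MeasurableSpace Ω] (τ : ℕ → Ω → ℕ) (hτm : ∀ i, Measurable (τ i))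
    (j : ℕ) : MeasurableSet (revSet τ j) := by
  have h : revSet τ j = ⋃ i ∈ (Finset.Icc 1 j : Finset ℕ), (fun ω => statS τ i ω) ⁻¹' {j} := by
    ext ω; simp [revSet]
  rw [h]
  exact (Finset.Icc 1 j).measurableSet_biUnion
    (fun i _ => (measurable_statS τ hτm i) (measurableSet_singleton _))

lemma measurableSet_hits [MeasurableSpace Ω] (τ : ℕ → Ω → ℕ) (hτm : ∀ i, Measurable (τ i))
    (b m : ℕ) : MeasurableSet (hits τ b m) := by
  have h : hits τ b m
      = ⋃ l ∈ (Finset.Icc 1 m : Finset ℕ), (fun ω => ∑ k ∈ Finset.Ioc b (b + l), τ k ω) ⁻¹' {m} := by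
    ext ω; simp [hits]
  rw [h]
  exact (Finset.Icc 1 m).measurableSet_biUnion
    (fun l _ => (measurable_sum_Ioc τ hτm b (b + l)) (measurableSet_singleton _))

lemma prod_Ioc_shift {M : Type*} [CommMonoid M] (g : ℕ → M) (b m : ℕ) :
    ∏ k ∈ Finset.Ioc b (b + m), g k = ∏ r ∈ Finset.range m, g (b + 1 + r) := by
  rw [← Finset.Icc_add_one_left_eq_Ioc, ← Finset.Ico_add_one_right_eq_Icc, Finset.prod_Ico_eq_prod_range]
  have h : b + m + 1 - (b + 1) = m := by omega
  rw [h]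

section Prob
variable [MeasurableSpace Ω] (μ : Measure Ω) (τ : ℕ → Ω → ℕ)

lemma meas_all {α : Type*} [MeasurableSpace α] [MeasurableSingletonClass α] [Countable α]
    (s : Set α) : MeasurableSet s := (Set.to_countable s).measurableSet

lemma measurable_vec (hτm : ∀ i, Measurable (τ i)) (b m : ℕ) : Measurable (vec τ b m) :=
  measurable_pi_lambda _ (fun _ => hτm _)

lemma marg (hτm : ∀ i, Measurable (τ i)) (hτid : ∀ i, 2 ≤ i → IdentDistrib (τ i) (τ 2) μ μ)
    (k : ℕ) (hk : 2 ≤ k) (s : Set ℕ) : μ (τ k ⁻¹' s) = μ (τ 2 ⁻¹' s) := by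
  have h := (hτid k hk).map_eq
  have hs : MeasurableSet s := meas_all s
  rw [← Measure.map_apply (hτm k) hs, ← Measure.map_apply (hτm 2) hs, h]

lemma measure_vec_singleton (hτm : ∀ i, Measurable (τ i))
    (hindep : iIndepFun τ μ) (b m : ℕ) (x : Fin m → ℕ) :
    μ (vec τ b m ⁻¹' {x}) = ∏ r : Fin m, μ (τ (b + 1 + (r : ℕ)) ⁻¹' {x r}) := by
  classical
  set sets : ℕ → Set ℕ :=
    fun k => if h : k - (b + 1) < m ∧ b + 1 ≤ k then {x ⟨k - (b + 1), h.1⟩} else Set.univ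
    with hsets
  have hset_eq : vec τ b m ⁻¹' {x} = ⋂ k ∈ Finset.Ioc b (b + m), τ k ⁻¹' sets k := by
    ext ω
    simp only [Set.mem_preimage, Set.mem_singleton_iff, Set.mem_iInter, Finset.mem_Ioc,
      funext_iff, vec]
    constructor
    · rintro h k ⟨hk1, hk2⟩
      have h1 : k - (b + 1) < m ∧ b + 1 ≤ k := ⟨by omega, by omega⟩
      rw [hsets]
      simp only [dif_pos h1, Set.mem_singleton_iff]
      have h2 : b + 1 + (k - (b + 1)) = k := by omega
      have := h ⟨k - (b + 1), h1.1⟩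
      simpa [h2] using this
    · intro h r
      have h1 : b + 1 + (r : ℕ) - (b + 1) < m ∧ b + 1 ≤ b + 1 + (r : ℕ) :=
        ⟨by simpa using r.isLt, by omega⟩
      have := h (b + 1 + (r : ℕ)) ⟨by omega, by have := r.isLt; omega⟩
      rw [hsets] at this
      simp only [dif_pos h1, Set.mem_singleton_iff] at this
      rw [this]
      congr 1
      apply Fin.ext
      simp
  rw [hset_eq, hindep.measure_inter_preimage_eq_mul (Finset.Ioc b (b + m))
    (fun k _ => meas_all (sets k))]
  rw [prod_Ioc_shift (fun k => μ (τ k ⁻¹' sets k)) b m, ← Fin.prod_univ_eq_prod_range]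
  apply Finset.prod_congr rfl
  intro r _
  congr 1
  have h1 : b + 1 + (r : ℕ) - (b + 1) < m ∧ b + 1 ≤ b + 1 + (r : ℕ) :=
    ⟨by simpa using r.isLt, by omega⟩
  rw [hsets]
  simp only [dif_pos h1]
  have hx : (⟨b + 1 + (r : ℕ) - (b + 1), h1.1⟩ : Fin m) = r := by
    apply Fin.ext; simp
  rw [hx]

lemma measure_vec_preimage_shift (hτm : ∀ i, Measurable (τ i))
    (hindep : iIndepFun τ μ)
    (hτid : ∀ i, 2 ≤ i → IdentDistrib (τ i) (τ 2) μ μ)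
    {b b' : ℕ} (hb : 1 ≤ b) (hb' : 1 ≤ b') (m : ℕ) (G : Set (Fin m → ℕ)) :
    μ (vec τ b m ⁻¹' G) = μ (vec τ b' m ⁻¹' G) := by
  have key : ∀ c, 1 ≤ c →
      μ (vec τ c m ⁻¹' G) = ∑' x : G, ∏ r : Fin m, μ (τ 2 ⁻¹' {(x : Fin m → ℕ) r}) := by
    intro c hc
    have hdecomp : vec τ c m ⁻¹' G = ⋃ x ∈ G, vec τ c m ⁻¹' {x} := by
      rw [← Set.preimage_iUnion₂]
      exact congrArg _ (Set.biUnion_of_singleton G).symm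
    rw [hdecomp, measure_biUnion (Set.to_countable G) ?_ (fun x _ => measurable_vec τ hτm c m (meas_all _))]
    · apply tsum_congr
      intro x
      rw [measure_vec_singleton μ τ hτm hindep c m x]
      exact Finset.prod_congr rfl (fun r _ => marg μ τ hτm hτid _ (by omega) _)
    · intro x _ y _ hxy
      apply Set.disjoint_left.mpr
      intro ω h1 h2
      simp only [Set.mem_preimage, Set.mem_singleton_iff] at h1 h2
      exact hxy (h1.symm.trans h2)
  rw [key b hb, key b' hb']

lemma measure_inter_vec (hτm : ∀ i, Measurable (τ i))
    (hindep : iIndepFun τ μ) (b i m : ℕ)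
    (A : Set (Fin i → ℕ)) (B : Set (Fin m → ℕ)) :
    μ (vec τ b i ⁻¹' A ∩ vec τ (b + i) m ⁻¹' B)
      = μ (vec τ b i ⁻¹' A) * μ (vec τ (b + i) m ⁻¹' B) := by
  have hdisj : Disjoint (Finset.Ioc b (b + i)) (Finset.Ioc (b + i) (b + i + m)) := by
    apply Finset.disjoint_left.mpr
    intro k hk hk'
    simp only [Finset.mem_Ioc] at hk hk'
    omega
  have hbase := hindep.indepFun_finset (Finset.Ioc b (b + i)) (Finset.Ioc (b + i) (b + i + m))
    hdisj hτm
  set φ : ((Finset.Ioc b (b + i) : Finset ℕ) → ℕ) → (Fin i → ℕ) :=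
    fun y r => y ⟨b + 1 + (r : ℕ), by simp only [Finset.mem_Ioc]; have := r.isLt; omega⟩ with hφdef
  set ψ : ((Finset.Ioc (b + i) (b + i + m) : Finset ℕ) → ℕ) → (Fin m → ℕ) :=
    fun y r => y ⟨b + i + 1 + (r : ℕ), by simp only [Finset.mem_Ioc]; have := r.isLt; omega⟩
    with hψdef
  have hφ : Measurable φ := measurable_pi_lambda _ (fun _ => measurable_pi_apply _)
  have hψ : Measurable ψ := measurable_pi_lambda _ (fun _ => measurable_pi_apply _)
  have hcomp := hbase.comp hφ hψ
  have heq1 : φ ∘ (fun a (j : (Finset.Ioc b (b + i) : Finset ℕ)) => τ j a) = vec τ b i := rfl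
  have heq2 : ψ ∘ (fun a (j : (Finset.Ioc (b + i) (b + i + m) : Finset ℕ)) => τ j a)
      = vec τ (b + i) m := rfl
  rw [heq1, heq2] at hcomp
  exact hcomp.measure_inter_preimage_eq_mul _ _ (meas_all A) (meas_all B)

end Prob

lemma hits_eq_preimage (τ : ℕ → Ω → ℕ) (b m : ℕ) : hits τ b m = vec τ b m ⁻¹' hitPat m := by
  ext ω
  simp only [hits, hitPat, Set.mem_preimage, Set.mem_setOf_eq]
  apply exists_congr
  intro l
  apply and_congr_right
  intro hl
  rw [Finset.mem_Icc] at hl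
  have hsum : ∑ k ∈ Finset.Ioc b (b + l), τ k ω
      = ∑ r ∈ Finset.range l, (if h : r < m then vec τ b m ω ⟨r, h⟩ else 0) := by
    rw [sum_Ioc_shift (fun k => τ k ω) b l]
    apply Finset.sum_congr rfl
    intro r hr
    rw [Finset.mem_range] at hr
    rw [dif_pos (lt_of_lt_of_le hr hl.2)]
    rfl
  rw [hsum]

lemma sum_Ioc_eq_preimage (τ : ℕ → Ω → ℕ) (b i j : ℕ) :
    {ω | ∑ k ∈ Finset.Ioc b (b + i), τ k ω = j}
      = vec τ b i ⁻¹' {x | ∑ r : Fin i, x r = j} := by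
  ext ω
  simp only [Set.mem_preimage, Set.mem_setOf_eq, vec]
  rw [sum_Ioc_shift (fun k => τ k ω) b i, Fin.sum_univ_eq_sum_range (fun r => τ (b + 1 + r) ω) i]

lemma statS_eq_preimage (τ : ℕ → Ω → ℕ) (i j : ℕ) :
    {ω | statS τ i ω = j} = vec τ 0 i ⁻¹' {x | ∑ r : Fin i, x r = j} := by
  have h := sum_Ioc_eq_preimage τ 0 i j
  simp only [Nat.zero_add] at h
  rw [← h]
  ext ω
  simp only [Set.mem_setOf_eq, statS_Ioc]

lemma measure_rev_eq_sum [MeasurableSpace Ω] (μ : Measure Ω) (τ : ℕ → Ω → ℕ)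
    (hτm : ∀ i, Measurable (τ i)) (hτpos : ∀ i ω, 1 ≤ τ i ω) (j : ℕ) :
    μ (revSet τ j) = ∑ i ∈ Finset.Icc 1 j, μ {ω | statS τ i ω = j} := by
  have hdecomp : revSet τ j = ⋃ i ∈ (Finset.Icc 1 j : Finset ℕ), {ω | statS τ i ω = j} := by
    ext ω; simp [revSet]
  rw [hdecomp, measure_biUnion_finset]
  · intro a _ b _ hab
    apply Set.disjoint_left.mpr
    intro ω h1 h2
    simp only [Set.mem_setOf_eq] at h1 h2
    exact hab ((statS_strictMono τ hτpos ω).injective (h1.trans h2.symm))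
  · intro i _
    exact (measurable_statS τ hτm i) (measurableSet_singleton j)

lemma measure_rev_inter [MeasurableSpace Ω] (μ : Measure Ω) (τ : ℕ → Ω → ℕ)
    (hτm : ∀ i, Measurable (τ i)) (hτpos : ∀ i ω, 1 ≤ τ i ω)
    (hindep : iIndepFun τ μ)
    (hτid : ∀ i, 2 ≤ i → IdentDistrib (τ i) (τ 2) μ μ)
    {j k : ℕ} (hj : 1 ≤ j) (hjk : j < k) :
    μ (revSet τ j ∩ revSet τ k) = μ (revSet τ j) * μ (hits τ 1 (k - j)) := by
  have hdecomp : revSet τ j ∩ revSet τ k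
      = ⋃ i ∈ (Finset.Icc 1 j : Finset ℕ), ({ω | statS τ i ω = j} ∩ hits τ i (k - j)) := by
    ext ω
    simp only [Set.mem_inter_iff, Set.mem_iUnion, Set.mem_setOf_eq, Finset.mem_Icc,
      revSet, hits, exists_prop]
    constructor
    · rintro ⟨⟨i, hi, hSi⟩, ⟨i', hi', hSi'⟩⟩
      have hii' : i < i' := by
        have hlt : statS τ i ω < statS τ i' ω := by omega
        exact (statS_strictMono τ hτpos ω).lt_iff_lt.mp hlt
      have hsum := statS_add τ i (i' - i) ω
      have hii : i + (i' - i) = i' := by omega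
      rw [hii] at hsum
      have hcard := card_le_sum_Ioc τ hτpos i i' ω
      refine ⟨i, hi, hSi, i' - i, ⟨by omega, by omega⟩, ?_⟩
      rw [hii]
      omega
    · rintro ⟨i, hi, hSi, l, hl, hsum⟩
      have hadd := statS_add τ i l ω
      have hS' : statS τ (i + l) ω = k := by omega
      have hle := le_statS τ hτpos (i + l) ω
      exact ⟨⟨i, hi, hSi⟩, ⟨i + l, ⟨by omega, by omega⟩, hS'⟩⟩
  rw [hdecomp, measure_biUnion_finset]
  · have hterm : ∀ i ∈ Finset.Icc 1 j,
        μ ({ω | statS τ i ω = j} ∩ hits τ i (k - j))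
          = μ {ω | statS τ i ω = j} * μ (hits τ 1 (k - j)) := by
      intro i hi
      rw [Finset.mem_Icc] at hi
      have h1 : {ω | statS τ i ω = j} = vec τ 0 i ⁻¹' {x | ∑ r : Fin i, x r = j} :=
        statS_eq_preimage τ i j
      have h2 : hits τ i (k - j) = vec τ (0 + i) (k - j) ⁻¹' hitPat (k - j) := by
        rw [Nat.zero_add]; exact hits_eq_preimage τ i (k - j)
      rw [h1, h2, measure_inter_vec μ τ hτm hindep 0 i (k - j) _ _]
      congr 1
      rw [Nat.zero_add, hits_eq_preimage τ 1 (k - j)]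
      exact measure_vec_preimage_shift μ τ hτm hindep hτid hi.1 le_rfl (k - j) (hitPat (k - j))
    rw [Finset.sum_congr rfl hterm, ← Finset.sum_mul,
      ← measure_rev_eq_sum μ τ hτm hτpos j]
  · intro a ha b hb hab
    apply Set.disjoint_left.mpr
    intro ω h1 h2
    exact hab ((statS_strictMono τ hτpos ω).injective (h1.1.trans h2.1.symm))
  · intro i _
    exact ((measurable_statS τ hτm i) (measurableSet_singleton j)).inter
      (measurableSet_hits τ hτm i (k - j))

lemma ordS_zero (τ : ℕ → Ω → ℕ) (ω : Ω) : ordS τ 0 ω = 0 := by simp [ordS]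

lemma ordS_succ (τ : ℕ → Ω → ℕ) (l : ℕ) (ω : Ω) :
    ordS τ (l + 1) ω = ordS τ l ω + τ (l + 2) ω := by
  rw [ordS, ordS]
  have h : l + 1 + 1 = (l + 1) + 1 := rfl
  rw [Finset.sum_Icc_succ_top (by omega : 2 ≤ l + 1 + 1)]

lemma measurable_ordS [MeasurableSpace Ω] (τ : ℕ → Ω → ℕ) (hτm : ∀ i, Measurable (τ i))
    (l : ℕ) : Measurable (fun ω => ordS τ l ω) :=
  Finset.measurable_sum _ (fun k _ => hτm k)

lemma ordS_eq_preimage (τ : ℕ → Ω → ℕ) (l m : ℕ) :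
    {ω | ordS τ l ω = m} = vec τ 1 l ⁻¹' {x | ∑ r : Fin l, x r = m} := by
  have h := sum_Ioc_eq_preimage τ 1 l m
  rw [← h]
  ext ω
  simp only [Set.mem_setOf_eq, ordS_Ioc]

lemma tau1_eq_preimage (τ : ℕ → Ω → ℕ) (l : ℕ) :
    {ω | τ 1 ω = l} = vec τ 0 1 ⁻¹' {x | x 0 = l} := by
  ext ω
  simp only [Set.mem_preimage, Set.mem_setOf_eq, vec]
  norm_num

lemma tail_eq_preimage (τ : ℕ → Ω → ℕ) (b c : ℕ) :
    {ω | c < τ (b + 2) ω} = vec τ (b + 1) 1 ⁻¹' {x | c < x 0} := by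
  ext ω
  simp only [Set.mem_preimage, Set.mem_setOf_eq, vec]
  norm_num

lemma hits_eq_biUnion (τ : ℕ → Ω → ℕ) (m : ℕ) :
    hits τ 1 m = ⋃ l ∈ (Finset.Icc 1 m : Finset ℕ), {ω | ordS τ l ω = m} := by
  ext ω
  simp only [hits, Set.mem_iUnion, Set.mem_setOf_eq, exists_prop, Finset.mem_Icc]
  apply exists_congr
  intro l
  rw [ordS_Ioc]

lemma measure_hits_eq_sum [MeasurableSpace Ω] (μ : Measure Ω) (τ : ℕ → Ω → ℕ)
    (hτm : ∀ i, Measurable (τ i)) (hτpos : ∀ i ω, 1 ≤ τ i ω) (m : ℕ) :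
    μ (hits τ 1 m) = ∑ l ∈ Finset.Icc 1 m, μ {ω | ordS τ l ω = m} := by
  rw [hits_eq_biUnion, measure_biUnion_finset]
  · intro a _ b _ hab
    apply Set.disjoint_left.mpr
    intro ω h1 h2
    simp only [Set.mem_setOf_eq] at h1 h2
    exact hab ((ordS_strictMono τ hτpos ω).injective (h1.trans h2.symm))
  · intro l _
    exact (measurable_ordS τ hτm l) (measurableSet_singleton m)

lemma measure_ord_term [MeasurableSpace Ω] (μ : Measure Ω) (τ : ℕ → Ω → ℕ)
    (hτm : ∀ i, Measurable (τ i))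
    (hindep : iIndepFun τ μ)
    (hτid : ∀ i, 2 ≤ i → IdentDistrib (τ i) (τ 2) μ μ) (l m c : ℕ) :
    μ ({ω | ordS τ l ω = m} ∩ {ω | c < τ (l + 2) ω})
      = μ {ω | ordS τ l ω = m} * μ {ω | c < τ 2 ω} := by
  have h1 : {ω | ordS τ l ω = m} = vec τ 1 l ⁻¹' {x | ∑ r : Fin l, x r = m} :=
    ordS_eq_preimage τ l m
  have h2 : {ω | c < τ (l + 2) ω} = vec τ (1 + l) 1 ⁻¹' {x | c < x 0} := by
    rw [Nat.add_comm 1 l]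
    exact tail_eq_preimage τ l c
  rw [h1, h2, measure_inter_vec μ τ hτm hindep 1 l 1 _ _]
  congr 1
  rw [← h2]
  have h3 : {ω | c < τ (l + 2) ω} = τ (l + 2) ⁻¹' {a | c < a} := rfl
  have h4 : {ω | c < τ 2 ω} = τ 2 ⁻¹' {a | c < a} := rfl
  rw [h3, h4]
  exact marg μ τ hτm hτid (l + 2) (by omega) _

lemma renewal_partition [MeasurableSpace Ω] (μ : Measure Ω) [IsProbabilityMeasure μ]
    (τ : ℕ → Ω → ℕ) (hτm : ∀ i, Measurable (τ i)) (hτpos : ∀ i ω, 1 ≤ τ i ω)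
    (hindep : iIndepFun τ μ)
    (hτid : ∀ i, 2 ≤ i → IdentDistrib (τ i) (τ 2) μ μ) (M : ℕ) :
    ∑ m ∈ Finset.range (M + 1),
      (if m = 0 then 1 else μ (hits τ 1 m)) * μ {ω | M - m < τ 2 ω} = 1 := by
  classical
  set D : ℕ → Set Ω := fun m =>
    ⋃ l ∈ (Finset.range (m + 1) : Finset ℕ),
      ({ω | ordS τ l ω = m} ∩ {ω | M - m < τ (l + 2) ω}) with hD
  have hmeasD : ∀ m, MeasurableSet (D m) := by
    intro m
    apply Finset.measurableSet_biUnion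
    intro l _
    exact ((measurable_ordS τ hτm l) (measurableSet_singleton m)).inter
      (measurableSet_lt measurable_const (hτm (l + 2)))
  have hcover : Set.univ = ⋃ m ∈ (Finset.range (M + 1) : Finset ℕ), D m := by
    apply Set.eq_of_subset_of_subset _ (Set.subset_univ _)
    intro ω _
    set F := (Finset.range (M + 2)).filter (fun l => ordS τ l ω ≤ M) with hF
    have hne : F.Nonempty := ⟨0, by simp [hF, ordS_zero]⟩
    set L := F.max' hne with hLdef
    have hLmem := F.max'_mem hne
    simp only [hF, Finset.mem_filter, Finset.mem_range] at hLmem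
    have hLM : L ≤ M := le_trans (le_ordS τ hτpos L ω) hLmem.2
    have hnext : M < ordS τ (L + 1) ω := by
      by_contra hcon
      push_neg at hcon
      have hmem : L + 1 ∈ F := by
        simp only [hF, Finset.mem_filter, Finset.mem_range]
        exact ⟨by omega, hcon⟩
      have := F.le_max' (L + 1) hmem
      omega
    set m := ordS τ L ω with hm
    have hsucc := ordS_succ τ L ω
    simp only [Set.mem_iUnion, exists_prop, Finset.mem_range]
    refine ⟨m, by omega, ?_⟩
    rw [hD]
    simp only [Set.mem_iUnion, exists_prop, Finset.mem_range, Set.mem_inter_iff,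
      Set.mem_setOf_eq]
    refine ⟨L, by have := le_ordS τ hτpos L ω; omega, rfl, by omega⟩
  have hdisj : (↑(Finset.range (M + 1)) : Set ℕ).PairwiseDisjoint D := by
    have key : ∀ a b : ℕ, a < b → b ≤ M → ∀ ω, ω ∈ D a → ω ∈ D b → False := by
      intro a b hab hbM ω ha hb
      rw [hD] at ha hb
      simp only [Set.mem_iUnion, exists_prop, Finset.mem_range, Set.mem_inter_iff,
        Set.mem_setOf_eq] at ha hb
      obtain ⟨l, _, hla, hta⟩ := ha
      obtain ⟨l', _, hlb, _⟩ := hb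
      have hll' : l < l' := by
        have hlt : ordS τ l ω < ordS τ l' ω := by omega
        exact (ordS_strictMono τ hτpos ω).lt_iff_lt.mp hlt
      have hmono : ordS τ (l + 1) ω ≤ ordS τ l' ω :=
        (ordS_strictMono τ hτpos ω).monotone (by omega)
      have hsucc := ordS_succ τ l ω
      omega
    intro a ha b hb hab
    simp only [Finset.coe_range, Set.mem_Iio] at ha hb
    apply Set.disjoint_left.mpr
    intro ω h1 h2
    rcases Nat.lt_or_ge a b with h | h
    · exact key a b h (by omega) ω h1 h2
    · exact key b a (by omega) (by omega) ω h2 h1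
  have hμD : ∀ m ∈ Finset.range (M + 1),
      μ (D m) = (if m = 0 then 1 else μ (hits τ 1 m)) * μ {ω | M - m < τ 2 ω} := by
    intro m _
    rw [hD]
    rw [measure_biUnion_finset]
    · have hterm : ∀ l ∈ Finset.range (m + 1),
          μ ({ω | ordS τ l ω = m} ∩ {ω | M - m < τ (l + 2) ω})
            = μ {ω | ordS τ l ω = m} * μ {ω | M - m < τ 2 ω} := fun l _ =>
        measure_ord_term μ τ hτm hindep hτid l m (M - m)
      rw [Finset.sum_congr rfl hterm, ← Finset.sum_mul]
      congr 1
      by_cases hm : m = 0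
      · subst hm
        simp only [if_pos rfl]
        have : {ω | ordS τ 0 ω = 0} = Set.univ := by
          ext ω; simp [ordS_zero]
        simp [this]
      · rw [if_neg hm]
        have hsplit : Finset.range (m + 1) = insert 0 (Finset.Icc 1 m) := by
          ext x
          simp only [Finset.mem_range, Finset.mem_insert, Finset.mem_Icc]
          omega
        rw [hsplit, Finset.sum_insert (by simp)]
        have h0 : {ω | ordS τ 0 ω = m} = ∅ := by
          ext ω
          simp [ordS_zero]
          omega
        rw [h0, measure_empty, zero_add, measure_hits_eq_sum μ τ hτm hτpos m]
    · intro a _ b _ hab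
      apply Set.disjoint_left.mpr
      intro ω h1 h2
      exact hab ((ordS_strictMono τ hτpos ω).injective (h1.1.trans h2.1.symm))
    · intro l _
      exact ((measurable_ordS τ hτm l) (measurableSet_singleton m)).inter
        (measurableSet_lt measurable_const (hτm (l + 2)))
  calc ∑ m ∈ Finset.range (M + 1),
        (if m = 0 then 1 else μ (hits τ 1 m)) * μ {ω | M - m < τ 2 ω}
      = ∑ m ∈ Finset.range (M + 1), μ (D m) := (Finset.sum_congr rfl hμD).symm
    _ = μ (⋃ m ∈ (Finset.range (M + 1) : Finset ℕ), D m) :=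
        (measure_biUnion_finset hdisj (fun m _ => hmeasD m)).symm
    _ = μ Set.univ := by rw [← hcover]
    _ = 1 := measure_univ

lemma statS_one (τ : ℕ → Ω → ℕ) (ω : Ω) : statS τ 1 ω = τ 1 ω := by simp [statS]

lemma measure_rev [MeasurableSpace Ω] (μ : Measure Ω) [IsProbabilityMeasure μ]
    (τ : ℕ → Ω → ℕ) (hτm : ∀ i, Measurable (τ i)) (hτpos : ∀ i ω, 1 ≤ τ i ω)
    (hindep : iIndepFun τ μ)
    (hτid : ∀ i, 2 ≤ i → IdentDistrib (τ i) (τ 2) μ μ)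
    (hπ : ∀ k : ℕ, 1 ≤ k →
      μ {ω | τ 1 ω = k} = μ {ω | k ≤ τ 2 ω} / ENNReal.ofReal (∫ ω, (τ 2 ω : ℝ) ∂μ))
    {j : ℕ} (hj : 1 ≤ j) :
    μ (revSet τ j) = (ENNReal.ofReal (∫ ω, (τ 2 ω : ℝ) ∂μ))⁻¹ := by
  classical
  set C := ENNReal.ofReal (∫ ω, (τ 2 ω : ℝ) ∂μ) with hC
  set E : ℕ → Set Ω := fun l => if l = j then Set.univ else hits τ 1 (j - l) with hE
  have hdecomp : revSet τ j = ⋃ l ∈ (Finset.Icc 1 j : Finset ℕ), ({ω | τ 1 ω = l} ∩ E l) := by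
    ext ω
    simp only [Set.mem_iUnion, exists_prop, Finset.mem_Icc, Set.mem_inter_iff,
      Set.mem_setOf_eq, revSet, hits, hE]
    constructor
    · rintro ⟨i, hi, hSi⟩
      have hS1 : statS τ 1 ω = τ 1 ω := statS_one τ ω
      have hmono : statS τ 1 ω ≤ statS τ i ω :=
        (statS_strictMono τ hτpos ω).monotone hi.1
      rcases Nat.eq_or_lt_of_le hi.1 with h1 | h1
      · refine ⟨j, ⟨hj, le_rfl⟩, ?_, by simp⟩
        rw [← h1] at hSi
        omega
      · have hadd := statS_add τ 1 (i - 1) ω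
        have hii : 1 + (i - 1) = i := by omega
        rw [hii] at hadd
        have hcard := card_le_sum_Ioc τ hτpos 1 i ω
        have hlj : τ 1 ω < j := by omega
        refine ⟨τ 1 ω, ⟨hτpos 1 ω, by omega⟩, rfl, ?_⟩
        rw [if_neg (by omega)]
        refine ⟨i - 1, ⟨by omega, by omega⟩, ?_⟩
        rw [hii]
        omega
    · rintro ⟨l, hl, hτ1, hEl⟩
      by_cases hlj : l = j
      · refine ⟨1, ⟨le_rfl, hj⟩, ?_⟩
        rw [statS_one]
        omega
      · rw [if_neg hlj] at hEl
        obtain ⟨l', hl', hsum⟩ := hEl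
        have hadd := statS_add τ 1 l' ω
        have hS1 : statS τ 1 ω = τ 1 ω := statS_one τ ω
        have hS' : statS τ (1 + l') ω = j := by omega
        refine ⟨1 + l', ⟨by omega, ?_⟩, hS'⟩
        have := le_statS τ hτpos (1 + l') ω
        omega
  have hterm : ∀ l ∈ Finset.Icc 1 j,
      μ ({ω | τ 1 ω = l} ∩ E l)
        = μ {ω | τ 1 ω = l} * (if l = j then 1 else μ (hits τ 1 (j - l))) := by
    intro l hl
    by_cases hlj : l = j
    · simp [hE, hlj]
    · simp only [hE, if_neg hlj]
      have h1 : {ω | τ 1 ω = l} = vec τ 0 1 ⁻¹' {x | x 0 = l} := tau1_eq_preimage τ l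
      have h2 : hits τ 1 (j - l) = vec τ (0 + 1) (j - l) ⁻¹' hitPat (j - l) := by
        rw [Nat.zero_add]
        exact hits_eq_preimage τ 1 (j - l)
      rw [h1, h2, measure_inter_vec μ τ hτm hindep 0 1 (j - l) _ _]
  have hμrev : μ (revSet τ j)
      = ∑ l ∈ Finset.Icc 1 j,
          μ {ω | τ 1 ω = l} * (if l = j then 1 else μ (hits τ 1 (j - l))) := by
    rw [hdecomp, measure_biUnion_finset, Finset.sum_congr rfl hterm]
    · intro a _ b _ hab
      apply Set.disjoint_left.mpr
      intro ω h1 h2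
      exact hab (h1.1.symm.trans h2.1)
    · intro l hl
      have hml : MeasurableSet {ω | τ 1 ω = l} := (hτm 1) (measurableSet_singleton l)
      apply hml.inter
      by_cases hlj : l = j
      · simp [hE, hlj]
      · simp only [hE, if_neg hlj]
        exact measurableSet_hits τ hτm 1 (j - l)
  have hkey : ∑ l ∈ Finset.Icc 1 j,
      μ {ω | l ≤ τ 2 ω} * (if l = j then 1 else μ (hits τ 1 (j - l))) = 1 := by
    have hpart := renewal_partition μ τ hτm hτpos hindep hτid (j - 1)
    have hj1 : j - 1 + 1 = j := by omega
    rw [hj1] at hpart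
    refine Eq.trans ?_ hpart
    apply Finset.sum_nbij' (i := fun l => j - l) (j := fun m => j - m)
    · intro l hl
      rw [Finset.mem_Icc] at hl
      rw [Finset.mem_range]
      omega
    · intro m hm
      rw [Finset.mem_range] at hm
      rw [Finset.mem_Icc]
      omega
    · intro l hl
      rw [Finset.mem_Icc] at hl
      omega
    · intro m hm
      rw [Finset.mem_range] at hm
      omega
    · intro l hl
      rw [Finset.mem_Icc] at hl
      have hset : {ω | l ≤ τ 2 ω} = {ω | j - 1 - (j - l) < τ 2 ω} := by
        ext ω
        simp only [Set.mem_setOf_eq]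
        omega
      rw [hset, mul_comm]
      congr 1
      by_cases hlj : l = j
      · rw [if_pos hlj, if_pos (by omega)]
      · rw [if_neg hlj, if_neg (by omega)]
  calc μ (revSet τ j)
      = ∑ l ∈ Finset.Icc 1 j,
          μ {ω | τ 1 ω = l} * (if l = j then 1 else μ (hits τ 1 (j - l))) := hμrev
    _ = ∑ l ∈ Finset.Icc 1 j,
          (μ {ω | l ≤ τ 2 ω} * (if l = j then 1 else μ (hits τ 1 (j - l)))) * C⁻¹ := by
        apply Finset.sum_congr rfl
        intro l hl
        rw [Finset.mem_Icc] at hl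
        rw [hπ l hl.1, div_eq_mul_inv, mul_right_comm]
    _ = 1 * C⁻¹ := by rw [← Finset.sum_mul, hkey]
    _ = C⁻¹ := one_mul _

lemma ordH_eq [MeasurableSpace Ω] (μ : Measure Ω) [IsProbabilityMeasure μ]
    (τ : ℕ → Ω → ℕ) (hτm : ∀ i, Measurable (τ i)) (hτpos : ∀ i ω, 1 ≤ τ i ω) (n : ℕ) :
    ordH μ τ n = ∑ m ∈ Finset.Icc 1 n, (μ (hits τ 1 m)).toReal := by
  rw [ordH]
  have hfun : ∀ ω, (ordN τ n ω : ℝ)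
      = ∑ m ∈ Finset.Icc 1 n, (hits τ 1 m).indicator (fun _ => (1 : ℝ)) ω := by
    intro ω
    rw [ordN_eq_s15 τ hτpos n ω]
    push_cast
    apply Finset.sum_congr rfl
    intro m _
    rw [Set.indicator_apply]
  rw [integral_congr_ae (Filter.Eventually.of_forall hfun), integral_finset_sum]
  · apply Finset.sum_congr rfl
    intro m _
    rw [integral_indicator_const (1 : ℝ) (measurableSet_hits τ hτm 1 m)]
    simp
    rfl
  · intro m _
    exact (integrable_const (1 : ℝ)).indicator (measurableSet_hits τ hτm 1 m)

lemma expectation_eq [MeasurableSpace Ω] (μ : Measure Ω) [IsProbabilityMeasure μ]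
    (τ : ℕ → Ω → ℕ) (hτm : ∀ i, Measurable (τ i)) (hτpos : ∀ i ω, 1 ≤ τ i ω) (u v : ℕ) :
    ∫ ω, ((statN τ u ω : ℝ) * (statN τ v ω : ℝ)) ∂μ
      = ∑ j ∈ Finset.Icc 1 u, ∑ k ∈ Finset.Icc 1 v,
          (μ (revSet τ j ∩ revSet τ k)).toReal := by
  have hfun : ∀ ω, (statN τ u ω : ℝ) * (statN τ v ω : ℝ)
      = ∑ j ∈ Finset.Icc 1 u, ∑ k ∈ Finset.Icc 1 v,
          (revSet τ j ∩ revSet τ k).indicator (fun _ => (1 : ℝ)) ω := by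
    intro ω
    rw [statN_eq_s15 τ hτpos u ω, statN_eq_s15 τ hτpos v ω]
    push_cast
    rw [Finset.sum_mul_sum]
    apply Finset.sum_congr rfl
    intro j _
    apply Finset.sum_congr rfl
    intro k _
    rw [Set.indicator_apply]
    by_cases h1 : ω ∈ revSet τ j <;> by_cases h2 : ω ∈ revSet τ k <;>
      simp [h1, h2, Set.mem_inter_iff]
  rw [integral_congr_ae (Filter.Eventually.of_forall hfun), integral_finset_sum]
  · apply Finset.sum_congr rfl
    intro j _
    rw [integral_finset_sum]
    · apply Finset.sum_congr rfl
      intro k _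
      rw [integral_indicator_const (1 : ℝ)
        ((measurableSet_revSet τ hτm j).inter (measurableSet_revSet τ hτm k))]
      simp
      rfl
    · intro k _
      exact (integrable_const (1 : ℝ)).indicator
        ((measurableSet_revSet τ hτm j).inter (measurableSet_revSet τ hτm k))
  · intro j _
    apply integrable_finset_sum
    intro k _
    exact (integrable_const (1 : ℝ)).indicator
      ((measurableSet_revSet τ hτm j).inter (measurableSet_revSet τ hτm k))

end RenewalAux

open RenewalAux

/-- For the stationary renewal counting process `𝒩`, for all `1 ≤ u < v`,
`E[𝒩 u ⬝ 𝒩 v] = (Σ_{i=1}^{u−1} H i + u + Σ_{i=v−u}^{v−1} H i) / E τ₂`,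
where `H` is the renewal function of the corresponding ordinary renewal process. -/
theorem statN_cross_moment
    {Ω : Type*} [MeasurableSpace Ω] (μ : Measure Ω) [IsProbabilityMeasure μ]
    (τ : ℕ → Ω → ℕ)
    -- measurability and positivity
    (hτm : ∀ i, Measurable (τ i)) (hτpos : ∀ i ω, 1 ≤ τ i ω)
    -- the delay τ 1 = τ̃₁ and the inter-renewal times τ 2, τ 3, … are mutually independent
    (hindep : iIndepFun τ μ)
    -- τ 2, τ 3, … are identically distributed
    (hτid : ∀ i, 2 ≤ i → IdentDistrib (τ i) (τ 2) μ μ)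
    -- finite mean
    (hτint : Integrable (fun ω => (τ 2 ω : ℝ)) μ)
    -- the delay has the stationary distribution π_k = P(τ₂ ≥ k) / E τ₂
    (hπ : ∀ k : ℕ, 1 ≤ k →
      μ {ω | τ 1 ω = k} = μ {ω | k ≤ τ 2 ω} / ENNReal.ofReal (∫ ω, (τ 2 ω : ℝ) ∂μ))
    : ∀ u v : ℕ, 1 ≤ u → u < v →
      ∫ ω, ((statN τ u ω : ℝ) * (statN τ v ω : ℝ)) ∂μ =
        ((∑ i ∈ Finset.Icc 1 (u - 1), ordH μ τ i) + u
          + ∑ i ∈ Finset.Icc (v - u) (v - 1), ordH μ τ i) / ∫ ω, (τ 2 ω : ℝ) ∂μ := by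

  intro u v hu huv
  classical
  have hE1 : 1 ≤ ∫ ω, (τ 2 ω : ℝ) ∂μ := by
    have h0 : ∫ ω, (1 : ℝ) ∂μ ≤ ∫ ω, (τ 2 ω : ℝ) ∂μ := by
      apply integral_mono (integrable_const 1) hτint
      intro ω
      show (1 : ℝ) ≤ (τ 2 ω : ℝ)
      exact_mod_cast hτpos 2 ω
    simpa using h0
  set C := ENNReal.ofReal (∫ ω, (τ 2 ω : ℝ) ∂μ) with hC
  have hCtop : C ≠ ⊤ := ENNReal.ofReal_ne_top
  have hCinvtop : C⁻¹ ≠ ⊤ := by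
    rw [ENNReal.inv_ne_top, hC]
    simp only [ne_eq, ENNReal.ofReal_eq_zero, not_le]
    linarith
  set w : ℕ → ENNReal := fun m => μ (hits τ 1 m) with hw
  set HE : ℕ → ENNReal := fun n => ∑ m ∈ Finset.Icc 1 n, w m with hHE
  have hHEtop : ∀ n, HE n ≠ ⊤ := by
    intro n
    rw [hHE]
    exact (ENNReal.sum_lt_top.mpr (fun m _ => measure_lt_top μ _)).ne
  have hHEreal : ∀ n, (HE n).toReal = ordH μ τ n := by
    intro n
    rw [hHE, ordH_eq μ τ hτm hτpos n, ENNReal.toReal_sum (fun m _ => measure_ne_top μ _)]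
  have hHE0 : HE 0 = 0 := by simp [hHE]
  have hrev : ∀ j, 1 ≤ j → μ (revSet τ j) = C⁻¹ := fun j hj =>
    measure_rev μ τ hτm hτpos hindep hτid hπ hj
  have hcross : ∀ j k, 1 ≤ j → j < k → μ (revSet τ j ∩ revSet τ k) = C⁻¹ * w (k - j) := by
    intro j k hj hjk
    rw [measure_rev_inter μ τ hτm hτpos hindep hτid hj hjk, hrev j hj]
  have hinner : ∀ j ∈ Finset.Icc 1 u, ∑ k ∈ Finset.Icc 1 v, μ (revSet τ j ∩ revSet τ k)
      = C⁻¹ * (HE (j - 1) + 1 + HE (v - j)) := by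
    intro j hjmem
    rw [Finset.mem_Icc] at hjmem
    have hj : 1 ≤ j := hjmem.1
    have hjv : j < v := by omega
    have hIcc : Finset.Icc 1 v = Finset.Ioc 0 v := by
      ext x
      simp only [Finset.mem_Icc, Finset.mem_Ioc]
      omega
    have hsplit1 := Finset.sum_Ioc_consecutive (fun k => μ (revSet τ j ∩ revSet τ k))
      (Nat.zero_le j) (le_of_lt hjv)
    have hsplit2 := Finset.sum_Ioc_succ_top (Nat.zero_le (j - 1))
      (fun k => μ (revSet τ j ∩ revSet τ k))
    have hj1 : j - 1 + 1 = j := by omega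
    rw [hj1] at hsplit2
    have hleft : ∑ k ∈ Finset.Ioc 0 (j - 1), μ (revSet τ j ∩ revSet τ k)
        = C⁻¹ * HE (j - 1) := by
      have h1 : ∀ k ∈ Finset.Ioc 0 (j - 1), μ (revSet τ j ∩ revSet τ k)
          = C⁻¹ * w (j - k) := by
        intro k hk
        rw [Finset.mem_Ioc] at hk
        rw [Set.inter_comm, hcross k j (by omega) (by omega)]
      rw [Finset.sum_congr rfl h1, ← Finset.mul_sum]
      congr 1
      rw [hHE]
      apply Finset.sum_nbij' (i := fun k => j - k) (j := fun m => j - m)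
      · intro k hk
        rw [Finset.mem_Ioc] at hk
        rw [Finset.mem_Icc]
        omega
      · intro m hm
        rw [Finset.mem_Icc] at hm
        rw [Finset.mem_Ioc]
        omega
      · intro k hk
        rw [Finset.mem_Ioc] at hk
        omega
      · intro m hm
        rw [Finset.mem_Icc] at hm
        omega
      · intro k _
        rfl
    have hright : ∑ k ∈ Finset.Ioc j v, μ (revSet τ j ∩ revSet τ k)
        = C⁻¹ * HE (v - j) := by
      have h1 : ∀ k ∈ Finset.Ioc j v, μ (revSet τ j ∩ revSet τ k)
          = C⁻¹ * w (k - j) := by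
        intro k hk
        rw [Finset.mem_Ioc] at hk
        exact hcross j k hj hk.1
      rw [Finset.sum_congr rfl h1, ← Finset.mul_sum]
      congr 1
      rw [hHE]
      apply Finset.sum_nbij' (i := fun k => k - j) (j := fun m => m + j)
      · intro k hk
        rw [Finset.mem_Ioc] at hk
        rw [Finset.mem_Icc]
        omega
      · intro m hm
        rw [Finset.mem_Icc] at hm
        rw [Finset.mem_Ioc]
        omega
      · intro k hk
        rw [Finset.mem_Ioc] at hk
        omega
      · intro m hm
        rw [Finset.mem_Icc] at hm
        omega
      · intro k _
        rfl
    have hdiag : μ (revSet τ j ∩ revSet τ j) = C⁻¹ := by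
      rw [Set.inter_self]
      exact hrev j hj
    rw [hIcc, ← hsplit1, hsplit2, hleft, hright, hdiag]
    rw [mul_add, mul_add, mul_one]
  have hdouble : ∑ j ∈ Finset.Icc 1 u, ∑ k ∈ Finset.Icc 1 v, μ (revSet τ j ∩ revSet τ k)
      = C⁻¹ * ((∑ i ∈ Finset.Icc 1 (u - 1), HE i) + u
          + ∑ i ∈ Finset.Icc (v - u) (v - 1), HE i) := by
    rw [Finset.sum_congr rfl hinner, ← Finset.mul_sum]
    congr 1
    rw [Finset.sum_add_distrib, Finset.sum_add_distrib]
    congr 1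
    · congr 1
      · -- ∑ j ∈ Icc 1 u, HE (j-1) = ∑ i ∈ Icc 1 (u-1), HE i
        have h1 : ∑ j ∈ Finset.Icc 1 u, HE (j - 1) = ∑ i ∈ Finset.Icc 0 (u - 1), HE i := by
          apply Finset.sum_nbij' (i := fun j => j - 1) (j := fun i => i + 1)
          · intro j hj
            rw [Finset.mem_Icc] at hj ⊢
            omega
          · intro i hi
            rw [Finset.mem_Icc] at hi ⊢
            omega
          · intro j hj
            rw [Finset.mem_Icc] at hj
            omega
          · intro i hi
            rw [Finset.mem_Icc] at hi
            omega
          · intro j _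
            rfl
        rw [h1]
        have h2 : Finset.Icc 0 (u - 1) = insert 0 (Finset.Icc 1 (u - 1)) := by
          ext x
          simp only [Finset.mem_Icc, Finset.mem_insert]
          omega
        rw [h2, Finset.sum_insert (by simp), hHE0, zero_add]
      · -- ∑ j ∈ Icc 1 u, 1 = u
        rw [Finset.sum_const, Nat.card_Icc]
        simp
    · -- ∑ j ∈ Icc 1 u, HE (v - j) = ∑ i ∈ Icc (v-u) (v-1), HE i
      apply Finset.sum_nbij' (i := fun j => v - j) (j := fun i => v - i)
      · intro j hj
        rw [Finset.mem_Icc] at hj ⊢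
        omega
      · intro i hi
        rw [Finset.mem_Icc] at hi ⊢
        omega
      · intro j hj
        rw [Finset.mem_Icc] at hj
        omega
      · intro i hi
        rw [Finset.mem_Icc] at hi
        omega
      · intro j _
        rfl
  have hXtop : (∑ i ∈ Finset.Icc 1 (u - 1), HE i) ≠ ⊤ :=
    (ENNReal.sum_lt_top.mpr (fun i _ => (hHEtop i).lt_top)).ne
  have hYtop : (∑ i ∈ Finset.Icc (v - u) (v - 1), HE i) ≠ ⊤ :=
    (ENNReal.sum_lt_top.mpr (fun i _ => (hHEtop i).lt_top)).ne
  rw [expectation_eq μ τ hτm hτpos u v]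
  have htReal : ∑ j ∈ Finset.Icc 1 u, ∑ k ∈ Finset.Icc 1 v,
      (μ (revSet τ j ∩ revSet τ k)).toReal
      = (∑ j ∈ Finset.Icc 1 u, ∑ k ∈ Finset.Icc 1 v, μ (revSet τ j ∩ revSet τ k)).toReal := by
    rw [ENNReal.toReal_sum (fun j _ =>
      (ENNReal.sum_lt_top.mpr (fun k _ => measure_lt_top μ _)).ne)]
    apply Finset.sum_congr rfl
    intro j _
    rw [ENNReal.toReal_sum (fun k _ => measure_ne_top μ _)]
  rw [htReal, hdouble, ENNReal.toReal_mul, ENNReal.toReal_add (by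
      exact ENNReal.add_ne_top.mpr ⟨hXtop, ENNReal.natCast_ne_top u⟩) hYtop,
    ENNReal.toReal_add hXtop (ENNReal.natCast_ne_top u)]
  have hsums : (∑ i ∈ Finset.Icc 1 (u - 1), HE i).toReal
      = ∑ i ∈ Finset.Icc 1 (u - 1), ordH μ τ i := by
    rw [ENNReal.toReal_sum (fun i _ => hHEtop i)]
    exact Finset.sum_congr rfl (fun i _ => hHEreal i)
  have hsums2 : (∑ i ∈ Finset.Icc (v - u) (v - 1), HE i).toReal
      = ∑ i ∈ Finset.Icc (v - u) (v - 1), ordH μ τ i := by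
    rw [ENNReal.toReal_sum (fun i _ => hHEtop i)]
    exact Finset.sum_congr rfl (fun i _ => hHEreal i)
  rw [hsums, hsums2, ENNReal.toReal_natCast]
  have hCinv : (C⁻¹).toReal = (∫ ω, (τ 2 ω : ℝ) ∂μ)⁻¹ := by
    rw [ENNReal.toReal_inv, hC, ENNReal.toReal_ofReal (by linarith)]
  rw [hCinv, div_eq_mul_inv, mul_comm]
end
end

section
/- The stationary-started colony size 𝓜_n := Σ_{i=1}^{𝒩_n} Σ_{j=1}^{ξ_i} 1{𝒮_i + η_{ij} ≥ n} has the same distribution as 𝓜̃_n := Σ_{i=1}^{𝒩_n} Σ_{j=1}^{ξ_i} 1{η_{ij} + 1 ≥ 𝒮_i}; that is, the marked point configuration may be time-reversed about n without changing the distribution of the colony size. -/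
open MeasureTheory ProbabilityTheory Finset

noncomputable section

variable {Ω : Type*}

/-- The stationary-started colony size
`𝓜 n = Σ_{i=1}^{𝒩 n} Σ_{j=1}^{ξ_i} 1{𝒮 i + η i j ≥ n}` (the condition `i ≤ 𝒩 n` is
expressed as `𝒮 i ≤ n`, using `𝒮 i ≥ i`). -/
def statMn (τ ζ : ℕ → Ω → ℕ) (I η : ℕ → ℕ → Ω → ℕ) (n : ℕ) (ω : Ω) : ℕ :=
  ∑ i ∈ Finset.Icc 1 n, ∑ j ∈ Finset.Icc 1 (batchXi ζ I i ω),
    if statS τ i ω ≤ n ∧ n ≤ statS τ i ω + η i j ω then 1 else 0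

/-- The time-reversed version
`𝓜̃ n = Σ_{i=1}^{𝒩 n} Σ_{j=1}^{ξ_i} 1{η i j + 1 ≥ 𝒮 i}`. -/
def statMtilde (τ ζ : ℕ → Ω → ℕ) (I η : ℕ → ℕ → Ω → ℕ) (n : ℕ) (ω : Ω) : ℕ :=
  ∑ i ∈ Finset.Icc 1 n, ∑ j ∈ Finset.Icc 1 (batchXi ζ I i ω),
    if statS τ i ω ≤ n ∧ statS τ i ω ≤ η i j ω + 1 then 1 else 0

/-- `𝓜 = Σ_{i ≥ 1} Σ_{j=1}^{ξ_i} 1{𝒮 i ≤ η i j + 1}`, the stationary colony size. -/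
def statM (τ ζ : ℕ → Ω → ℕ) (I η : ℕ → ℕ → Ω → ℕ) (ω : Ω) : ℕ :=
  ∑' i : ℕ, ∑ j ∈ Finset.Icc 1 (batchXi ζ I (i + 1) ω),
    if statS τ (i + 1) ω ≤ η (i + 1) j ω + 1 then 1 else 0

/-- Total variation distance between (the distributions of) two integer-valued
random variables: `sup_{B ⊆ ℤ} |P(X ∈ B) − P(Y ∈ B)|`. -/
def dTV [MeasurableSpace Ω] (μ : Measure Ω) (X Y : Ω → ℕ) : ℝ :=
  ⨆ B : Set ℤ,
    |(μ ((fun ω => (X ω : ℤ)) ⁻¹' B)).toReal - (μ ((fun ω => (Y ω : ℤ)) ⁻¹' B)).toReal|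

/-- All the sources of randomness (`τ̃₁ = τ 1` and the `τ i`, `i ≥ 2`; the `ζ i`;
the `I i j`; the `η i j`) packaged as one family, used to state that they are
mutually independent. -/
def allVars (τ ζ : ℕ → Ω → ℕ) (I η : ℕ → ℕ → Ω → ℕ) :
    (ℕ ⊕ ℕ ⊕ (ℕ × ℕ) ⊕ (ℕ × ℕ)) → Ω → ℕ
  | Sum.inl i => τ i
  | Sum.inr (Sum.inl i) => ζ i
  | Sum.inr (Sum.inr (Sum.inl p)) => I p.1 p.2
  | Sum.inr (Sum.inr (Sum.inr p)) => η p.1 p.2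

/-! ### Auxiliary development for the time-reversal argument -/

namespace BeeRev

abbrev Blk := ℕ × List ℕ × List ℕ
abbrev Atom := List ℕ × List Blk

def dBlk : Blk := (0, [], [])

/-- count of hatched bees of a block alive at threshold `t`. -/
def cnt (b : Blk) (t : ℕ) : ℕ := ∑ j ∈ range b.2.1.sum, if t ≤ b.2.2.getD j 0 then 1 else 0

def pos (v : List ℕ) (l : ℕ) : ℕ := (v.take (l+1)).sum

def valMn (n : ℕ) (a : Atom) : ℕ :=
  ∑ l ∈ range a.1.length, cnt (a.2.getD l dBlk) (n - pos a.1 l)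

def valMt (n : ℕ) (a : Atom) : ℕ :=
  ∑ l ∈ range a.1.length, cnt (a.2.getD l dBlk) (pos a.1 l - 1)

def Valid (n : ℕ) (a : Atom) : Prop :=
  a.2.length = a.1.length ∧ (∀ g ∈ a.1, 1 ≤ g) ∧ a.1.sum ≤ n ∧
  ∀ b ∈ a.2, b.2.1.length = b.1 ∧ b.2.2.length = b.1 ∧ ∀ x ∈ b.2.1, x ≤ 1

def rev (n : ℕ) : Atom → Atom
  | ([], B) => ([], B)
  | (g :: gs, B) => ((n + 1 - (g :: gs).sum) :: gs.reverse, B.reverse)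

lemma take_sum_le (v : List ℕ) (m : ℕ) : (v.take m).sum ≤ v.sum := by
  conv_rhs => rw [← List.take_append_drop m v]
  rw [List.sum_append]; exact Nat.le_add_right _ _

lemma sum_take_eq (v : List ℕ) (m : ℕ) (h : m ≤ v.length) :
    (v.take m).sum = ∑ i ∈ range m, v.getD i 0 := by
  induction m with
  | zero => simp
  | succ m ih =>
    rw [List.sum_take_succ _ _ (by omega), Finset.sum_range_succ, ih (by omega),
      List.getD_eq_getElem _ _ (by omega)]

lemma prod_map_getD {M : Type*} [CommMonoid M] (L : List ℕ) (f : ℕ → M) :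
    (L.map f).prod = ∏ i ∈ range L.length, f (L.getD i 0) := by
  induction L with
  | nil => simp
  | cons x xs ih =>
    rw [List.map_cons, List.prod_cons, ih, List.length_cons, Finset.prod_range_succ']
    simp [mul_comm]

lemma prod_map_getD' {M : Type*} [CommMonoid M] (L : List Blk) (f : Blk → M) :
    (L.map f).prod = ∏ i ∈ range L.length, f (L.getD i dBlk) := by
  induction L with
  | nil => simp
  | cons x xs ih =>
    rw [List.map_cons, List.prod_cons, ih, List.length_cons, Finset.prod_range_succ']
    simp [mul_comm]

lemma prod_Icc_one {M : Type*} [CommMonoid M] (f : ℕ → M) (m : ℕ) :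
    ∏ i ∈ Icc 1 m, f i = ∏ i ∈ range m, f (i+1) := by
  induction m with
  | zero => simp
  | succ m ih => rw [Finset.prod_Icc_succ_top (by omega), ih, Finset.prod_range_succ]

lemma sum_Icc_one (f : ℕ → ℕ) (m : ℕ) :
    ∑ i ∈ Icc 1 m, f i = ∑ i ∈ range m, f (i+1) := by
  induction m with
  | zero => simp
  | succ m ih => rw [Finset.sum_Icc_succ_top (by omega), ih, Finset.sum_range_succ]

lemma rev_fst_cons (n g : ℕ) (gs : List ℕ) (B : List Blk) :
    rev n (g :: gs, B) = ((n + 1 - (g + gs.sum)) :: gs.reverse, B.reverse) := by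
  simp [rev]

lemma reverse_take_sum (gs : List ℕ) (l : ℕ) (hl : l ≤ gs.length) :
    (gs.reverse.take l).sum = gs.sum - (gs.take (gs.length - l)).sum := by
  have h1 : gs.reverse.take l = (gs.drop (gs.length - l)).reverse := by
    have h2 : gs.reverse
        = (gs.drop (gs.length - l)).reverse ++ (gs.take (gs.length - l)).reverse := by
      rw [← List.reverse_append, List.take_append_drop]
    rw [h2, List.take_left' (by simp; omega)]
  rw [h1, List.sum_reverse]
  have := List.take_append_drop (gs.length - l) gs
  have h3 : (gs.take (gs.length - l)).sum + (gs.drop (gs.length - l)).sum = gs.sum := by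
    rw [← List.sum_append, this]
  omega

lemma pos_le_sum (v : List ℕ) (l : ℕ) : pos v l ≤ v.sum := take_sum_le _ _

lemma pos_rev (n g : ℕ) (gs : List ℕ) (l : ℕ) (hl : l ≤ gs.length)
    (hg : 1 ≤ g) (hs : g + gs.sum ≤ n) :
    pos ((n + 1 - (g + gs.sum)) :: gs.reverse) l = n + 1 - pos (g :: gs) (gs.length - l) := by
  have h1 : pos ((n + 1 - (g + gs.sum)) :: gs.reverse) l
      = (n + 1 - (g + gs.sum)) + (gs.reverse.take l).sum := by
    simp [pos, List.sum_cons]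
  have h2 : pos (g :: gs) (gs.length - l) = g + (gs.take (gs.length - l)).sum := by
    simp [pos, List.sum_cons]
  have h3 := reverse_take_sum gs l hl
  have h4 : (gs.take (gs.length - l)).sum ≤ gs.sum := take_sum_le _ _
  omega

lemma valid_rev (n : ℕ) (a : Atom) (h : Valid n a) : Valid n (rev n a) := by
  obtain ⟨v, B⟩ := a
  obtain ⟨hlen, hpos, hsum, hblk⟩ := h
  cases v with
  | nil => exact ⟨hlen, hpos, hsum, hblk⟩
  | cons g gs =>
    have hg : 1 ≤ g := hpos g (by simp)
    rw [rev_fst_cons]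
    refine ⟨by simpa using hlen, ?_, ?_, ?_⟩
    · intro x hx
      rcases List.mem_cons.1 hx with h | h
      · subst h; simp only [List.sum_cons] at hsum; omega
      · exact hpos x (by simp [List.mem_reverse] at h; simp [h])
    · simp only [List.sum_cons, List.sum_reverse] at *
      omega
    · intro b hb; exact hblk b (by simpa [List.mem_reverse] using hb)

lemma rev_rev (n : ℕ) (a : Atom) (h : Valid n a) : rev n (rev n a) = a := by
  obtain ⟨v, B⟩ := a
  obtain ⟨hlen, hpos, hsum, hblk⟩ := h
  cases v with
  | nil => rfl
  | cons g gs =>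
    have hg : 1 ≤ g := hpos g (by simp)
    simp only [List.sum_cons] at hsum
    rw [rev_fst_cons, rev_fst_cons]
    simp only [List.sum_reverse, List.reverse_reverse, Prod.mk.injEq, List.cons.injEq,
      and_true]
    omega

lemma valMt_rev (n : ℕ) (a : Atom) (h : Valid n a) : valMt n (rev n a) = valMn n a := by
  obtain ⟨v, B⟩ := a
  obtain ⟨hlen, hpos, hsum, hblk⟩ := h
  cases v with
  | nil => rfl
  | cons g gs =>
    have hg : 1 ≤ g := hpos g (by simp)
    simp only [List.sum_cons] at hsum
    rw [rev_fst_cons]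
    unfold valMn valMt
    simp only [List.length_cons, List.length_reverse]
    rw [← Finset.sum_range_reflect
      (fun l => cnt (B.getD l dBlk) (n - pos (g :: gs) l)) (gs.length + 1)]
    refine Finset.sum_congr rfl fun l hl => ?_
    rw [Finset.mem_range] at hl
    have hidx : gs.length + 1 - 1 - l = gs.length - l := by omega
    rw [hidx]
    have hl' : l ≤ gs.length := by omega
    have e1 : (B.reverse.getD l dBlk) = B.getD (gs.length - l) dBlk := by
      have hB : B.length = gs.length + 1 := by simpa using hlen
      rw [List.getD_eq_getElem _ _ (by simp [hB]; omega),
        List.getD_eq_getElem _ _ (by omega), List.getElem_reverse]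
      congr 1; omega
    have e2 : pos ((n + 1 - (g + gs.sum)) :: gs.reverse) l - 1
        = n - pos (g :: gs) (gs.length - l) := by
      rw [pos_rev n g gs l hl' hg hsum]
      have h5 : pos (g :: gs) (gs.length - l) ≤ g + gs.sum := by
        have := pos_le_sum (g :: gs) (gs.length - l); simpa using this
      have h6 : 1 ≤ pos (g :: gs) (gs.length - l) := by
        simp [pos, List.sum_cons]; omega
      omega
    rw [e1, e2]

section
variable (τ ζ : ℕ → Ω → ℕ) (I η : ℕ → ℕ → Ω → ℕ) (n : ℕ)

lemma statS_succ (i : ℕ) (ω : Ω) : statS τ (i+1) ω = statS τ i ω + τ (i+1) ω :=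
  Finset.sum_Icc_succ_top (by omega) _

lemma statS_range (i : ℕ) (ω : Ω) : statS τ i ω = ∑ l ∈ range i, τ (l+1) ω :=
  sum_Icc_one _ _

lemma statS_mono {i j : ℕ} (h : i ≤ j) (ω : Ω) : statS τ i ω ≤ statS τ j ω :=
  Finset.sum_le_sum_of_subset (Finset.Icc_subset_Icc_right h)

lemma le_statS (hτpos : ∀ i ω, 1 ≤ τ i ω) (i : ℕ) (ω : Ω) : i ≤ statS τ i ω := by
  calc i = ∑ l ∈ range i, 1 := by simp
  _ ≤ _ := by rw [statS_range]; exact Finset.sum_le_sum fun l _ => hτpos _ _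

/-- the number of renewal times in `[1,n]`. -/
def NN (ω : Ω) : ℕ := ∑ i ∈ Icc 1 n, if statS τ i ω ≤ n then 1 else 0

lemma NN_le (ω : Ω) : NN τ n ω ≤ n := by
  unfold NN
  calc ∑ i ∈ Icc 1 n, (if statS τ i ω ≤ n then 1 else 0) ≤ ∑ i ∈ Icc 1 n, 1 :=
        Finset.sum_le_sum fun i _ => by split <;> omega
  _ = n := by simp

lemma NN_iff (hτpos : ∀ i ω, 1 ≤ τ i ω) (ω : Ω) {i : ℕ} (hi : 1 ≤ i) :
    i ≤ NN τ n ω ↔ statS τ i ω ≤ n := by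
  constructor
  · intro h
    by_contra hc
    push_neg at hc
    have hzero : ∀ j ∈ Icc 1 n, j ∉ Icc 1 (i-1) →
        (if statS τ j ω ≤ n then 1 else 0) = 0 := by
      intro j hj hj'
      simp only [Finset.mem_Icc] at hj hj'
      have hij : i ≤ j := by omega
      have : n < statS τ j ω := lt_of_lt_of_le hc (statS_mono τ hij ω)
      simp [Nat.not_le.2 this]
    have hsub : Icc 1 (i-1) ⊆ Icc 1 n := by
      apply Finset.Icc_subset_Icc_right
      have h2 := NN_le τ n ω
      omega
    have : NN τ n ω = ∑ j ∈ Icc 1 (i-1), if statS τ j ω ≤ n then 1 else 0 :=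
      (Finset.sum_subset hsub hzero).symm
    have hle : NN τ n ω ≤ i - 1 := by
      rw [this]
      calc _ ≤ ∑ j ∈ Icc 1 (i-1), 1 := Finset.sum_le_sum fun j _ => by split <;> omega
      _ = i - 1 := by simp
    omega
  · intro h
    have hin : i ≤ n := le_trans (le_statS τ hτpos i ω) h
    have : ∀ j ∈ Icc 1 i, (if statS τ j ω ≤ n then 1 else 0) = 1 := by
      intro j hj
      simp only [Finset.mem_Icc] at hj
      have : statS τ j ω ≤ n := le_trans (statS_mono τ hj.2 ω) h
      simp [this]
    calc i = ∑ j ∈ Icc 1 i, (if statS τ j ω ≤ n then 1 else 0) := by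
          rw [Finset.sum_congr rfl this]; simp
    _ ≤ NN τ n ω := Finset.sum_le_sum_of_subset (Finset.Icc_subset_Icc_right hin)

/-- the atom (cylinder data) determined by a sample point. -/
def atomOf (ω : Ω) : Atom :=
  (List.ofFn (fun i : Fin (NN τ n ω) => τ ((i : ℕ)+1) ω),
   List.ofFn (fun l : Fin (NN τ n ω) =>
     (ζ ((l : ℕ)+1) ω,
      List.ofFn (fun j : Fin (ζ ((l : ℕ)+1) ω) => I ((l : ℕ)+1) ((j : ℕ)+1) ω),
      List.ofFn (fun j : Fin (ζ ((l : ℕ)+1) ω) => η ((l : ℕ)+1) ((j : ℕ)+1) ω))))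

lemma atomOf_valid (hτpos : ∀ i ω, 1 ≤ τ i ω) (hI01 : ∀ i j ω, I i j ω ≤ 1) (ω : Ω) :
    Valid n (atomOf τ ζ I η n ω) := by
  refine ⟨by simp [atomOf], ?_, ?_, ?_⟩
  · intro g hg
    simp only [atomOf, List.mem_ofFn] at hg
    obtain ⟨i, rfl⟩ := hg
    exact hτpos _ _
  · have : (atomOf τ ζ I η n ω).1.sum = statS τ (NN τ n ω) ω := by
      simp only [atomOf, List.sum_ofFn, statS_range]
      exact Fin.sum_univ_eq_sum_range (fun i => τ (i+1) ω) _
    rw [this]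
    rcases Nat.eq_zero_or_pos (NN τ n ω) with h0 | h0
    · simp [h0, statS]
    · exact (NN_iff τ n hτpos ω h0).1 le_rfl
  · intro b hb
    simp only [atomOf, List.mem_ofFn] at hb
    obtain ⟨l, rfl⟩ := hb
    refine ⟨by simp, by simp, ?_⟩
    intro x hx
    simp only [List.mem_ofFn] at hx
    obtain ⟨j, rfl⟩ := hx
    exact hI01 _ _ _

lemma batchXi_le (hI01 : ∀ i j ω, I i j ω ≤ 1) (i : ℕ) (ω : Ω) :
    batchXi ζ I i ω ≤ ζ i ω := by
  unfold batchXi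
  calc ∑ j ∈ Icc 1 (ζ i ω), I i j ω ≤ ∑ j ∈ Icc 1 (ζ i ω), 1 :=
        Finset.sum_le_sum fun j _ => hI01 _ _ _
  _ = ζ i ω := by simp

lemma atom_pos (hτpos : ∀ i ω, 1 ≤ τ i ω) (ω : Ω) {l : ℕ} (hl : l < NN τ n ω) :
    pos (atomOf τ ζ I η n ω).1 l = statS τ (l+1) ω := by
  unfold pos atomOf
  rw [sum_take_eq _ _ (by simp; omega), statS_range]
  refine Finset.sum_congr rfl fun i hi => ?_
  rw [Finset.mem_range] at hi
  rw [List.getD_eq_getElem _ _ (by simp; omega)]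
  simp

lemma atom_blk (ω : Ω) {l : ℕ} (hl : l < NN τ n ω) :
    (atomOf τ ζ I η n ω).2.getD l dBlk =
      (ζ (l+1) ω,
       List.ofFn (fun j : Fin (ζ (l+1) ω) => I (l+1) ((j : ℕ)+1) ω),
       List.ofFn (fun j : Fin (ζ (l+1) ω) => η (l+1) ((j : ℕ)+1) ω)) := by
  unfold atomOf
  rw [List.getD_eq_getElem _ _ (by simp; omega)]
  simp

lemma cnt_atom (hI01 : ∀ i j ω, I i j ω ≤ 1) (ω : Ω) (l t : ℕ) (hl : l < NN τ n ω) :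
    cnt ((atomOf τ ζ I η n ω).2.getD l dBlk) t
      = ∑ j ∈ Icc 1 (batchXi ζ I (l+1) ω), if t ≤ η (l+1) j ω then 1 else 0 := by
  rw [atom_blk τ ζ I η n ω hl, sum_Icc_one]
  unfold cnt
  have hxi : (List.ofFn (fun j : Fin (ζ (l+1) ω) => I (l+1) ((j : ℕ)+1) ω)).sum
      = batchXi ζ I (l+1) ω := by
    rw [List.sum_ofFn, batchXi, sum_Icc_one]
    exact Fin.sum_univ_eq_sum_range (fun j => I (l+1) (j+1) ω) _
  simp only [hxi]
  refine Finset.sum_congr rfl fun j hj => ?_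
  rw [Finset.mem_range] at hj
  have hjζ : j < ζ (l+1) ω := lt_of_lt_of_le hj (batchXi_le ζ I hI01 _ ω)
  rw [List.getD_eq_getElem _ _ (by simp [hjζ])]
  simp

lemma statMn_eq_val (hτpos : ∀ i ω, 1 ≤ τ i ω) (hI01 : ∀ i j ω, I i j ω ≤ 1) (ω : Ω) :
    statMn τ ζ I η n ω = valMn n (atomOf τ ζ I η n ω) := by
  unfold statMn valMn
  have hlen : (atomOf τ ζ I η n ω).1.length = NN τ n ω := by simp [atomOf]
  rw [hlen]
  have hsub : Icc 1 (NN τ n ω) ⊆ Icc 1 n := Finset.Icc_subset_Icc_right (NN_le τ n ω)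
  rw [← Finset.sum_subset hsub ?van]
  case van =>
    intro i hi hi'
    simp only [Finset.mem_Icc] at hi hi'
    have : ¬ statS τ i ω ≤ n := by
      rw [← NN_iff τ n hτpos ω (by omega)]; omega
    refine Finset.sum_eq_zero fun j _ => by simp [this]
  rw [sum_Icc_one]
  refine Finset.sum_congr rfl fun l hl => ?_
  rw [Finset.mem_range] at hl
  rw [cnt_atom τ ζ I η n hI01 ω l _ hl, atom_pos τ ζ I η n hτpos ω hl]
  refine Finset.sum_congr rfl fun j _ => ?_
  have hS : statS τ (l+1) ω ≤ n := (NN_iff τ n hτpos ω (by omega)).1 (by omega)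
  have : (statS τ (l+1) ω ≤ n ∧ n ≤ statS τ (l+1) ω + η (l+1) j ω)
      ↔ (n - statS τ (l+1) ω ≤ η (l+1) j ω) := by omega
  simp only [this]

lemma statMt_eq_val (hτpos : ∀ i ω, 1 ≤ τ i ω) (hI01 : ∀ i j ω, I i j ω ≤ 1) (ω : Ω) :
    statMtilde τ ζ I η n ω = valMt n (atomOf τ ζ I η n ω) := by
  unfold statMtilde valMt
  have hlen : (atomOf τ ζ I η n ω).1.length = NN τ n ω := by simp [atomOf]
  rw [hlen]
  have hsub : Icc 1 (NN τ n ω) ⊆ Icc 1 n := Finset.Icc_subset_Icc_right (NN_le τ n ω)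
  rw [← Finset.sum_subset hsub ?van]
  case van =>
    intro i hi hi'
    simp only [Finset.mem_Icc] at hi hi'
    have : ¬ statS τ i ω ≤ n := by
      rw [← NN_iff τ n hτpos ω (by omega)]; omega
    refine Finset.sum_eq_zero fun j _ => by simp [this]
  rw [sum_Icc_one]
  refine Finset.sum_congr rfl fun l hl => ?_
  rw [Finset.mem_range] at hl
  rw [cnt_atom τ ζ I η n hI01 ω l _ hl, atom_pos τ ζ I η n hτpos ω hl]
  refine Finset.sum_congr rfl fun j _ => ?_
  have hS : statS τ (l+1) ω ≤ n := (NN_iff τ n hτpos ω (by omega)).1 (by omega)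
  have : (statS τ (l+1) ω ≤ n ∧ statS τ (l+1) ω ≤ η (l+1) j ω + 1)
      ↔ (statS τ (l+1) ω - 1 ≤ η (l+1) j ω) := by omega
  simp only [this]

/-! ### The cylinder event as a finite intersection -/

def idxPairs (a : Atom) : Finset (ℕ × ℕ) :=
  (range a.1.length).biUnion fun l => (Icc 1 (a.2.getD l dBlk).1).image fun j => (l+1, j)

def idx (a : Atom) : Finset (ℕ ⊕ ℕ ⊕ (ℕ × ℕ) ⊕ (ℕ × ℕ)) :=
  (Icc 1 (a.1.length+1)).disjSum
    ((Icc 1 a.1.length).disjSum ((idxPairs a).disjSum (idxPairs a)))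

def sets (n : ℕ) (a : Atom) : (ℕ ⊕ ℕ ⊕ (ℕ × ℕ) ⊕ (ℕ × ℕ)) → Set ℕ
  | .inl i => if i = a.1.length + 1 then Set.Ioi (n - a.1.sum) else {a.1.getD (i-1) 0}
  | .inr (.inl l) => {(a.2.getD (l-1) dBlk).1}
  | .inr (.inr (.inl p)) => {(a.2.getD (p.1-1) dBlk).2.1.getD (p.2-1) 0}
  | .inr (.inr (.inr p)) => {(a.2.getD (p.1-1) dBlk).2.2.getD (p.2-1) 0}

lemma mem_idxPairs {a : Atom} {p : ℕ × ℕ} :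
    p ∈ idxPairs a ↔
      ∃ l, l < a.1.length ∧ 1 ≤ p.2 ∧ p.2 ≤ (a.2.getD l dBlk).1 ∧ p.1 = l + 1 := by
  simp only [idxPairs, Finset.mem_biUnion, Finset.mem_image, Finset.mem_range, Finset.mem_Icc]
  constructor
  · rintro ⟨l, hl, j, ⟨hj1, hj2⟩, rfl⟩
    exact ⟨l, hl, hj1, hj2, rfl⟩
  · rintro ⟨l, hl, h1, h2, hp⟩
    exact ⟨l, hl, p.2, ⟨h1, h2⟩, by rw [← hp]⟩

lemma event_eq (hτpos : ∀ i ω, 1 ≤ τ i ω) {a : Atom} (hv : Valid n a) :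
    {ω | atomOf τ ζ I η n ω = a} = ⋂ i ∈ idx a, allVars τ ζ I η i ⁻¹' sets n a i := by
  obtain ⟨hlen, hpos, hsum, hblk⟩ := hv
  set k := a.1.length with hk
  ext ω
  simp only [Set.mem_setOf_eq, Set.mem_iInter]
  constructor
  · intro h i hi
    have hNN : NN τ n ω = k := by rw [hk, ← h]; simp [atomOf]
    have hget : ∀ i, i < k → a.1.getD i 0 = τ (i+1) ω := by
      intro i hik
      rw [← h]
      rw [List.getD_eq_getElem _ _ (by simp [atomOf]; omega)]
      simp [atomOf]
    have hasum : a.1.sum = statS τ k ω := by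
      rw [← h]
      simp only [atomOf, List.sum_ofFn, statS_range, hNN]
      exact Fin.sum_univ_eq_sum_range (fun i => τ (i+1) ω) _
    have hblkω : ∀ l, l < k → a.2.getD l dBlk =
        (ζ (l+1) ω,
         List.ofFn (fun j : Fin (ζ (l+1) ω) => I (l+1) ((j : ℕ)+1) ω),
         List.ofFn (fun j : Fin (ζ (l+1) ω) => η (l+1) ((j : ℕ)+1) ω)) := by
      intro l hl
      rw [← h]
      rw [List.getD_eq_getElem _ _ (by simp [atomOf]; omega)]
      simp [atomOf]
    rcases i with i | i | p | p
    · replace hi := Finset.mem_Icc.1 (Finset.inl_mem_disjSum.1 hi)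
      show τ i ω ∈ sets n a (Sum.inl i)
      by_cases hik : i = k + 1
      · subst hik
        show τ (k+1) ω ∈ if (k+1 : ℕ) = k + 1 then Set.Ioi (n - a.1.sum) else _
        rw [if_pos rfl]
        have h1 : ¬ (k + 1 ≤ NN τ n ω) := by omega
        rw [NN_iff τ n hτpos ω (by omega)] at h1
        rw [statS_succ] at h1
        simp only [Set.mem_Ioi]
        rw [hasum]
        omega
      · show τ i ω ∈ if i = k + 1 then Set.Ioi (n - a.1.sum) else {a.1.getD (i-1) 0}
        rw [if_neg hik]
        have : a.1.getD (i-1) 0 = τ i ω := by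
          have := hget (i-1) (by omega)
          rwa [Nat.sub_add_cancel (by omega)] at this
        rw [Set.mem_singleton_iff]
        exact this.symm
    · replace hi := Finset.mem_Icc.1 (Finset.inl_mem_disjSum.1 (Finset.inr_mem_disjSum.1 hi))
      show ζ i ω ∈ ({(a.2.getD (i-1) dBlk).1} : Set ℕ)
      rw [hblkω (i-1) (by omega)]
      simp only [Set.mem_singleton_iff]
      congr 1
      omega
    · replace hi := mem_idxPairs.1
        (Finset.inl_mem_disjSum.1 (Finset.inr_mem_disjSum.1 (Finset.inr_mem_disjSum.1 hi)))
      obtain ⟨l, hl, hj1, hj2, hp1⟩ := hi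
      show I p.1 p.2 ω ∈ ({(a.2.getD (p.1-1) dBlk).2.1.getD (p.2-1) 0} : Set ℕ)
      have e1 : p.1 - 1 = l := by omega
      rw [e1, hblkω l hl]
      rw [hblkω l hl] at hj2
      simp only [Set.mem_singleton_iff] at hj2 ⊢
      rw [List.getD_eq_getElem _ _ (by simp; omega)]
      simp only [List.getElem_ofFn]
      congr 1 <;> omega
    · replace hi := mem_idxPairs.1
        (Finset.inr_mem_disjSum.1 (Finset.inr_mem_disjSum.1 (Finset.inr_mem_disjSum.1 hi)))
      obtain ⟨l, hl, hj1, hj2, hp1⟩ := hi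
      show η p.1 p.2 ω ∈ ({(a.2.getD (p.1-1) dBlk).2.2.getD (p.2-1) 0} : Set ℕ)
      have e1 : p.1 - 1 = l := by omega
      rw [e1, hblkω l hl]
      rw [hblkω l hl] at hj2
      simp only [Set.mem_singleton_iff]
      rw [List.getD_eq_getElem _ _ (by simp; omega)]
      simp only [List.getElem_ofFn]
      congr 1 <;> omega
  · intro h
    have Hτ : ∀ i, 1 ≤ i → i ≤ k + 1 → τ i ω ∈ sets n a (Sum.inl i) := fun i h1 h2 =>
      h (Sum.inl i) (Finset.inl_mem_disjSum.2 (Finset.mem_Icc.2 ⟨h1, h2⟩))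
    have hτv : ∀ i, i < k → τ (i+1) ω = a.1.getD i 0 := by
      intro i hik
      have := Hτ (i+1) (by omega) (by omega)
      rw [show sets n a (Sum.inl (i+1)) = if i + 1 = k + 1 then Set.Ioi (n - a.1.sum)
          else {a.1.getD (i+1-1) 0} from rfl, if_neg (by omega)] at this
      have h2 : τ (i+1) ω = a.1.getD (i+1-1) 0 := this
      simpa using h2
    have htail : n - a.1.sum < τ (k + 1) ω := by
      have := Hτ (k+1) (by omega) le_rfl
      rw [show sets n a (Sum.inl (k+1)) = if k + 1 = k + 1 then Set.Ioi (n - a.1.sum)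
          else {a.1.getD (k+1-1) 0} from rfl, if_pos rfl] at this
      simpa using this
    have hζv : ∀ l, l < k → ζ (l+1) ω = (a.2.getD l dBlk).1 := by
      intro l hl
      have := h (Sum.inr (Sum.inl (l+1)))
        (Finset.inr_mem_disjSum.2 (Finset.inl_mem_disjSum.2
          (Finset.mem_Icc.2 ⟨by omega, by omega⟩)))
      have h2 : ζ (l+1) ω = (a.2.getD ((l+1)-1) dBlk).1 := this
      simpa using h2
    have hIv : ∀ l, l < k → ∀ j, j < (a.2.getD l dBlk).1 →
        I (l+1) (j+1) ω = (a.2.getD l dBlk).2.1.getD j 0 := by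
      intro l hl j hj
      have := h (Sum.inr (Sum.inr (Sum.inl (l+1, j+1))))
        (Finset.inr_mem_disjSum.2 (Finset.inr_mem_disjSum.2 (Finset.inl_mem_disjSum.2
          (mem_idxPairs.2 ⟨l, hl, by omega, by omega, rfl⟩))))
      have h2 : I (l+1) (j+1) ω = (a.2.getD ((l+1)-1) dBlk).2.1.getD ((j+1)-1) 0 := this
      simpa using h2
    have hηv : ∀ l, l < k → ∀ j, j < (a.2.getD l dBlk).1 →
        η (l+1) (j+1) ω = (a.2.getD l dBlk).2.2.getD j 0 := by
      intro l hl j hj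
      have := h (Sum.inr (Sum.inr (Sum.inr (l+1, j+1))))
        (Finset.inr_mem_disjSum.2 (Finset.inr_mem_disjSum.2 (Finset.inr_mem_disjSum.2
          (mem_idxPairs.2 ⟨l, hl, by omega, by omega, rfl⟩))))
      have h2 : η (l+1) (j+1) ω = (a.2.getD ((l+1)-1) dBlk).2.2.getD ((j+1)-1) 0 := this
      simpa using h2
    have hS : ∀ i, i ≤ k → statS τ i ω = (a.1.take i).sum := by
      intro i
      induction i with
      | zero => intro _; simp [statS]
      | succ i ih =>
        intro hik
        rw [statS_succ, ih (by omega), hτv i (by omega),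
          List.sum_take_succ _ _ (by omega), List.getD_eq_getElem _ _ (by omega)]
    have hSk : statS τ k ω = a.1.sum := by
      rw [hS k le_rfl, hk, List.take_length]
    have hNN : NN τ n ω = k := by
      have h1 : NN τ n ω ≤ k := by
        by_contra hc
        push_neg at hc
        have := (NN_iff τ n hτpos ω (by omega)).1 hc
        rw [statS_succ, hSk] at this
        omega
      have h2 : k ≤ NN τ n ω := by
        rcases Nat.eq_zero_or_pos k with h0 | h0
        · omega
        · exact (NN_iff τ n hτpos ω h0).2 (by rw [hSk]; exact hsum)
      omega
    have hfst : (atomOf τ ζ I η n ω).1 = a.1 := by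
      apply List.ext_getElem
      · simp [atomOf, hNN, hk]
      · intro i h1 h2
        simp only [atomOf, List.getElem_ofFn]
        rw [← List.getD_eq_getElem _ 0 h2]
        exact hτv i (by simpa using h2)
    have hsnd : (atomOf τ ζ I η n ω).2 = a.2 := by
      apply List.ext_getElem
      · simp [atomOf, hNN, hlen]
      · intro l h1 h2
        have hlk : l < k := by omega
        obtain ⟨hbe, hbh, _⟩ := hblk (a.2[l]) (List.getElem_mem h2)
        have hgetD : a.2.getD l dBlk = a.2[l] := List.getD_eq_getElem _ _ h2
        simp only [atomOf, List.getElem_ofFn]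
        have hζl : ζ (l+1) ω = a.2[l].1 := by rw [hζv l hlk, hgetD]
        refine Prod.ext ?_ (Prod.ext ?_ ?_)
        · simpa using hζl
        · show List.ofFn (fun j : Fin (ζ (l+1) ω) => I (l+1) ((j:ℕ)+1) ω) = a.2[l].2.1
          apply List.ext_getElem
          · simp [hζl, hbe]
          · intro j hj1 hj2
            simp only [List.getElem_ofFn]
            rw [← List.getD_eq_getElem _ 0 hj2, ← hgetD]
            exact hIv l hlk j (by rw [hgetD]; omega)
        · show List.ofFn (fun j : Fin (ζ (l+1) ω) => η (l+1) ((j:ℕ)+1) ω) = a.2[l].2.2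
          apply List.ext_getElem
          · simp [hζl, hbh]
          · intro j hj1 hj2
            simp only [List.getElem_ofFn]
            rw [← List.getD_eq_getElem _ 0 hj2, ← hgetD]
            exact hηv l hlk j (by rw [hgetD]; omega)
    exact Prod.ext hfst hsnd


end

/-! ### Weights -/

section
open scoped ENNReal
variable [MeasurableSpace Ω] (μ : Measure Ω) [IsProbabilityMeasure μ]
  (τ ζ : ℕ → Ω → ℕ) (I η : ℕ → ℕ → Ω → ℕ) (n : ℕ)

def Pg (x : ℕ) : ℝ≥0∞ := μ (τ 2 ⁻¹' {x})

def Wb (b : Blk) : ℝ≥0∞ :=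
  μ (ζ 1 ⁻¹' {b.1}) * (b.2.1.map fun x => μ (I 1 1 ⁻¹' {x})).prod *
    (b.2.2.map fun y => μ (η 1 1 ⁻¹' {y})).prod

def Wt : List ℕ → ℝ≥0∞
  | [] => μ (τ 1 ⁻¹' Set.Ioi n)
  | g :: gs => μ (τ 1 ⁻¹' {g}) * (gs.map (Pg μ τ)).prod *
      μ (τ 2 ⁻¹' Set.Ioi (n - (g :: gs).sum))

def W (a : Atom) : ℝ≥0∞ := Wt μ τ n a.1 * (a.2.map (Wb μ ζ I η)).prod

variable {r : ℝ}

lemma I_dist (hIm : ∀ i j, Measurable (I i j)) (hI01 : ∀ i j ω, I i j ω ≤ 1)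
    (hIr : ∀ i j, μ {ω | I i j ω = 1} = ENNReal.ofReal r) (i j x : ℕ) :
    μ (I i j ⁻¹' {x}) = μ (I 1 1 ⁻¹' {x}) := by
  have h1 : ∀ p q, μ (I p q ⁻¹' {1}) = ENNReal.ofReal r := fun p q => hIr p q
  match x with
  | 0 =>
    have h0 : ∀ p q, (I p q ⁻¹' {0} : Set Ω) = (I p q ⁻¹' {1})ᶜ := by
      intro p q; ext ω
      have := hI01 p q ω
      simp only [Set.mem_preimage, Set.mem_singleton_iff, Set.mem_compl_iff]
      omega
    rw [h0, h0, prob_compl_eq_one_sub (hIm _ _ (measurableSet_singleton 1)),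
      prob_compl_eq_one_sub (hIm _ _ (measurableSet_singleton 1)), h1, h1]
  | 1 => rw [h1, h1]
  | (x+2) =>
    have h2 : ∀ p q, (I p q ⁻¹' {(x+2 : ℕ)} : Set Ω) = ∅ := by
      intro p q; ext ω; have := hI01 p q ω
      simp only [Set.mem_preimage, Set.mem_singleton_iff, Set.mem_empty_iff_false,
        iff_false]
      omega
    rw [h2, h2]

lemma tau_piece (hτid : ∀ i, 2 ≤ i → IdentDistrib (τ i) (τ 2) μ μ) (g : ℕ) (gs : List ℕ) :
    (∏ i ∈ Icc 1 (gs.length + 1 + 1),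
      μ (τ i ⁻¹' (if i = gs.length + 1 + 1 then Set.Ioi (n - (g :: gs).sum)
        else {(g :: gs).getD (i-1) 0})))
    = Wt μ τ n (g :: gs) := by
  set m := gs.length with hm
  set F : ℕ → ℝ≥0∞ := fun i =>
    μ (τ i ⁻¹' (if i = m + 1 + 1 then Set.Ioi (n - (g :: gs).sum)
        else {(g :: gs).getD (i-1) 0})) with hF
  have h0 : ∏ i ∈ Icc 1 (m+1+1), F i = ((∏ i ∈ range m, F (i+1+1)) * F (0+1)) * F (m+1+1) := by
    rw [prod_Icc_one, Finset.prod_range_succ, Finset.prod_range_succ']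
  rw [h0]
  have hF1 : F (0+1) = μ (τ 1 ⁻¹' {g}) := by
    rw [hF]
    simp only
    rw [if_neg (by omega)]
    norm_num
  have hFtop : F (m+1+1) = μ (τ 2 ⁻¹' Set.Ioi (n - (g :: gs).sum)) := by
    rw [hF]
    simp only [if_pos rfl]
    exact (hτid (m+1+1) (by omega)).measure_mem_eq .of_discrete
  have hFmid : ∀ i ∈ range m, F (i+1+1) = Pg μ τ (gs.getD i 0) := by
    intro i hi
    rw [Finset.mem_range] at hi
    rw [hF]
    simp only
    rw [if_neg (by omega)]
    have : (g :: gs).getD (i+1+1-1) 0 = gs.getD i 0 := by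
      simp
    rw [this]
    exact (hτid (i+1+1) (by omega)).measure_mem_eq .of_discrete
  rw [hF1, hFtop, Finset.prod_congr rfl hFmid]
  show (∏ i ∈ range m, Pg μ τ (gs.getD i 0)) * μ (τ 1 ⁻¹' {g}) * _ = Wt μ τ n (g :: gs)
  rw [show Wt μ τ n (g :: gs) = μ (τ 1 ⁻¹' {g}) * (gs.map (Pg μ τ)).prod *
      μ (τ 2 ⁻¹' Set.Ioi (n - (g :: gs).sum)) from rfl]
  rw [prod_map_getD gs (Pg μ τ), hm]
  ring

lemma meas_event (hτpos : ∀ i ω, 1 ≤ τ i ω) (hI01 : ∀ i j ω, I i j ω ≤ 1)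
    (hIm : ∀ i j, Measurable (I i j))
    (hindep : iIndepFun (allVars τ ζ I η) μ)
    (hτid : ∀ i, 2 ≤ i → IdentDistrib (τ i) (τ 2) μ μ)
    (hζid : ∀ i, IdentDistrib (ζ i) (ζ 1) μ μ)
    (hηid : ∀ i j, IdentDistrib (η i j) (η 1 1) μ μ)
    (hIr : ∀ i j, μ {ω | I i j ω = 1} = ENNReal.ofReal r)
    {a : Atom} (hv : Valid n a) :
    μ {ω | atomOf τ ζ I η n ω = a} = W μ τ ζ I η n a := by
  rw [event_eq τ ζ I η n hτpos hv]
  rw [hindep.measure_inter_preimage_eq_mul (idx a) (fun i _ => .of_discrete)]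
  obtain ⟨v, B⟩ := a
  obtain ⟨hlen, hpos, hsum, hblk⟩ := hv
  simp only at hlen hpos hsum hblk
  rw [idx, Finset.prod_disjSum, Finset.prod_disjSum, Finset.prod_disjSum]
  -- the pairs products
  have hdisjP : (↑(range (v, B).1.length) : Set ℕ).Pairwise (Function.onFun Disjoint
      fun l => (Icc 1 (((v, B).2.getD l dBlk).1)).image fun j => (l+1, j)) := by
    intro l _ l' _ hne
    simp only [Function.onFun, Finset.disjoint_left, Finset.mem_image]
    rintro p ⟨j, _, rfl⟩ ⟨j', _, hj'⟩
    rw [Prod.mk.injEq] at hj'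
    omega
  have hpairs : ∀ G : ℕ × ℕ → ℝ≥0∞, ∏ p ∈ idxPairs (v, B), G p
      = ∏ l ∈ range v.length, ∏ j ∈ Icc 1 ((B.getD l dBlk).1), G (l+1, j) := by
    intro G
    classical
    rw [idxPairs, Finset.prod_biUnion hdisjP]
    refine Finset.prod_congr rfl fun l _ => ?_
    rw [Finset.prod_image]
    intro x _ y _ h
    simpa using h
  -- τ factor
  have hτfac : (∏ i ∈ Icc 1 ((v, B).1.length + 1),
      μ (allVars τ ζ I η (Sum.inl i) ⁻¹' sets n (v, B) (Sum.inl i))) = Wt μ τ n v := by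
    cases v with
    | nil =>
      show (∏ i ∈ Icc 1 (0+1), μ (τ i ⁻¹'
        (if i = 0 + 1 then Set.Ioi (n - ([] : List ℕ).sum) else _))) = _
      rw [show Icc 1 (0+1) = {1} by rfl, Finset.prod_singleton, if_pos rfl]
      simp [Wt]
    | cons g gs =>
      rw [← tau_piece μ τ n hτid g gs]
      rfl
  -- ζ factor
  have hζfac : (∏ l ∈ Icc 1 (v, B).1.length,
      μ (allVars τ ζ I η (Sum.inr (Sum.inl l)) ⁻¹' sets n (v, B) (Sum.inr (Sum.inl l))))
      = ∏ l ∈ range v.length, μ (ζ 1 ⁻¹' {(B.getD l dBlk).1}) := by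
    show (∏ l ∈ Icc 1 v.length, μ (ζ l ⁻¹' {(B.getD (l-1) dBlk).1})) = _
    rw [prod_Icc_one]
    refine Finset.prod_congr rfl fun l _ => ?_
    rw [show l + 1 - 1 = l by omega]
    exact (hζid (l+1)).measure_mem_eq .of_discrete
  -- I factor
  have hIfac : (∏ p ∈ idxPairs (v, B),
      μ (allVars τ ζ I η (Sum.inr (Sum.inr (Sum.inl p))) ⁻¹'
        sets n (v, B) (Sum.inr (Sum.inr (Sum.inl p)))))
      = ∏ l ∈ range v.length, ((B.getD l dBlk).2.1.map fun x => μ (I 1 1 ⁻¹' {x})).prod := by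
    rw [hpairs]
    refine Finset.prod_congr rfl fun l hl => ?_
    rw [Finset.mem_range] at hl
    have hmem : B.getD l dBlk ∈ B := by
      rw [List.getD_eq_getElem B dBlk (by omega : l < B.length)]
      exact List.getElem_mem _
    obtain ⟨hbe, _, _⟩ := hblk _ hmem
    rw [prod_map_getD _ _, hbe, prod_Icc_one]
    refine Finset.prod_congr rfl fun j _ => ?_
    show μ (I (l+1) (j+1) ⁻¹' {(B.getD ((l+1)-1) dBlk).2.1.getD ((j+1)-1) 0}) = _
    rw [show (l+1) - 1 = l by omega, show (j+1) - 1 = j by omega]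
    exact I_dist μ I hIm hI01 hIr (l+1) (j+1) _
  -- η factor
  have hηfac : (∏ p ∈ idxPairs (v, B),
      μ (allVars τ ζ I η (Sum.inr (Sum.inr (Sum.inr p))) ⁻¹'
        sets n (v, B) (Sum.inr (Sum.inr (Sum.inr p)))))
      = ∏ l ∈ range v.length, ((B.getD l dBlk).2.2.map fun y => μ (η 1 1 ⁻¹' {y})).prod := by
    rw [hpairs]
    refine Finset.prod_congr rfl fun l hl => ?_
    rw [Finset.mem_range] at hl
    have hmem : B.getD l dBlk ∈ B := by
      rw [List.getD_eq_getElem B dBlk (by omega : l < B.length)]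
      exact List.getElem_mem _
    obtain ⟨_, hbh, _⟩ := hblk _ hmem
    rw [prod_map_getD _ _, hbh, prod_Icc_one]
    refine Finset.prod_congr rfl fun j _ => ?_
    show μ (η (l+1) (j+1) ⁻¹' {(B.getD ((l+1)-1) dBlk).2.2.getD ((j+1)-1) 0}) = _
    rw [show (l+1) - 1 = l by omega, show (j+1) - 1 = j by omega]
    exact (hηid (l+1) (j+1)).measure_mem_eq .of_discrete
  rw [hτfac, hζfac, hIfac, hηfac]
  show Wt μ τ n v * (_ * (_ * _)) = Wt μ τ n v * ((v, B).2.map (Wb μ ζ I η)).prod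
  congr 1
  show (∏ l ∈ range v.length, μ (ζ 1 ⁻¹' {(B.getD l dBlk).1})) *
      ((∏ l ∈ range v.length, ((B.getD l dBlk).2.1.map fun x => μ (I 1 1 ⁻¹' {x})).prod) *
       (∏ l ∈ range v.length, ((B.getD l dBlk).2.2.map fun y => μ (η 1 1 ⁻¹' {y})).prod))
      = (B.map (Wb μ ζ I η)).prod
  rw [prod_map_getD' B (Wb μ ζ I η), hlen]
  rw [← Finset.prod_mul_distrib, ← Finset.prod_mul_distrib]
  refine Finset.prod_congr rfl fun l _ => ?_
  rw [Wb]
  ring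

lemma W_rev (hπ : ∀ k : ℕ, 1 ≤ k →
      μ {ω | τ 1 ω = k} = μ {ω | k ≤ τ 2 ω} / ENNReal.ofReal (∫ ω, (τ 2 ω : ℝ) ∂μ))
    {a : Atom} (hv : Valid n a) :
    W μ τ ζ I η n (rev n a) = W μ τ ζ I η n a := by
  obtain ⟨v, B⟩ := a
  obtain ⟨hlen, hpos, hsum, hblk⟩ := hv
  cases v with
  | nil => rfl
  | cons g gs =>
    have hg : 1 ≤ g := hpos g (by simp)
    simp only [List.sum_cons] at hsum
    rw [rev_fst_cons]
    unfold W
    have hmark : ((B.reverse.map (Wb μ ζ I η)).prod) = (B.map (Wb μ ζ I η)).prod := by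
      rw [List.map_reverse, List.prod_reverse]
    simp only
    rw [hmark]
    congr 1
    -- Wt part
    have htau2 : ∀ t : ℕ, μ (τ 2 ⁻¹' Set.Ioi t) = μ {ω | t + 1 ≤ τ 2 ω} :=
      fun t => rfl
    have hdel : ∀ x : ℕ, μ (τ 1 ⁻¹' {x}) = μ {ω | τ 1 ω = x} := fun _ => rfl
    have hrevprod : ((gs.reverse.map (Pg μ τ)).prod) = (gs.map (Pg μ τ)).prod := by
      rw [List.map_reverse, List.prod_reverse]
    show μ (τ 1 ⁻¹' {n + 1 - (g + gs.sum)}) * (gs.reverse.map (Pg μ τ)).prod *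
        μ (τ 2 ⁻¹' Set.Ioi (n - ((n + 1 - (g + gs.sum)) :: gs.reverse).sum))
      = μ (τ 1 ⁻¹' {g}) * (gs.map (Pg μ τ)).prod *
        μ (τ 2 ⁻¹' Set.Ioi (n - (g :: gs).sum))
    have e1 : n - ((n + 1 - (g + gs.sum)) :: gs.reverse).sum = g - 1 := by
      simp only [List.sum_cons, List.sum_reverse]
      omega
    have e2 : n - (g :: gs).sum = n - (g + gs.sum) := by simp
    rw [e1, e2, hrevprod, htau2, htau2, hdel, hdel,
      hπ (n + 1 - (g + gs.sum)) (by omega), hπ g hg,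
      show g - 1 + 1 = g by omega, show n - (g + gs.sum) + 1 = n + 1 - (g + gs.sum) by omega]
    rw [ENNReal.div_eq_inv_mul, ENNReal.div_eq_inv_mul]
    ring

end
end BeeRev

/-- The stationary-started colony size `𝓜 n` has the same distribution
as its time-reversed version `𝓜̃ n`: the marked point configuration may be time-reversed
about `n` without changing the distribution of the colony size. -/
theorem statMn_time_reversal
    {Ω : Type*} [MeasurableSpace Ω] (μ : Measure Ω) [IsProbabilityMeasure μ]
    (τ ζ : ℕ → Ω → ℕ) (I η : ℕ → ℕ → Ω → ℕ) (r : ℝ)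
    -- measurability
    (hτm : ∀ i, Measurable (τ i)) (hζm : ∀ i, Measurable (ζ i))
    (hIm : ∀ i j, Measurable (I i j)) (hηm : ∀ i j, Measurable (η i j))
    -- the τ's are positive-integer valued, the I's are indicators
    (hτpos : ∀ i ω, 1 ≤ τ i ω) (hI01 : ∀ i j ω, I i j ω ≤ 1)
    (hr0 : 0 ≤ r) (hr1 : r ≤ 1)
    -- mutual independence of all the variables
    (hindep : iIndepFun (allVars τ ζ I η) μ)
    -- identical distributions within each family
    (hτid : ∀ i, 2 ≤ i → IdentDistrib (τ i) (τ 2) μ μ)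
    (hζid : ∀ i, IdentDistrib (ζ i) (ζ 1) μ μ)
    (hηid : ∀ i j, IdentDistrib (η i j) (η 1 1) μ μ)
    (hIr : ∀ i j, μ {ω | I i j ω = 1} = ENNReal.ofReal r)
    -- finite means
    (hτint : Integrable (fun ω => (τ 2 ω : ℝ)) μ)
    (hζint : Integrable (fun ω => (ζ 1 ω : ℝ)) μ)
    -- the delay τ 1 = τ̃₁ has the stationary distribution π_k = P(τ₂ ≥ k) / E τ₂
    (hπ : ∀ k : ℕ, 1 ≤ k →
      μ {ω | τ 1 ω = k} = μ {ω | k ≤ τ 2 ω} / ENNReal.ofReal (∫ ω, (τ 2 ω : ℝ) ∂μ))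
    : ∀ n : ℕ, IdentDistrib (statMn τ ζ I η n) (statMtilde τ ζ I η n) μ μ := by
  intro n
  classical
  set Ev : BeeRev.Atom → Set Ω := fun a => {ω | BeeRev.atomOf τ ζ I η n ω = a} with hEvdef
  have hval : ∀ ω, BeeRev.Valid n (BeeRev.atomOf τ ζ I η n ω) :=
    BeeRev.atomOf_valid τ ζ I η n hτpos hI01
  have hallm : ∀ i, Measurable (allVars τ ζ I η i) := by
    rintro (i | i | p | p)
    exacts [hτm i, hζm i, hIm p.1 p.2, hηm p.1 p.2]
  have hEvzero : ∀ a, ¬ BeeRev.Valid n a → Ev a = ∅ := by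
    intro a hv
    ext ω
    simp only [hEvdef, Set.mem_setOf_eq, Set.mem_empty_iff_false, iff_false]
    intro h
    exact hv (h ▸ hval ω)
  have hEvMeas : ∀ a, MeasurableSet (Ev a) := by
    intro a
    by_cases hv : BeeRev.Valid n a
    · rw [hEvdef]
      simp only
      rw [BeeRev.event_eq τ ζ I η n hτpos hv]
      exact MeasurableSet.biInter ((BeeRev.idx a).countable_toSet)
        fun i _ => (hallm i) .of_discrete
    · rw [hEvzero a hv]; exact MeasurableSet.empty
  -- the partition identities
  have hMnEq : ∀ m : ℕ, {ω | statMn τ ζ I η n ω = m}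
      = ⋃ a : BeeRev.Atom, if BeeRev.valMn n a = m then Ev a else ∅ := by
    intro m
    ext ω
    simp only [Set.mem_setOf_eq, Set.mem_iUnion]
    constructor
    · intro h
      refine ⟨BeeRev.atomOf τ ζ I η n ω, ?_⟩
      rw [if_pos (by rw [← BeeRev.statMn_eq_val τ ζ I η n hτpos hI01 ω]; exact h)]
      exact rfl
    · rintro ⟨a, ha⟩
      by_cases hc : BeeRev.valMn n a = m
      · rw [if_pos hc] at ha
        have h2 : BeeRev.atomOf τ ζ I η n ω = a := ha
        rw [BeeRev.statMn_eq_val τ ζ I η n hτpos hI01 ω, h2, hc]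
      · rw [if_neg hc] at ha; exact absurd ha (Set.notMem_empty ω)
  have hMtEq : ∀ m : ℕ, {ω | statMtilde τ ζ I η n ω = m}
      = ⋃ a : BeeRev.Atom, if BeeRev.valMt n a = m then Ev a else ∅ := by
    intro m
    ext ω
    simp only [Set.mem_setOf_eq, Set.mem_iUnion]
    constructor
    · intro h
      refine ⟨BeeRev.atomOf τ ζ I η n ω, ?_⟩
      rw [if_pos (by rw [← BeeRev.statMt_eq_val τ ζ I η n hτpos hI01 ω]; exact h)]
      exact rfl
    · rintro ⟨a, ha⟩
      by_cases hc : BeeRev.valMt n a = m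
      · rw [if_pos hc] at ha
        have h2 : BeeRev.atomOf τ ζ I η n ω = a := ha
        rw [BeeRev.statMt_eq_val τ ζ I η n hτpos hI01 ω, h2, hc]
      · rw [if_neg hc] at ha; exact absurd ha (Set.notMem_empty ω)
  -- measure of the unions
  have hmeasUnion : ∀ (val : BeeRev.Atom → ℕ) (m : ℕ),
      μ (⋃ a : BeeRev.Atom, if val a = m then Ev a else ∅)
      = ∑' a : BeeRev.Atom, if val a = m then μ (Ev a) else 0 := by
    intro val m
    rw [measure_iUnion ?disj (fun a => by split; exacts [hEvMeas a, MeasurableSet.empty])]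
    · exact tsum_congr fun a => by split <;> simp
    case disj =>
      intro a b hab
      simp only [Function.onFun]
      split
      · split
        · refine Set.disjoint_left.2 fun ω h1 h2 => hab ?_
          have e1 : BeeRev.atomOf τ ζ I η n ω = a := h1
          have e2 : BeeRev.atomOf τ ζ I η n ω = b := h2
          rw [← e1, e2]
        · simp
      · simp
  -- weights
  have hEvW : ∀ a, BeeRev.Valid n a → μ (Ev a) = BeeRev.W μ τ ζ I η n a := fun a hv =>
    BeeRev.meas_event μ τ ζ I η n hτpos hI01 hIm hindep hτid hζid hηid hIr hv
  have hEvZ : ∀ a, ¬ BeeRev.Valid n a → μ (Ev a) = 0 := fun a hv => by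
    rw [hEvzero a hv]; exact measure_empty
  -- the reversal involution
  set φ : BeeRev.Atom → BeeRev.Atom :=
    fun a => if BeeRev.Valid n a then BeeRev.rev n a else a with hφdef
  have φinv : Function.Involutive φ := by
    intro a
    by_cases hv : BeeRev.Valid n a
    · rw [hφdef]
      simp only
      rw [if_pos hv, if_pos (BeeRev.valid_rev n a hv), BeeRev.rev_rev n a hv]
    · rw [hφdef]
      simp only
      rw [if_neg hv, if_neg hv]
  have hterm : ∀ (m : ℕ) (a : BeeRev.Atom),
      (if BeeRev.valMn n a = m then μ (Ev a) else 0)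
      = (if BeeRev.valMt n (φ a) = m then μ (Ev (φ a)) else 0) := by
    intro m a
    by_cases hv : BeeRev.Valid n a
    · have hφa : φ a = BeeRev.rev n a := if_pos hv
      rw [hφa, BeeRev.valMt_rev n a hv,
        hEvW _ (BeeRev.valid_rev n a hv),
        BeeRev.W_rev μ τ ζ I η n hπ hv, ← hEvW a hv]
    · have hφa : φ a = a := if_neg hv
      rw [hφa, hEvZ a hv]
      simp
  have htsum : ∀ m : ℕ,
      (∑' a : BeeRev.Atom, if BeeRev.valMn n a = m then μ (Ev a) else 0)
      = ∑' a : BeeRev.Atom, if BeeRev.valMt n a = m then μ (Ev a) else 0 := by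
    intro m
    have e : (∑' a : BeeRev.Atom, if BeeRev.valMn n a = m then μ (Ev a) else 0)
        = ∑' a : BeeRev.Atom,
            (fun b => if BeeRev.valMt n b = m then μ (Ev b) else 0) (φ a) :=
      tsum_congr (hterm m)
    rw [e]
    exact (Function.Involutive.toPerm φ φinv).tsum_eq
      (fun b => if BeeRev.valMt n b = m then μ (Ev b) else 0)
  -- measurability of the colony sizes
  have hMnMeas : Measurable (statMn τ ζ I η n) := by
    apply measurable_to_countable'
    intro m
    have : statMn τ ζ I η n ⁻¹' {m} = {ω | statMn τ ζ I η n ω = m} := rfl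
    rw [this, hMnEq m]
    exact MeasurableSet.iUnion fun a => by
      split; exacts [hEvMeas a, MeasurableSet.empty]
  have hMtMeas : Measurable (statMtilde τ ζ I η n) := by
    apply measurable_to_countable'
    intro m
    have : statMtilde τ ζ I η n ⁻¹' {m} = {ω | statMtilde τ ζ I η n ω = m} := rfl
    rw [this, hMtEq m]
    exact MeasurableSet.iUnion fun a => by
      split; exacts [hEvMeas a, MeasurableSet.empty]
  refine ⟨hMnMeas.aemeasurable, hMtMeas.aemeasurable, ?_⟩
  apply Measure.ext_of_singleton
  intro m
  rw [Measure.map_apply hMnMeas (measurableSet_singleton m),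
    Measure.map_apply hMtMeas (measurableSet_singleton m)]
  have e1 : statMn τ ζ I η n ⁻¹' {m} = {ω | statMn τ ζ I η n ω = m} := rfl
  have e2 : statMtilde τ ζ I η n ⁻¹' {m} = {ω | statMtilde τ ζ I η n ω = m} := rfl
  rw [e1, e2, hMnEq m, hMtEq m, hmeasUnion (BeeRev.valMn n) m,
    hmeasUnion (BeeRev.valMt n) m]
  exact htsum m
end
end
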